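/- arXiv:2407.12921 — 5 statements merged into one kernel-verified Lean document; each statement's English description precedes it below -/
import Mathlib

section
/- Let {X_n ; n ≥ 1} be an exchangeable process where each X_n takes values in {0,1}. Then there exists a unique Borel probability measure μ on [0,1] such that, for every n ≥ 1 and every x_1^n ∈ {0,1}^n, P(X_1^n = x_1^n) = ∫_{[0,1]} ∏_{i=1}^n Q_p(x_i) dμ(p), where Q_p(1) = 1 − Q_p(0) = p is the probability mass function of the Bernoulli distribution with parameter p. -/
open MeasureTheory
open scoped ENNReal

section DeFinettiAux

open Filter Topology

namespace DF

noncomputable section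

def X (i : ℕ) (ω : ℕ → Bool) : ℝ := if ω i then 1 else 0

lemma measurable_X (i : ℕ) : Measurable (X i) :=
  (measurable_from_top (f := fun b : Bool => if b then (1:ℝ) else 0)).comp
    (measurable_pi_apply i)

def E (S : Finset ℕ) : Set (ℕ → Bool) := {ω | ∀ i ∈ S, ω i = true}

lemma measurableSet_E (S : Finset ℕ) : MeasurableSet (E S) := by
  have : E S = ⋂ i ∈ S, {ω : ℕ → Bool | ω i = true} := by
    ext ω; simp [E]
  rw [this]
  refine MeasurableSet.biInter (S : Set ℕ).to_countable fun i _ => ?_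
  have : {ω : ℕ → Bool | ω i = true} = (fun ω : ℕ → Bool => ω i) ⁻¹' {true} := by
    ext ω; simp
  rw [this]
  exact (measurable_pi_apply i) (by trivial)

variable {P : Measure (ℕ → Bool)} [IsProbabilityMeasure P]

lemma A_eq
    (hexch : ∀ (m : ℕ) (σ : Equiv.Perm (Fin m)),
      P.map (fun ω i => if h : i < m then ω (σ ⟨i, h⟩) else ω i) = P)
    (S : Finset ℕ) :
    P (E S) = P (E (Finset.range S.card)) := by
  classical
  set c := S.card with hc
  set m := S.sup id + 1 with hm
  have hSm : ∀ i ∈ S, i < m := fun i hi => Nat.lt_succ_of_le (Finset.le_sup (f := id) hi)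
  have hcm : c ≤ m := by
    have : S ⊆ Finset.range m := fun i hi => Finset.mem_range.2 (hSm i hi)
    simpa using Finset.card_le_card this
  have oi := S.orderIsoOfFin (rfl : S.card = c)
  -- build the equiv between the two subtypes of Fin m
  let e : {x : Fin m // (x : ℕ) < c} ≃ {x : Fin m // (x : ℕ) ∈ S} :=
    { toFun := fun x => ⟨⟨(oi ⟨x.1, x.2⟩ : ℕ), hSm _ (oi ⟨x.1, x.2⟩).2⟩, (oi ⟨x.1, x.2⟩).2⟩
      invFun := fun x => ⟨⟨(oi.symm ⟨x.1, x.2⟩ : ℕ),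
          lt_of_lt_of_le (oi.symm ⟨x.1, x.2⟩).2 hcm⟩, (oi.symm ⟨x.1, x.2⟩).2⟩
      left_inv := by
        rintro ⟨x, hx⟩
        ext
        simp
      right_inv := by
        rintro ⟨x, hx⟩
        ext
        simp }
  let σ : Equiv.Perm (Fin m) := e.extendSubtype
  have hσ : ∀ (i : ℕ) (hi : i < c), ((σ ⟨i, lt_of_lt_of_le hi hcm⟩ : Fin m) : ℕ)
      = (oi ⟨i, hi⟩ : ℕ) := by
    intro i hi
    have := e.extendSubtype_apply_of_mem ⟨i, lt_of_lt_of_le hi hcm⟩ hi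
    rw [this]
    rfl
  set T : (ℕ → Bool) → (ℕ → Bool) := fun ω i => if h : i < m then ω (σ ⟨i, h⟩) else ω i with hT
  have hTmeas : Measurable T := by
    apply measurable_pi_lambda
    intro i
    by_cases h : i < m <;> simp only [hT, h, dif_pos, dif_neg, not_false_iff] <;>
      exact measurable_pi_apply _
  have hmap := hexch m σ
  have hpre : T ⁻¹' E (Finset.range c) = E S := by
    ext ω
    simp only [Set.mem_preimage, E, Set.mem_setOf_eq, Finset.mem_range]
    constructor
    · intro h i hiS
      obtain ⟨j, hj⟩ := oi.surjective ⟨i, hiS⟩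
      have hjc : (j : ℕ) < c := j.2
      have := h j hjc
      rw [hT] at this
      simp only [lt_of_lt_of_le hjc hcm, dif_pos] at this
      rw [hσ j hjc] at this
      have : ω ((oi ⟨(j : ℕ), hjc⟩ : ℕ)) = true := by
        convert this using 3
      rw [show (⟨(j : ℕ), hjc⟩ : Fin c) = j from Fin.ext rfl, hj] at this
      exact this
    · intro h i hic
      have him : i < m := lt_of_lt_of_le hic hcm
      simp only [hT, him, dif_pos]
      rw [hσ i hic]
      exact h _ (oi ⟨i, hic⟩).2
  calc P (E S) = P (T ⁻¹' E (Finset.range c)) := by rw [hpre]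
    _ = (P.map T) (E (Finset.range c)) := (Measure.map_apply hTmeas (measurableSet_E _)).symm
    _ = P (E (Finset.range c)) := by rw [hmap]

variable (P : Measure (ℕ → Bool)) [IsProbabilityMeasure P]

def a (k : ℕ) : ℝ := (P (E (Finset.range k))).toReal

variable {P}

lemma a_nonneg (k : ℕ) : 0 ≤ a P k := ENNReal.toReal_nonneg

lemma a_le_one (k : ℕ) : a P k ≤ 1 := by
  have h1 : P (E (Finset.range k)) ≤ 1 := prob_le_one
  simpa [a] using ENNReal.toReal_le_of_le_ofReal zero_le_one (by simpa using h1)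

lemma a_anti : Antitone (a P) := by
  intro k l hkl
  apply ENNReal.toReal_mono (measure_ne_top _ _)
  apply measure_mono
  intro ω hω i hi
  exact hω i (Finset.mem_range.2 (lt_of_lt_of_le (Finset.mem_range.1 hi) hkl))

lemma integrable_of_bdd' {α : Type*} [MeasurableSpace α] {μ : Measure α} [IsFiniteMeasure μ]
    {f : α → ℝ} (hm : Measurable f) (C : ℝ)
    (h : ∀ ω, |f ω| ≤ C) : Integrable f μ := by
  refine (integrable_const C).mono' hm.aestronglyMeasurable ?_
  exact Filter.Eventually.of_forall fun ω => by simpa using h ω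

lemma integrable_of_bdd {f : (ℕ → Bool) → ℝ} (hm : Measurable f) (C : ℝ)
    (h : ∀ ω, |f ω| ≤ C) : Integrable f P :=
  integrable_of_bdd' hm C h

lemma X_nonneg (i : ℕ) (ω : ℕ → Bool) : 0 ≤ X i ω := by unfold X; split <;> norm_num

lemma X_le_one (i : ℕ) (ω : ℕ → Bool) : X i ω ≤ 1 := by unfold X; split <;> norm_num

lemma prod_X_eq (V : Finset ℕ) (ω : ℕ → Bool) :
    ∏ i ∈ V, X i ω = if ∀ i ∈ V, ω i = true then 1 else 0 := by
  rw [show (fun i => X i ω) = fun i => if ω i = true then (1:ℝ) else 0 from rfl]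
  exact Finset.prod_boole

lemma measurable_prod_X (V : Finset ℕ) : Measurable (fun ω => ∏ i ∈ V, X i ω) :=
  Finset.measurable_prod _ fun i _ => measurable_X i

lemma abs_prod_X_le (V : Finset ℕ) (ω : ℕ → Bool) : |∏ i ∈ V, X i ω| ≤ 1 := by
  rw [prod_X_eq]; split <;> norm_num

lemma integrable_prod_X (V : Finset ℕ) : Integrable (fun ω => ∏ i ∈ V, X i ω) P :=
  integrable_of_bdd (measurable_prod_X V) 1 (abs_prod_X_le V)

lemma integral_prod_X (V : Finset ℕ) :
    ∫ ω, ∏ i ∈ V, X i ω ∂P = (P (E V)).toReal := by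
  classical
  have : (fun ω => ∏ i ∈ V, X i ω) = (E V).indicator (fun _ => (1:ℝ)) := by
    ext ω
    rw [prod_X_eq, Set.indicator_apply]
    by_cases h : ∀ i ∈ V, ω i = true
    · rw [if_pos h, if_pos (show ω ∈ E V from h)]
    · simp [h, E, Set.mem_setOf_eq]
  rw [this]
  exact integral_indicator_one (measurableSet_E V)

def g (n : ℕ) (ω : ℕ → Bool) : ℝ := (n : ℝ)⁻¹ * ∑ i ∈ Finset.range n, X i ω

lemma measurable_g (n : ℕ) : Measurable (g n) :=
  (Finset.measurable_sum _ fun i _ => measurable_X i).const_mul _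

lemma g_nonneg (n : ℕ) (ω : ℕ → Bool) : 0 ≤ g n ω :=
  mul_nonneg (by positivity) (Finset.sum_nonneg fun i _ => X_nonneg i ω)

lemma g_le_one (n : ℕ) (ω : ℕ → Bool) : g n ω ≤ 1 := by
  rcases Nat.eq_zero_or_pos n with h | h
  · simp [g, h]
  · have : ∑ i ∈ Finset.range n, X i ω ≤ n := by
      calc ∑ i ∈ Finset.range n, X i ω ≤ ∑ i ∈ Finset.range n, 1 :=
        Finset.sum_le_sum fun i _ => X_le_one i ω
      _ = n := by simp
    rw [g, inv_mul_le_iff₀ (by exact_mod_cast h), mul_one]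
    exact this

lemma X_mul_X (i j : ℕ) (ω : ℕ → Bool) :
    X i ω * X j ω = ∏ k ∈ ({i, j} : Finset ℕ), X k ω := by
  rcases eq_or_ne i j with h | h
  · subst h
    simp only [Finset.insert_eq_self.2 (Finset.mem_singleton_self i), Finset.prod_singleton]
    unfold X; split <;> norm_num
  · rw [Finset.prod_pair h]

lemma card_pair_eq (i j : ℕ) : ({i, j} : Finset ℕ).card = if i = j then 1 else 2 := by
  rcases eq_or_ne i j with h | h
  · simp [h]
  · simp [h, Finset.card_pair h]

variable (hA : ∀ S : Finset ℕ, P (E S) = P (E (Finset.range S.card)))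

include hA in
lemma integral_prod_X_a (V : Finset ℕ) :
    ∫ ω, ∏ i ∈ V, X i ω ∂P = a P V.card := by
  rw [integral_prod_X, a, hA]

include hA in
lemma integral_X_mul_X (i j : ℕ) :
    ∫ ω, X i ω * X j ω ∂P = if i = j then a P 1 else a P 2 := by
  simp_rw [X_mul_X]
  rw [integral_prod_X_a (P := P) hA, card_pair_eq]
  split <;> rfl

include hA in
lemma integral_g_mul_g {m n : ℕ} (hm : 0 < m) (hmn : m ≤ n) :
    ∫ ω, g n ω * g m ω ∂P = a P 2 + (a P 1 - a P 2) / n := by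
  have hn : 0 < n := lt_of_lt_of_le hm hmn
  have expand : ∀ ω, g n ω * g m ω
      = (n:ℝ)⁻¹ * (m:ℝ)⁻¹ * ∑ i ∈ Finset.range n, ∑ j ∈ Finset.range m, X i ω * X j ω := by
    intro ω
    rw [g, g, mul_mul_mul_comm, Finset.sum_mul_sum]
  simp_rw [expand]
  rw [integral_const_mul, integral_finset_sum _ (fun i _ => integrable_finset_sum _
    (fun j _ => integrable_of_bdd ((measurable_X i).fun_mul (measurable_X j)) 1
      (fun ω => by
        have h1 := X_nonneg i ω; have h2 := X_nonneg j ω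
        have h3 := X_le_one i ω; have h4 := X_le_one j ω
        rw [abs_le]; constructor <;> nlinarith)))]
  have : ∀ i ∈ Finset.range n, ∫ ω, ∑ j ∈ Finset.range m, X i ω * X j ω ∂P
      = ∑ j ∈ Finset.range m, if i = j then a P 1 else a P 2 := by
    intro i _
    rw [integral_finset_sum _ (fun j _ => integrable_of_bdd ((measurable_X i).fun_mul (measurable_X j)) 1
      (fun ω => by
        have h1 := X_nonneg i ω; have h2 := X_nonneg j ω
        have h3 := X_le_one i ω; have h4 := X_le_one j ω
        rw [abs_le]; constructor <;> nlinarith))]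
    exact Finset.sum_congr rfl fun j _ => integral_X_mul_X (P := P) hA i j
  rw [Finset.sum_congr rfl this]
  have sum_eval : ∑ i ∈ Finset.range n, ∑ j ∈ Finset.range m, (if i = j then a P 1 else a P 2)
      = (n:ℝ) * m * a P 2 + m * (a P 1 - a P 2) := by
    have inner : ∀ i, ∑ j ∈ Finset.range m, (if i = j then a P 1 else a P 2)
        = m * a P 2 + (if i ∈ Finset.range m then a P 1 - a P 2 else 0) := by
      intro i
      have : ∀ j, (if i = j then a P 1 else a P 2)
          = a P 2 + (if i = j then a P 1 - a P 2 else 0) := by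
        intro j; split <;> ring
      simp_rw [this, Finset.sum_add_distrib, Finset.sum_ite_eq, Finset.sum_const,
        Finset.card_range, nsmul_eq_mul]
    simp_rw [inner, Finset.sum_add_distrib, Finset.sum_const, Finset.card_range, nsmul_eq_mul]
    have : ∑ i ∈ Finset.range n, (if i ∈ Finset.range m then a P 1 - a P 2 else 0)
        = m * (a P 1 - a P 2) := by
      rw [Finset.sum_ite_mem]
      have : Finset.range n ∩ Finset.range m = Finset.range m := by
        ext x; simp only [Finset.mem_inter, Finset.mem_range]; omega
      rw [this, Finset.sum_const, Finset.card_range, nsmul_eq_mul]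
    rw [this]
    ring
  rw [sum_eval]
  field_simp

lemma integrable_g_mul_g (m n : ℕ) : Integrable (fun ω => g n ω * g m ω) P :=
  integrable_of_bdd ((measurable_g n).mul (measurable_g m)) 1 (fun ω => by
    have h1 := g_nonneg n ω; have h2 := g_nonneg m ω
    have h3 := g_le_one n ω; have h4 := g_le_one m ω
    rw [abs_le]; constructor <;> nlinarith)

include hA in
lemma integral_sq_diff {m n : ℕ} (hm : 0 < m) (hmn : m ≤ n) :
    ∫ ω, (g n ω - g m ω)^2 ∂P = (a P 1 - a P 2) * ((m:ℝ)⁻¹ - (n:ℝ)⁻¹) := by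
  have expand : ∀ ω, (g n ω - g m ω)^2
      = g n ω * g n ω - 2 * (g n ω * g m ω) + g m ω * g m ω := by intro ω; ring
  have hn : 0 < n := lt_of_lt_of_le hm hmn
  have step1 : ∫ ω, (g n ω - g m ω)^2 ∂P
      = (∫ ω, (g n ω * g n ω - 2 * (g n ω * g m ω)) ∂P) + ∫ ω, g m ω * g m ω ∂P := by
    have h := integral_add (μ := P)
      ((integrable_g_mul_g n n).sub ((integrable_g_mul_g m n).const_mul 2))
      (integrable_g_mul_g m m)
    simp only [Pi.sub_apply] at h
    rw [← h]
    apply integral_congr_ae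
    filter_upwards with ω
    rw [expand ω]
  have step2 : ∫ ω, (g n ω * g n ω - 2 * (g n ω * g m ω)) ∂P
      = (∫ ω, g n ω * g n ω ∂P) - ∫ ω, 2 * (g n ω * g m ω) ∂P :=
    integral_sub (integrable_g_mul_g n n) ((integrable_g_mul_g m n).const_mul 2)
  rw [step1, step2, integral_const_mul,
    integral_g_mul_g (P := P) hA hn (le_refl n),
    integral_g_mul_g (P := P) hA hm (le_refl m),
    integral_g_mul_g (P := P) hA hm hmn]
  have hm' : (m:ℝ) ≠ 0 := Nat.cast_ne_zero.2 hm.ne'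
  have hn' : (n:ℝ) ≠ 0 := Nat.cast_ne_zero.2 hn.ne'
  field_simp
  ring


-- Part 3: moment estimate
lemma prod_X_comp (k n : ℕ) (q : Fin k → Fin n) (ω : ℕ → Bool) :
    ∏ j : Fin k, X (q j : ℕ) ω = ∏ i ∈ Finset.image (fun j => ((q j : ℕ))) Finset.univ, X i ω := by
  classical
  rw [prod_X_eq]
  rw [show (fun j : Fin k => X ((q j : ℕ)) ω) = fun j => if ω (q j) = true then (1:ℝ) else 0
    from rfl]
  rw [Finset.prod_boole]
  congr 1
  simp only [eq_iff_iff, Finset.mem_image, Finset.mem_univ, true_implies]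
  constructor
  · rintro h i ⟨j, -, rfl⟩
    exact h j
  · intro h j
    exact h _ ⟨j, trivial, rfl⟩

lemma card_image_inj {k n : ℕ} {q : Fin k → Fin n} (hq : Function.Injective q) :
    (Finset.image (fun j => ((q j : ℕ))) Finset.univ).card = k := by
  rw [Finset.card_image_of_injective Finset.univ
    (show Function.Injective fun j : Fin k => ((q j : ℕ)) from
      fun a b hab => hq (Fin.val_injective hab))]
  simp

include hA in
lemma integral_g_pow (k n : ℕ) :
    ∫ ω, (g n ω)^k ∂P
      = ((n:ℝ)^k)⁻¹ * ∑ q : Fin k → Fin n,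
          a P ((Finset.image (fun j => ((q j : ℕ))) Finset.univ).card) := by
  classical
  have hg : ∀ ω, (g n ω)^k
      = ((n:ℝ)^k)⁻¹ * ∑ q : Fin k → Fin n, ∏ j : Fin k, X (q j : ℕ) ω := by
    intro ω
    rw [g, mul_pow, ← Fin.sum_univ_eq_sum_range (fun i => X i ω) n, Fintype.sum_pow, inv_pow]
  simp_rw [hg]
  rw [integral_const_mul, integral_finset_sum _ (fun q _ => ?_)]
  · congr 1
    refine Finset.sum_congr rfl fun q _ => ?_
    rw [show (fun ω => ∏ j : Fin k, X (q j : ℕ) ω)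
        = fun ω => ∏ i ∈ Finset.image (fun j => ((q j : ℕ))) Finset.univ, X i ω from
      funext fun ω => prod_X_comp k n q ω]
    exact integral_prod_X_a (P := P) hA _
  · rw [show (fun ω => ∏ j : Fin k, X (q j : ℕ) ω)
        = fun ω => ∏ i ∈ Finset.image (fun j => ((q j : ℕ))) Finset.univ, X i ω from
      funext fun ω => prod_X_comp k n q ω]
    exact integrable_prod_X _

include hA in
lemma abs_integral_g_pow_sub (k n : ℕ) (hn : 0 < n) :
    |(∫ ω, (g n ω)^k ∂P) - a P k| ≤ 1 - (n.descFactorial k : ℝ) / (n:ℝ)^k := by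
  classical
  have hnk : (0:ℝ) < (n:ℝ)^k := by positivity
  rw [integral_g_pow (P := P) hA]
  have hcard : (Finset.univ : Finset (Fin k → Fin n)).card = n ^ k := by
    simp [Finset.card_univ, Fintype.card_fun]
  have : a P k = ((n:ℝ)^k)⁻¹ * ∑ _q : Fin k → Fin n, a P k := by
    rw [Finset.sum_const, hcard, nsmul_eq_mul]
    push_cast
    field_simp
  rw [this, ← mul_sub, ← Finset.sum_sub_distrib, abs_mul, abs_inv, abs_of_pos hnk]
  set t : (Fin k → Fin n) → ℝ := fun q =>
    a P ((Finset.image (fun j => ((q j : ℕ))) Finset.univ).card) - a P k with ht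
  have habs : ∀ q, |t q| ≤ if Function.Injective q then 0 else 1 := by
    intro q
    by_cases hq : Function.Injective q
    · simp only [hq, if_true, ht]
      rw [card_image_inj hq]
      simp
    · simp only [hq, if_false, ht]
      have h1 := a_nonneg (P := P) ((Finset.image (fun j => ((q j : ℕ))) Finset.univ).card)
      have h2 := a_le_one (P := P) ((Finset.image (fun j => ((q j : ℕ))) Finset.univ).card)
      have h3 := a_nonneg (P := P) k
      have h4 := a_le_one (P := P) k
      rw [abs_le]; constructor <;> nlinarith
  have hsum : |∑ q : Fin k → Fin n, t q|
      ≤ ((Finset.univ.filter (fun q : Fin k → Fin n => ¬ Function.Injective q)).card : ℝ) := by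
    calc |∑ q : Fin k → Fin n, t q| ≤ ∑ q : Fin k → Fin n, |t q| := Finset.abs_sum_le_sum_abs _ _
      _ ≤ ∑ q : Fin k → Fin n, (if Function.Injective q then 0 else (1:ℝ)) :=
          Finset.sum_le_sum fun q _ => habs q
      _ = ((Finset.univ.filter (fun q : Fin k → Fin n => ¬ Function.Injective q)).card : ℝ) := by
          rw [Finset.sum_ite, Finset.sum_const, Finset.sum_const]
          simp
  have hcard2 : ((Finset.univ.filter (fun q : Fin k → Fin n => ¬ Function.Injective q)).card : ℝ)
      = (n:ℝ)^k - (n.descFactorial k : ℝ) := by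
    have hsplit := Finset.card_filter_add_card_filter_not
      (s := (Finset.univ : Finset (Fin k → Fin n))) (p := fun q => Function.Injective q)
    have hinj : (Finset.univ.filter (fun q : Fin k → Fin n => Function.Injective q)).card
        = n.descFactorial k := by
      rw [← Fintype.card_subtype]
      rw [Fintype.card_congr (Equiv.subtypeInjectiveEquivEmbedding (Fin k) (Fin n))]
      rw [Fintype.card_embedding_eq]
      simp
    have : (Finset.univ.filter (fun q : Fin k → Fin n => ¬ Function.Injective q)).card
        = n ^ k - n.descFactorial k := by omega
    rw [this]
    have hle : n.descFactorial k ≤ n ^ k := Nat.descFactorial_le_pow n k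
    push_cast [hle]
    ring
  calc ((n:ℝ)^k)⁻¹ * |∑ q : Fin k → Fin n, t q|
      ≤ ((n:ℝ)^k)⁻¹ * ((n:ℝ)^k - (n.descFactorial k : ℝ)) := by
        rw [← hcard2]
        exact mul_le_mul_of_nonneg_left hsum (by positivity)
    _ = 1 - (n.descFactorial k : ℝ) / (n:ℝ)^k := by field_simp

lemma tendsto_ratio (k : ℕ) :
    Tendsto (fun n : ℕ => (n.descFactorial k : ℝ) / (n:ℝ)^k) atTop (𝓝 1) := by
  have h : ∀ᶠ n : ℕ in atTop, (fun n : ℕ => ∏ i ∈ Finset.range k, (1 - (i:ℝ) / n)) n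
      = (fun n : ℕ => (n.descFactorial k : ℝ) / (n:ℝ)^k) n := by
    filter_upwards [eventually_ge_atTop (k + 1)] with n hn
    symm
    have hnpos : 0 < n := by omega
    have hn0 : (0:ℝ) < n := by exact_mod_cast hnpos
    have hcast : (n.descFactorial k : ℝ) = ∏ i ∈ Finset.range k, ((n:ℝ) - i) := by
      rw [Nat.descFactorial_eq_prod_range]
      push_cast
      apply Finset.prod_congr rfl
      intro i hi
      have : i ≤ n := by
        have := Finset.mem_range.1 hi; omega
      push_cast [this]
      ring
    have hrhs : ∏ i ∈ Finset.range k, (1 - (i:ℝ)/n)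
        = ∏ i ∈ Finset.range k, (((n:ℝ) - i)/n) := by
      apply Finset.prod_congr rfl; intro i _; field_simp
    rw [hcast, hrhs, Finset.prod_div_distrib, Finset.prod_const, Finset.card_range]
  have hlim : Tendsto (fun n : ℕ => ∏ i ∈ Finset.range k, (1 - (i:ℝ) / n)) atTop (𝓝 1) := by
    have h1 : ∀ i ∈ Finset.range k, Tendsto (fun n : ℕ => 1 - (i:ℝ)/n) atTop (𝓝 (1:ℝ)) := by
      intro i _
      have h2 : Tendsto (fun n : ℕ => (i:ℝ)/n) atTop (𝓝 0) := by
        simp_rw [div_eq_mul_inv]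
        simpa using (tendsto_inv_atTop_nhds_zero_nat).const_mul (i:ℝ)
      simpa using (tendsto_const_nhds (x := (1:ℝ)) (f := atTop)).sub h2
    have := tendsto_finset_prod (Finset.range k) h1
    simpa using this
  exact hlim.congr' h

include hA in
lemma tendsto_moment (k : ℕ) :
    Tendsto (fun n : ℕ => ∫ ω, (g n ω)^k ∂P) atTop (𝓝 (a P k)) := by
  rw [tendsto_iff_dist_tendsto_zero]
  simp_rw [Real.dist_eq]
  apply squeeze_zero' (Filter.Eventually.of_forall fun n => abs_nonneg _)
  · filter_upwards [eventually_ge_atTop 1] with n hn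
    exact abs_integral_g_pow_sub (P := P) hA k n hn
  · have := (tendsto_const_nhds (x := (1:ℝ)) (f := atTop)).sub (tendsto_ratio k)
    simpa using this


-- Part 4: the limit and the measure
lemma integrable_g_int (n : ℕ) : Integrable (g n) P :=
  integrable_of_bdd (measurable_g n) 1 (fun ω => by
    have := g_nonneg n ω; have := g_le_one n ω
    rw [abs_le]; constructor <;> linarith)

lemma dist_toL1 {f f' : (ℕ → Bool) → ℝ} (hf : Integrable f P) (hg : Integrable f' P) :
    dist (hf.toL1 f) (hg.toL1 f') = ∫ ω, |f ω - f' ω| ∂P := by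
  rw [dist_eq_norm, ← Integrable.toL1_sub]
  rw [Integrable.norm_toL1_eq_lintegral_norm]
  rw [← ofReal_integral_eq_lintegral_ofReal ((hf.sub hg).norm)
    (Filter.Eventually.of_forall fun ω => norm_nonneg _)]
  rw [ENNReal.toReal_ofReal (integral_nonneg fun ω => norm_nonneg _)]
  simp [Real.norm_eq_abs]

include hA in
lemma integral_abs_diff_le {m n N : ℕ} (hN : 0 < N) (hm : N ≤ m) (hn : N ≤ n) {δ : ℝ}
    (hδ : 0 < δ) :
    ∫ ω, |g n ω - g m ω| ∂P ≤ (N:ℝ)⁻¹/(2*δ) + δ/2 := by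
  wlog hmn : m ≤ n generalizing m n
  · have h := this hn hm (le_of_not_ge hmn)
    simpa [abs_sub_comm] using h
  have hm0 : 0 < m := hN.trans_le hm
  have hsq : ∫ ω, (g n ω - g m ω)^2 ∂P ≤ (N:ℝ)⁻¹ := by
    rw [integral_sq_diff (P := P) hA hm0 hmn]
    have ha21 : a P 2 ≤ a P 1 := a_anti (by norm_num)
    have h1 : a P 1 - a P 2 ≤ 1 := by
      have := a_le_one (P := P) 1; have := a_nonneg (P := P) 2; linarith
    have h2 : (0:ℝ) < m := by exact_mod_cast hm0
    have h3 : (0:ℝ) < n := by exact_mod_cast hm0.trans_le hmn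
    have h4 : (m:ℝ)⁻¹ - (n:ℝ)⁻¹ ≤ (N:ℝ)⁻¹ := by
      have h5 : (m:ℝ)⁻¹ ≤ (N:ℝ)⁻¹ := by
        apply inv_anti₀ (by exact_mod_cast hN) (by exact_mod_cast hm)
      have h6 : 0 ≤ (n:ℝ)⁻¹ := by positivity
      linarith
    have h7 : 0 ≤ (m:ℝ)⁻¹ - (n:ℝ)⁻¹ := by
      have : (n:ℝ)⁻¹ ≤ (m:ℝ)⁻¹ := by
        apply inv_anti₀ h2 (by exact_mod_cast hmn)
      linarith
    nlinarith
  have hpoint : ∀ ω, |g n ω - g m ω| ≤ (g n ω - g m ω)^2/(2*δ) + δ/2 := by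
    intro ω
    have h := sq_nonneg (|g n ω - g m ω| - δ)
    have habs : |g n ω - g m ω|^2 = (g n ω - g m ω)^2 := sq_abs _
    have hd : 0 < 2*δ := by linarith
    rw [div_add' _ _ _ hd.ne', le_div_iff₀ hd]
    nlinarith [abs_nonneg (g n ω - g m ω)]
  have hint1 : Integrable (fun ω => |g n ω - g m ω|) P :=
    (((integrable_g_int (P := P) n).sub (integrable_g_int (P := P) m)).norm).congr
      (Filter.Eventually.of_forall fun ω => by simp [Real.norm_eq_abs])
  have hint2 : Integrable (fun ω => (g n ω - g m ω)^2/(2*δ) + δ/2) P := by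
    apply Integrable.add _ (integrable_const _)
    apply Integrable.div_const
    apply integrable_of_bdd (((measurable_g n).sub (measurable_g m)).pow_const 2) 4
    intro ω
    have h1 := g_nonneg n ω; have h2 := g_nonneg m ω
    have h3 := g_le_one n ω; have h4 := g_le_one m ω
    rw [Pi.sub_apply, abs_le]; constructor <;> nlinarith
  calc ∫ ω, |g n ω - g m ω| ∂P ≤ ∫ ω, ((g n ω - g m ω)^2/(2*δ) + δ/2) ∂P :=
        integral_mono hint1 hint2 hpoint
    _ = (∫ ω, (g n ω - g m ω)^2 ∂P)/(2*δ) + δ/2 := by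
        have hint3 : Integrable (fun ω => (g n ω - g m ω)^2/(2*δ)) P := by
          apply Integrable.div_const
          apply integrable_of_bdd (((measurable_g n).sub (measurable_g m)).pow_const 2) 4
          intro ω
          have h1 := g_nonneg n ω; have h2 := g_nonneg m ω
          have h3 := g_le_one n ω; have h4 := g_le_one m ω
          rw [Pi.sub_apply, abs_le]; constructor <;> nlinarith
        rw [integral_add hint3 (integrable_const _), integral_div, integral_const]
        simp [measure_univ]
    _ ≤ (N:ℝ)⁻¹/(2*δ) + δ/2 := by
        have h9 : (∫ ω, (g n ω - g m ω)^2 ∂P)/(2*δ) ≤ (N:ℝ)⁻¹/(2*δ) := by gcongr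
        linarith


include hA in
lemma cauchy_GL1 : CauchySeq (fun n => (integrable_g_int (P := P) n).toL1 (g n)) := by
  rw [Metric.cauchySeq_iff]
  intro ε hε
  set N : ℕ := max 1 ⌈2/ε^2⌉₊ with hN
  have hN1 : 0 < N := lt_of_lt_of_le one_pos (le_max_left _ _)
  have hNinv : (N:ℝ)⁻¹ ≤ ε^2/2 := by
    have h2 : 2/ε^2 ≤ (N:ℝ) := le_trans (Nat.le_ceil _) (by exact_mod_cast le_max_right _ _)
    rw [inv_le_comm₀ (by exact_mod_cast hN1) (by positivity)]
    calc (ε^2/2)⁻¹ = 2/ε^2 := by rw [inv_div]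
    _ ≤ (N:ℝ) := h2
  refine ⟨N, fun m hm n hn => ?_⟩
  rw [dist_toL1]
  have hbound := integral_abs_diff_le (P := P) hA hN1 hn hm (δ := ε/2) (by linarith)
  have hx : (N:ℝ)⁻¹/(2*(ε/2)) ≤ ε/2 := by
    rw [show 2*(ε/2) = ε by ring]
    have h1 : (N:ℝ)⁻¹/ε ≤ (ε^2/2)/ε := by gcongr
    have h2 : (ε^2/2)/ε = ε/2 := by field_simp
    linarith
  calc ∫ ω, |g m ω - g n ω| ∂P ≤ (N:ℝ)⁻¹/(2*(ε/2)) + (ε/2)/2 := hbound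
    _ < ε := by linarith

include hA in
lemma exists_mu :
    ∃ μ : Measure (Set.Icc (0:ℝ) 1), IsProbabilityMeasure μ ∧
      ∀ k : ℕ, (∫ p : Set.Icc (0:ℝ) 1, ((p : ℝ))^k ∂μ) = a P k := by
  obtain ⟨F, hF⟩ := cauchySeq_tendsto_of_complete (cauchy_GL1 (P := P) hA)
  have hel : Tendsto (fun n => eLpNorm (g n - (F : (ℕ → Bool) → ℝ)) 1 P) atTop (𝓝 0) := by
    have h1 : ∀ n, eLpNorm (g n - (F : (ℕ → Bool) → ℝ)) 1 P
        = edist ((integrable_g_int (P := P) n).toL1 (g n)) F := by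
      intro n
      rw [Lp.edist_def]
      apply eLpNorm_congr_ae
      filter_upwards [Lp.coeFn_sub ((integrable_g_int (P := P) n).toL1 (g n)) F,
        Integrable.coeFn_toL1 (integrable_g_int (P := P) n)] with ω h2 h3
      simp only [Pi.sub_apply, h2, h3]
    simp_rw [h1, edist_dist]
    have hd : Tendsto (fun n => dist ((integrable_g_int (P := P) n).toL1 (g n)) F) atTop (𝓝 0) :=
      tendsto_iff_dist_tendsto_zero.1 hF
    have h3 := ENNReal.tendsto_ofReal hd
    simpa using h3
  have htm : TendstoInMeasure P g atTop (F : (ℕ → Bool) → ℝ) :=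
    tendstoInMeasure_of_tendsto_eLpNorm one_ne_zero
      (fun n => (measurable_g (n := n)).aestronglyMeasurable)
      (Lp.aestronglyMeasurable F) hel
  obtain ⟨ns, hns, hae⟩ := htm.exists_seq_tendsto_ae
  -- clamp
  set clampR : ℝ → ℝ := fun t => max 0 (min 1 t) with hclampR
  have clampR_cont : Continuous clampR := continuous_const.max (continuous_const.min continuous_id)
  have clampR_mem : ∀ t, clampR t ∈ Set.Icc (0:ℝ) 1 :=
    fun t => ⟨le_max_left _ _, max_le (by norm_num) (min_le_left _ _)⟩
  have clampR_g : ∀ n ω, clampR (g n ω) = g n ω := by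
    intro n ω
    have h1 := g_nonneg n ω; have h2 := g_le_one n ω
    simp only [hclampR]
    rw [min_eq_right h2, max_eq_right h1]
  have hFmeas : Measurable (F : (ℕ → Bool) → ℝ) := (Lp.stronglyMeasurable F).measurable
  set Φ : (ℕ → Bool) → Set.Icc (0:ℝ) 1 := fun ω => ⟨clampR (F ω), clampR_mem _⟩ with hΦdef
  have hΦ : Measurable Φ := ((clampR_cont.measurable).comp hFmeas).subtype_mk
  refine ⟨P.map Φ, Measure.isProbabilityMeasure_map hΦ.aemeasurable, fun k => ?_⟩
  rw [integral_map hΦ.aemeasurable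
    (((continuous_subtype_val.fun_pow k)).aestronglyMeasurable)]
  have hgoal : ∫ ω, ((Φ ω : ℝ))^k ∂P = a P k := by
    have hconv : ∀ᵐ ω ∂P, Tendsto (fun j => (g (ns j) ω)^k) atTop (𝓝 (((Φ ω : ℝ))^k)) := by
      filter_upwards [hae] with ω hω
      have h1 : Tendsto (fun j => clampR (g (ns j) ω)) atTop (𝓝 (clampR (F ω))) :=
        (clampR_cont.tendsto _).comp hω
      have h2 : Tendsto (fun j => g (ns j) ω) atTop (𝓝 (clampR (F ω))) := by
        simpa [clampR_g] using h1
      exact h2.pow k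
    have hdom := tendsto_integral_of_dominated_convergence (μ := P)
      (F := fun j ω => (g (ns j) ω)^k) (f := fun ω => ((Φ ω : ℝ))^k) (bound := fun _ => (1:ℝ))
      (fun j => ((measurable_g (ns j)).pow_const k).aestronglyMeasurable)
      (integrable_const 1)
      (fun j => Filter.Eventually.of_forall fun ω => by
        have h1 := g_nonneg (ns j) ω; have h2 := g_le_one (ns j) ω
        rw [Real.norm_eq_abs, abs_of_nonneg (pow_nonneg h1 k)]
        exact pow_le_one₀ h1 h2)
      hconv
    have hmom : Tendsto (fun j => ∫ ω, (g (ns j) ω)^k ∂P) atTop (𝓝 (a P k)) :=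
      (tendsto_moment (P := P) hA k).comp hns.tendsto_atTop
    exact tendsto_nhds_unique hdom hmom
  exact hgoal


-- Part 5: expansion & representation
lemma expand_prod {R : Type*} [CommRing R] {n : ℕ} (x : Fin n → Bool) (f : Fin n → R) :
    ∏ i, (if x i then f i else 1 - f i)
      = ∑ U ∈ (Finset.univ.filter (fun i => ¬ x i = true)).powerset,
          (-1)^U.card * ∏ i ∈ (Finset.univ.filter (fun i => x i = true)) ∪ U, f i := by
  classical
  set K := Finset.univ.filter (fun i : Fin n => x i = true) with hK
  set T := Finset.univ.filter (fun i : Fin n => ¬ x i = true) with hT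
  have hsplit : ∏ i, (if x i then f i else 1 - f i)
      = (∏ i ∈ K, f i) * ∏ i ∈ T, (1 - f i) := by
    rw [← Finset.prod_filter_mul_prod_filter_not Finset.univ (fun i => x i = true)]
    congr 1
    · apply Finset.prod_congr rfl
      intro i hi
      simp only [Finset.mem_filter] at hi
      simp [hi.2]
    · apply Finset.prod_congr rfl
      intro i hi
      simp only [Finset.mem_filter] at hi
      simp [hi.2]
  have hT2 : ∏ i ∈ T, (1 - f i) = ∑ U ∈ T.powerset, (-1)^U.card * ∏ i ∈ U, f i := by
    have h := Finset.prod_add (fun i : Fin n => -f i) (fun _ => (1:R)) T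
    have h2 : ∀ i ∈ T, (1 : R) - f i = -f i + 1 := fun i _ => by ring
    rw [Finset.prod_congr rfl h2, h]
    apply Finset.sum_congr rfl
    intro U _
    rw [Finset.prod_const_one, mul_one]
    rw [show (fun i : Fin n => -f i) = fun i => (-1) * f i from funext fun i => by ring]
    rw [Finset.prod_mul_distrib, Finset.prod_const]
  rw [hsplit, hT2, Finset.mul_sum]
  apply Finset.sum_congr rfl
  intro U hU
  have hUT : U ⊆ T := Finset.mem_powerset.1 hU
  have hdisj : Disjoint K U := by
    apply Finset.disjoint_left.2
    intro i hiK hiU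
    have h1 := (Finset.mem_filter.1 hiK).2
    have h2 := (Finset.mem_filter.1 (hUT hiU)).2
    exact h2 h1
  rw [Finset.prod_union hdisj]
  ring

lemma prod_X_fin {n : ℕ} (V : Finset (Fin n)) (ω : ℕ → Bool) :
    ∏ i ∈ V, X (i : ℕ) ω = ∏ j ∈ V.image (fun i : Fin n => (i : ℕ)), X j ω := by
  rw [Finset.prod_image]
  intro i _ j _ h
  exact Fin.val_injective h

include hA in
lemma integral_prod_X_fin {n : ℕ} (V : Finset (Fin n)) :
    ∫ ω, ∏ i ∈ V, X (i : ℕ) ω ∂P = a P V.card := by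
  simp_rw [prod_X_fin]
  rw [integral_prod_X_a (P := P) hA]
  congr 1
  rw [Finset.card_image_of_injective _ Fin.val_injective]

lemma measurableSet_event {n : ℕ} (x : Fin n → Bool) :
    MeasurableSet {ω : ℕ → Bool | ∀ i : Fin n, ω i = x i} := by
  have : {ω : ℕ → Bool | ∀ i : Fin n, ω i = x i}
      = ⋂ i : Fin n, (fun ω : ℕ → Bool => ω i) ⁻¹' {x i} := by
    ext ω; simp
  rw [this]
  exact MeasurableSet.iInter fun i => (measurable_pi_apply _) (by trivial)

lemma event_toReal_eq_integral {n : ℕ} (x : Fin n → Bool) :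
    (P {ω | ∀ i : Fin n, ω i = x i}).toReal
      = ∫ ω, ∏ i : Fin n, (if x i then X (i : ℕ) ω else 1 - X (i : ℕ) ω) ∂P := by
  classical
  have hpt : ∀ ω, ∏ i : Fin n, (if x i then X (i : ℕ) ω else 1 - X (i : ℕ) ω)
      = if ∀ i : Fin n, ω i = x i then 1 else 0 := by
    intro ω
    have : ∀ i : Fin n, (if x i then X (i : ℕ) ω else 1 - X (i : ℕ) ω)
        = if ω i = x i then (1:ℝ) else 0 := by
      intro i
      cases hxi : x i <;> cases hωi : ω (i : ℕ) <;> simp [X, hωi]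
    rw [Finset.prod_congr rfl (fun i _ => this i), Finset.prod_boole]
    congr 1
    simp
  have : (fun ω => ∏ i : Fin n, (if x i then X (i : ℕ) ω else 1 - X (i : ℕ) ω))
      = ({ω : ℕ → Bool | ∀ i : Fin n, ω i = x i}).indicator (fun _ => (1:ℝ)) := by
    ext ω
    rw [hpt, Set.indicator_apply]
    by_cases h : ∀ i : Fin n, ω i = x i <;> simp [h]
  rw [this]
  exact (integral_indicator_one (measurableSet_event x)).symm

include hA in
lemma representation {ν : Measure (Set.Icc (0:ℝ) 1)} [IsProbabilityMeasure ν]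
    (hmom : ∀ k, (∫ p : Set.Icc (0:ℝ) 1, ((p : ℝ))^k ∂ν) = a P k)
    (n : ℕ) (x : Fin n → Bool) :
    (P {ω | ∀ i : Fin n, ω i = x i}).toReal
      = ∫ p : Set.Icc (0:ℝ) 1, (∏ i, if x i then (p : ℝ) else 1 - (p : ℝ)) ∂ν := by
  classical
  set K := Finset.univ.filter (fun i : Fin n => x i = true) with hK
  set T := Finset.univ.filter (fun i : Fin n => ¬ x i = true) with hT
  -- P side
  have hP : (P {ω | ∀ i : Fin n, ω i = x i}).toReal
      = ∑ U ∈ T.powerset, (-1:ℝ)^U.card * a P ((K ∪ U).card) := by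
    rw [event_toReal_eq_integral (P := P) x]
    have hexp : ∀ ω, ∏ i : Fin n, (if x i then X (i : ℕ) ω else 1 - X (i : ℕ) ω)
        = ∑ U ∈ T.powerset, (-1:ℝ)^U.card * ∏ i ∈ K ∪ U, X (i : ℕ) ω :=
      fun ω => expand_prod x (fun i => X (i : ℕ) ω)
    simp_rw [hexp]
    rw [integral_finset_sum _ (fun U _ => ((integrable_of_bdd
      (Finset.measurable_prod _ fun i _ => measurable_X _) 1 (fun ω => by
        have h := abs_prod_X_le ((K ∪ U).image (fun i : Fin n => (i:ℕ))) ω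
        rw [← prod_X_fin] at h
        exact h)).const_mul _))]
    apply Finset.sum_congr rfl
    intro U _
    rw [integral_const_mul, integral_prod_X_fin (P := P) hA]
  -- ν side
  have hν : ∫ p : Set.Icc (0:ℝ) 1, (∏ i, if x i then (p : ℝ) else 1 - (p : ℝ)) ∂ν
      = ∑ U ∈ T.powerset, (-1:ℝ)^U.card * a P ((K ∪ U).card) := by
    have hexp : ∀ p : Set.Icc (0:ℝ) 1, (∏ i, if x i then (p : ℝ) else 1 - (p : ℝ))
        = ∑ U ∈ T.powerset, (-1:ℝ)^U.card * ((p:ℝ))^((K ∪ U).card) := by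
      intro p
      have := expand_prod x (fun _ : Fin n => (p : ℝ))
      rw [this]
      apply Finset.sum_congr rfl
      intro U _
      rw [Finset.prod_const]
    simp_rw [hexp]
    rw [integral_finset_sum _ (fun U _ => ?_)]
    · apply Finset.sum_congr rfl
      intro U _
      rw [integral_const_mul, hmom]
    · apply Integrable.const_mul
      apply integrable_of_bdd' ((continuous_subtype_val.fun_pow _).measurable) 1
      intro p
      have h1 : (0:ℝ) ≤ (p:ℝ) := p.2.1
      have h2 : (p:ℝ) ≤ 1 := p.2.2
      rw [abs_of_nonneg (pow_nonneg h1 _)]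
      exact pow_le_one₀ h1 h2
  rw [hP, hν]


-- Part 6: measures on [0,1] are determined by moments
lemma integrable_cm {ν : Measure (Set.Icc (0:ℝ) 1)} [IsProbabilityMeasure ν]
    (f : C(Set.Icc (0:ℝ) 1, ℝ)) : Integrable f ν :=
  integrable_of_bdd' f.continuous.measurable ‖f‖ (fun p => by
    simpa [Real.norm_eq_abs] using f.norm_coe_le_norm p)

lemma tendsto_integral_cm {ν : Measure (Set.Icc (0:ℝ) 1)} [IsProbabilityMeasure ν]
    {u : ℕ → C(Set.Icc (0:ℝ) 1, ℝ)} {f : C(Set.Icc (0:ℝ) 1, ℝ)}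
    (hu : Tendsto u atTop (𝓝 f)) :
    Tendsto (fun i => ∫ p, u i p ∂ν) atTop (𝓝 (∫ p, f p ∂ν)) := by
  rw [tendsto_iff_dist_tendsto_zero]
  apply squeeze_zero (fun i => dist_nonneg) (g := fun i => dist (u i) f)
  · intro i
    rw [Real.dist_eq]
    have hsub : (∫ p, u i p ∂ν) - ∫ p, f p ∂ν = ∫ p, (u i p - f p) ∂ν :=
      (integral_sub (integrable_cm (u i)) (integrable_cm f)).symm
    rw [hsub]
    have hb := norm_integral_le_of_norm_le_const (μ := ν) (f := fun p => u i p - f p)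
      (C := dist (u i) f)
      (Filter.Eventually.of_forall fun p => by
        rw [Real.norm_eq_abs, ← Real.dist_eq]
        exact ContinuousMap.dist_apply_le_dist p)
    simpa [measure_univ, Real.norm_eq_abs] using hb
  · exact tendsto_iff_dist_tendsto_zero.1 hu

lemma ext_of_moments {μ ν : Measure (Set.Icc (0:ℝ) 1)} [IsProbabilityMeasure μ]
    [IsProbabilityMeasure ν]
    (h : ∀ k : ℕ, (∫ p : Set.Icc (0:ℝ) 1, ((p : ℝ))^k ∂μ)
      = ∫ p : Set.Icc (0:ℝ) 1, ((p : ℝ))^k ∂ν) :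
    μ = ν := by
  have hintpow : ∀ (ρ : Measure (Set.Icc (0:ℝ) 1)) [IsProbabilityMeasure ρ] (c : ℝ) (i : ℕ),
      Integrable (fun p : Set.Icc (0:ℝ) 1 => c * ((p : ℝ))^i) ρ := by
    intro ρ _ c i
    apply Integrable.const_mul
    apply integrable_of_bdd' ((continuous_subtype_val.fun_pow _).measurable) 1
    intro p
    rw [abs_of_nonneg (pow_nonneg p.2.1 _)]
    exact pow_le_one₀ p.2.1 p.2.2
  have hpoly : ∀ q : Polynomial ℝ, (∫ p : Set.Icc (0:ℝ) 1, q.eval ((p : ℝ)) ∂μ)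
      = ∫ p : Set.Icc (0:ℝ) 1, q.eval ((p : ℝ)) ∂ν := by
    intro q
    have he : ∀ t : ℝ, q.eval t = ∑ i ∈ Finset.range (q.natDegree + 1), q.coeff i * t^i := by
      intro t
      exact q.eval_eq_sum_range t
    simp_rw [he]
    rw [integral_finset_sum _ (fun i _ => hintpow μ (q.coeff i) i),
      integral_finset_sum _ (fun i _ => hintpow ν (q.coeff i) i)]
    refine Finset.sum_congr rfl fun i _ => ?_
    rw [integral_const_mul, integral_const_mul, h i]
  have hcont : ∀ f : C(Set.Icc (0:ℝ) 1, ℝ), (∫ p, f p ∂μ) = ∫ p, f p ∂ν := by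
    intro f
    have hf : f ∈ ((polynomialFunctions (Set.Icc (0:ℝ) 1)).topologicalClosure) := by
      rw [polynomialFunctions_closure_eq_top]
      trivial
    have hf2 : f ∈ closure ((polynomialFunctions (Set.Icc (0:ℝ) 1))
        : Set C(Set.Icc (0:ℝ) 1, ℝ)) := by
      exact hf
    obtain ⟨u, hu_mem, hu_tend⟩ := mem_closure_iff_seq_limit.1 hf2
    have hint : ∀ i, (∫ p, u i p ∂μ) = ∫ p, u i p ∂ν := by
      intro i
      have hmem := hu_mem i
      rw [polynomialFunctions_coe] at hmem
      obtain ⟨q, hq⟩ := hmem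
      have hq2 : ∀ p : Set.Icc (0:ℝ) 1, u i p = q.eval ((p : ℝ)) := by
        intro p
        rw [← hq]
        rfl
      simp_rw [hq2]
      exact hpoly q
    have h1 := tendsto_integral_cm (ν := μ) hu_tend
    have h2 := tendsto_integral_cm (ν := ν) hu_tend
    have h1' : Tendsto (fun i => ∫ p, u i p ∂ν) atTop (𝓝 (∫ p, f p ∂μ)) := by
      apply h1.congr
      intro i
      exact hint i
    exact tendsto_nhds_unique h1' h2
  apply ext_of_forall_lintegral_eq_of_IsFiniteMeasure
  intro f
  have hfc : Continuous fun p : Set.Icc (0:ℝ) 1 => ((f p : ℝ)) :=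
    NNReal.continuous_coe.comp f.continuous
  obtain ⟨C, hC⟩ := f.bounded
  set p0 : Set.Icc (0:ℝ) 1 := ⟨0, by norm_num⟩ with hp0
  have hint : ∀ (ρ : Measure (Set.Icc (0:ℝ) 1)) [IsProbabilityMeasure ρ],
      Integrable (fun p : Set.Icc (0:ℝ) 1 => ((f p : ℝ))) ρ := by
    intro ρ _
    apply integrable_of_bdd' hfc.measurable (C + ((f p0 : ℝ)))
    intro p
    rw [abs_of_nonneg (f p).coe_nonneg]
    have h1 : dist (f p) (f p0) ≤ C := hC p p0
    have h2 : ((f p : ℝ)) - ((f p0 : ℝ)) ≤ C := by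
      calc ((f p : ℝ)) - ((f p0 : ℝ)) ≤ |((f p : ℝ)) - ((f p0 : ℝ))| := le_abs_self _
        _ = dist (f p) (f p0) := (NNReal.dist_eq _ _).symm
        _ ≤ C := h1
    linarith
  rw [lintegral_coe_eq_integral _ (hint μ), lintegral_coe_eq_integral _ (hint ν)]
  congr 1
  exact hcont ⟨fun p => ((f p : ℝ)), hfc⟩

end

end DF

end DeFinettiAux

open Filter Topology

/-- **de Finetti's representation theorem** for binary exchangeable processes.
If `P` is the law of an exchangeable process `{Xₙ ; n ≥ 1}` with values in `{0,1}`
(exchangeability: the law is invariant under permutations of the first `m` coordinates,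
for every `m`), then there is a *unique* Borel probability measure `μ` on `[0,1]` such
that for every `n` and every `x ∈ {0,1}ⁿ`,
`P(X₁ⁿ = x₁ⁿ) = ∫_{[0,1]} ∏ᵢ Q_p(xᵢ) dμ(p)`, where `Q_p(1) = 1 − Q_p(0) = p`. -/
theorem deFinetti_binary
    (P : Measure (ℕ → Bool)) [IsProbabilityMeasure P]
    (hexch : ∀ (m : ℕ) (σ : Equiv.Perm (Fin m)),
      P.map (fun ω i => if h : i < m then ω (σ ⟨i, h⟩) else ω i) = P) :
    ∃! μ : Measure (Set.Icc (0 : ℝ) 1), IsProbabilityMeasure μ ∧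
      ∀ (n : ℕ) (x : Fin n → Bool),
        (P {ω | ∀ i : Fin n, ω i = x i}).toReal =
          ∫ p : Set.Icc (0 : ℝ) 1, (∏ i, if x i then (p : ℝ) else 1 - (p : ℝ)) ∂μ := by
  classical
  have hA : ∀ S : Finset ℕ, P (DF.E S) = P (DF.E (Finset.range S.card)) := DF.A_eq hexch
  obtain ⟨μ, hμprob, hμmom⟩ := DF.exists_mu (P := P) hA
  haveI := hμprob
  refine ⟨μ, ⟨hμprob, fun n x => DF.representation (P := P) hA hμmom n x⟩, ?_⟩
  rintro ν ⟨hνprob, hν⟩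
  haveI := hνprob
  have hνmom : ∀ k : ℕ, (∫ p : Set.Icc (0:ℝ) 1, ((p : ℝ))^k ∂ν) = DF.a P k := by
    intro k
    have hk := hν k (fun _ => true)
    have hset : {ω : ℕ → Bool | ∀ i : Fin k, ω i = (fun _ => true) i}
        = DF.E (Finset.range k) := by
      ext ω
      simp only [DF.E, Set.mem_setOf_eq, Finset.mem_range]
      exact ⟨fun h j hj => h ⟨j, hj⟩, fun h i => h i i.2⟩
    rw [hset] at hk
    simp only [if_true, Finset.prod_const, Finset.card_univ, Fintype.card_fin] at hk
    simpa [DF.a] using hk.symm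
  exact DF.ext_of_moments (fun k => by rw [hνmom k, hμmom k])
end

section
/- Suppose k ≤ n balls are drawn from an urn containing n balls of n different colours, i.e., c = n and Q = Q_U where Q_U(j) = 1/n for each j = 1,…,n. Then 2(1 − e^{−k(k−1)/(2n)}) ≤ ‖h(Q_U,n,k;·) − b(Q_U,n,k;·)‖_TV ≤ k(k−1)/n. -/
open MeasureTheory
open scoped ENNReal

/-- The total variation distance `‖μ − ν‖_TV := 2 sup_A |μ(A) − ν(A)|`, the supremum
being over measurable sets `A`. -/
noncomputable def tvDist {α : Type*} [MeasurableSpace α] (μ ν : Measure α) : ℝ :=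
  2 * ⨆ A : {A : Set α // MeasurableSet A}, |(μ A.1).toReal - (ν A.1).toReal|

/-- The law `h(Q,n,k;·)` on `S^k` of the sequence of colours of `k` balls drawn uniformly at
random *without replacement* from an urn of `n` balls whose colours are given by
`col : Fin n → Fin c` (the `n`-type `Q` describing the urn is `Q(j) = #col⁻¹(j)/n`):
the uniform average of the colour sequences over all injective sequences of `k` balls. -/
noncomputable def drawWithoutReplacement (n c k : ℕ) (col : Fin n → Fin c) :
    Measure (Fin k → Fin c) :=
  (((Finset.univ.filter (fun f : Fin k → Fin n => Function.Injective f)).card : ℝ≥0∞))⁻¹ •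
    ∑ f ∈ Finset.univ.filter (fun f : Fin k → Fin n => Function.Injective f),
      Measure.dirac (col ∘ f)

/-- The single-draw colour distribution `Q` of an urn of `n` balls with colours
`col : Fin n → Fin c`, i.e. `Q(j) = #col⁻¹(j)/n`. -/
noncomputable def urnColourDist (n c : ℕ) (col : Fin n → Fin c) : Measure (Fin c) :=
  ((n : ℝ≥0∞))⁻¹ • ∑ i : Fin n, Measure.dirac (col i)

/-- The law `b(Q,n,k;·) = Q^k` on `S^k` of `k` i.i.d. draws (*with replacement*) from the urn. -/
noncomputable def drawWithReplacement (n c k : ℕ) (col : Fin n → Fin c) :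
    Measure (Fin k → Fin c) :=
  Measure.pi fun _ : Fin k => urnColourDist n c col

section Aux
open Finset

instance (n c : ℕ) (col : Fin n → Fin c) : IsFiniteMeasure (urnColourDist n c col) := by
  constructor
  rw [urnColourDist]
  simp only [Measure.smul_apply, Measure.finset_sum_apply,
    Measure.dirac_apply' _ MeasurableSet.univ]
  simp
  exact lt_of_le_of_lt (ENNReal.inv_mul_le_one (n : ℝ≥0∞)) ENNReal.one_lt_top

lemma card_inj (n k : ℕ) :
    (Finset.univ.filter (fun f : Fin k → Fin n => Function.Injective f)).card
      = n.descFactorial k := by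
  rw [← Fintype.card_subtype,
    Fintype.card_congr (Equiv.subtypeInjectiveEquivEmbedding (Fin k) (Fin n)),
    Fintype.card_embedding_eq, Fintype.card_fin, Fintype.card_fin]

lemma smul_sum_dirac_apply {α : Type*} [MeasurableSpace α] (c : ℝ≥0∞) (s : Finset α)
    (A : Set α) (hA : MeasurableSet A) [DecidablePred (· ∈ A)] :
    (c • ∑ f ∈ s, Measure.dirac f) A = c * (s.filter (· ∈ A)).card := by
  simp [Measure.smul_apply, Measure.finset_sum_apply, Measure.dirac_apply' _ hA,
    Set.indicator_apply, Finset.sum_boole]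

lemma bRepr (n k : ℕ) : drawWithReplacement n n k id
    = (((n : ℝ≥0∞))^k)⁻¹ • ∑ g : Fin k → Fin n, Measure.dirac g := by
  classical
  apply Measure.ext_of_singleton
  intro g
  have hL : drawWithReplacement n n k id {g} = (((n : ℝ≥0∞))⁻¹)^k := by
    rw [drawWithReplacement,
      show ({g} : Set (Fin k → Fin n)) = Set.pi Set.univ fun i => ({g i} : Set (Fin n)) by
        simp [Set.univ_pi_singleton], Measure.pi_pi]
    simp [urnColourDist, Measure.finset_sum_apply, Measure.dirac_apply, Set.indicator_apply,
      Finset.sum_ite_eq']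
  have hR : ((((n : ℝ≥0∞))^k)⁻¹ • ∑ g : Fin k → Fin n, Measure.dirac g) {g}
      = (((n : ℝ≥0∞))^k)⁻¹ := by
    rw [smul_sum_dirac_apply _ _ _ (measurableSet_singleton g)]
    rw [show (Finset.univ.filter (· ∈ ({g} : Set (Fin k → Fin n)))) = {g} by
      ext f; simp [eq_comm]]
    simp
  rw [hL, hR, ENNReal.inv_pow]

lemma one_sub_sum_le_prod (k : ℕ) (f : ℕ → ℝ) (h0 : ∀ i ∈ range k, 0 ≤ f i)
    (h1 : ∀ i ∈ range k, f i ≤ 1) :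
    1 - ∑ i ∈ range k, f i ≤ ∏ i ∈ range k, (1 - f i) := by
  induction k with
  | zero => simp
  | succ m ih =>
    have h0m : 0 ≤ f m := h0 m (by simp)
    have h1m : f m ≤ 1 := h1 m (by simp)
    have ihm := ih (fun i hi => h0 i (mem_range.2 (lt_trans (mem_range.1 hi) m.lt_succ_self)))
      (fun i hi => h1 i (mem_range.2 (lt_trans (mem_range.1 hi) m.lt_succ_self)))
    have hs : 0 ≤ ∑ i ∈ range m, f i :=
      Finset.sum_nonneg fun i hi => h0 i (mem_range.2 (lt_trans (mem_range.1 hi) m.lt_succ_self))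
    rw [Finset.prod_range_succ, Finset.sum_range_succ]
    nlinarith

lemma abs_div_bound (K N a b : ℕ) (hK : 0 < K) (hKN : K ≤ N) (haK : a ≤ K) (hab : a ≤ b)
    (hba : b + K ≤ N + a) :
    |(a : ℝ)/K - (b : ℝ)/N| ≤ 1 - (K : ℝ)/N := by
  have hK' : (0:ℝ) < K := by exact_mod_cast hK
  have hN' : (0:ℝ) < N := lt_of_lt_of_le hK' (by exact_mod_cast hKN)
  have haK' : (a:ℝ) ≤ K := by exact_mod_cast haK
  have hab' : (a:ℝ) ≤ b := by exact_mod_cast hab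
  have hba' : (b:ℝ) + K ≤ N + a := by exact_mod_cast hba
  have hKN' : (K:ℝ) ≤ N := by exact_mod_cast hKN
  have ha0 : (0:ℝ) ≤ a := Nat.cast_nonneg a
  rw [abs_sub_le_iff]
  constructor
  · rw [div_sub_div _ _ hK'.ne' hN'.ne',
      show (1 : ℝ) - (K:ℝ)/N = ((K:ℝ)*N - K*K)/(K*N) by field_simp,
      div_le_div_iff_of_pos_right (by positivity)]
    nlinarith [mul_le_mul_of_nonneg_right haK' (sub_nonneg.2 hKN')]
  · rw [div_sub_div _ _ hN'.ne' hK'.ne',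
      show (1 : ℝ) - (K:ℝ)/N = ((N:ℝ)*K - K*K)/(N*K) by field_simp,
      div_le_div_iff_of_pos_right (by positivity)]
    nlinarith [mul_le_mul_of_nonneg_left hba' hK'.le, mul_le_mul_of_nonneg_left hKN' ha0]

end Aux

/-- **Freedman's total-variation bounds for an urn of `n` distinct colours.**
If `k ≤ n` balls are drawn from an urn of `n` balls of `n` different colours (one ball of
each colour, i.e. `Q = Q_U` uniform), then
`2(1 − e^{−k(k−1)/(2n)}) ≤ ‖h(Q_U,n,k;·) − b(Q_U,n,k;·)‖_TV ≤ k(k−1)/n`. -/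
theorem freedman_sampling_TV {n k : ℕ} (hn : 0 < n) (hk : k ≤ n) :
    2 * (1 - Real.exp (-((k * (k - 1) : ℝ) / (2 * n)))) ≤
        tvDist (drawWithoutReplacement n n k id) (drawWithReplacement n n k id) ∧
      tvDist (drawWithoutReplacement n n k id) (drawWithReplacement n n k id) ≤
        (k * (k - 1) : ℝ) / n := by
  classical
  set Inj : Finset (Fin k → Fin n) :=
    Finset.univ.filter (fun f : Fin k → Fin n => Function.Injective f) with hInj
  set K : ℕ := Inj.card with hKdef
  set N : ℕ := n ^ k with hNdef
  have hKcard : K = n.descFactorial k := card_inj n k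
  have hKpos : 0 < K := by rw [hKcard]; exact Nat.pos_of_ne_zero (fun h => absurd (Nat.descFactorial_eq_zero_iff_lt.1 h) (not_lt.2 hk))
  have hNpos : 0 < N := pow_pos hn k |>.trans_le (le_of_eq rfl)
  have hKN : K ≤ N := by
    rw [hKcard, hNdef]
    exact Nat.descFactorial_le_pow n k
  have hK0 : ((K : ℝ≥0∞)) ≠ 0 := by exact_mod_cast hKpos.ne'
  have hKtop : ((K : ℝ≥0∞)) ≠ ⊤ := ENNReal.natCast_ne_top K
  -- measure formulas
  have hH : ∀ (A : Set (Fin k → Fin n)), MeasurableSet A →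
      (drawWithoutReplacement n n k id A).toReal = ((Inj.filter (· ∈ A)).card : ℝ) / K := by
    intro A hA
    rw [drawWithoutReplacement]
    simp only [Function.id_comp, ← hInj, ← hKdef]
    rw [smul_sum_dirac_apply _ _ _ hA, ENNReal.toReal_mul, ENNReal.toReal_inv]
    simp [div_eq_inv_mul]
  have hB : ∀ (A : Set (Fin k → Fin n)), MeasurableSet A →
      (drawWithReplacement n n k id A).toReal
        = ((Finset.univ.filter (· ∈ A)).card : ℝ) / N := by
    intro A hA
    rw [bRepr, smul_sum_dirac_apply _ _ _ hA, ENNReal.toReal_mul, ENNReal.toReal_inv]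
    simp [hNdef, div_eq_inv_mul]
  -- counting facts
  have hcount : ∀ (A : Set (Fin k → Fin n)),
      (Inj.filter (· ∈ A)).card ≤ K ∧
      (Inj.filter (· ∈ A)).card ≤ (Finset.univ.filter (· ∈ A)).card ∧
      (Finset.univ.filter (· ∈ A)).card + K ≤ N + (Inj.filter (· ∈ A)).card := by
    intro A
    refine ⟨Finset.card_le_card (Finset.filter_subset _ _), ?_, ?_⟩
    · exact Finset.card_le_card (by
        intro f hf
        simp only [Finset.mem_filter, hInj] at hf ⊢
        exact ⟨Finset.mem_univ f, hf.2⟩)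
    · have hinter : Finset.univ.filter (· ∈ A) ∩ Inj = Inj.filter (· ∈ A) := by
        ext f
        simp only [Finset.mem_inter, Finset.mem_filter, hInj]
        tauto
      have e1 := Finset.card_sdiff_add_card_inter (Finset.univ.filter (· ∈ A)) Inj
      have e2 := Finset.card_sdiff_add_card_inter (Finset.univ : Finset (Fin k → Fin n)) Inj
      have e3 : (Finset.univ : Finset (Fin k → Fin n)) ∩ Inj = Inj := by
        simp
      have e4 : (Finset.univ.filter (· ∈ A)) \ Inj ⊆ (Finset.univ : Finset (Fin k → Fin n)) \ Inj :=
        Finset.sdiff_subset_sdiff (Finset.subset_univ _) le_rfl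
      have e5 := Finset.card_le_card e4
      have e6 : (Finset.univ : Finset (Fin k → Fin n)).card = N := by
        simp [hNdef, Fintype.card_fun]
      rw [hinter] at e1
      rw [e3, e6, ← hKdef] at e2
      omega
  set p : ℝ := (K : ℝ) / N with hpdef
  have hNR : (0:ℝ) < N := by exact_mod_cast hNpos
  have hKR : (0:ℝ) < K := by exact_mod_cast hKpos
  -- the supremum is exactly 1 - p
  have hbound : ∀ A : {A : Set (Fin k → Fin n) // MeasurableSet A},
      |(drawWithoutReplacement n n k id A.1).toReal
        - (drawWithReplacement n n k id A.1).toReal| ≤ 1 - p := by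
    rintro ⟨A, hA⟩
    rw [hH A hA, hB A hA]
    obtain ⟨c1, c2, c3⟩ := hcount A
    exact abs_div_bound K N _ _ hKpos hKN c1 c2 c3
  have hwitval : |(drawWithoutReplacement n n k id (↑Inj : Set (Fin k → Fin n))).toReal
      - (drawWithReplacement n n k id (↑Inj : Set (Fin k → Fin n))).toReal| = 1 - p := by
    have hmeas : MeasurableSet (↑Inj : Set (Fin k → Fin n)) := by
      exact MeasurableSet.of_discrete
    rw [hH _ hmeas, hB _ hmeas]
    have e1 : (@Finset.filter (Fin k → Fin n) (fun x => x ∈ (↑Inj : Set (Fin k → Fin n)))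
        (fun a => Classical.propDecidable _) Inj) = Inj := by
      ext f; simp
    have e2 : (@Finset.filter (Fin k → Fin n) (fun x => x ∈ (↑Inj : Set (Fin k → Fin n)))
        (fun a => Classical.propDecidable _) Finset.univ) = Inj := by
      ext f; simp
    rw [e1, e2, ← hKdef, div_self hKR.ne', ← hpdef, abs_of_nonneg]
    have : p ≤ 1 := by
      rw [hpdef, div_le_one hNR]
      exact_mod_cast hKN
    linarith
  have hsup : (⨆ A : {A : Set (Fin k → Fin n) // MeasurableSet A},
      |(drawWithoutReplacement n n k id A.1).toReal
        - (drawWithReplacement n n k id A.1).toReal|) = 1 - p := by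
    refine le_antisymm (ciSup_le hbound) ?_
    have hb : BddAbove (Set.range fun A : {A : Set (Fin k → Fin n) // MeasurableSet A} =>
        |(drawWithoutReplacement n n k id A.1).toReal
          - (drawWithReplacement n n k id A.1).toReal|) := by
      refine ⟨1 - p, ?_⟩
      rintro x ⟨A, rfl⟩
      exact hbound A
    have := le_ciSup hb (⟨(↑Inj : Set (Fin k → Fin n)), MeasurableSet.of_discrete⟩ :
      {A : Set (Fin k → Fin n) // MeasurableSet A})
    rwa [hwitval] at this
  have htv : tvDist (drawWithoutReplacement n n k id) (drawWithReplacement n n k id)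
      = 2 * (1 - p) := by
    rw [tvDist, hsup]
  -- p as a product
  have hiP : ∀ i ∈ Finset.range k, (0:ℝ) ≤ (i:ℝ)/n ∧ (i:ℝ)/n ≤ 1 := by
    intro i hi
    have hi' : i < k := Finset.mem_range.1 hi
    have hin : (i:ℝ) ≤ n := by
      exact_mod_cast le_of_lt (lt_of_lt_of_le hi' hk)
    constructor
    · positivity
    · rw [div_le_one (by exact_mod_cast hn)]
      exact hin
  have hpprod : p = ∏ i ∈ Finset.range k, (1 - (i:ℝ)/n) := by
    have hKprod : (K:ℝ) = ∏ i ∈ Finset.range k, ((n:ℝ) - i) := by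
      rw [hKcard, Nat.descFactorial_eq_prod_range, Nat.cast_prod]
      refine Finset.prod_congr rfl fun i hi => ?_
      have : i ≤ n := le_of_lt (lt_of_lt_of_le (Finset.mem_range.1 hi) hk)
      push_cast [Nat.cast_sub this]
      ring
    have hNprod : (N:ℝ) = ∏ _i ∈ Finset.range k, (n:ℝ) := by
      simp [hNdef]
    rw [hpdef, hKprod, hNprod, ← Finset.prod_div_distrib]
    refine Finset.prod_congr rfl fun i hi => ?_
    field_simp
  have hs : ∑ i ∈ Finset.range k, (i:ℝ)/n = (k * ((k:ℝ) - 1)) / (2 * n) := by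
    rw [← Finset.sum_div]
    have hgauss : ∑ i ∈ Finset.range k, (i:ℝ) = (k * ((k:ℝ) - 1)) / 2 := by
      rcases k with _ | m
      · simp
      · have h2 : (∑ i ∈ Finset.range (m+1), i) * 2 = (m+1) * m := by
          simpa using Finset.sum_range_id_mul_two (m+1)
        have hcast := congrArg (Nat.cast : ℕ → ℝ) h2
        push_cast at hcast ⊢
        linarith
    rw [hgauss]
    ring
  have hupper : 1 - p ≤ ∑ i ∈ Finset.range k, (i:ℝ)/n := by
    have := one_sub_sum_le_prod k (fun i => (i:ℝ)/n)
      (fun i hi => (hiP i hi).1) (fun i hi => (hiP i hi).2)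
    rw [hpprod]
    linarith
  have hlowerp : p ≤ Real.exp (-(∑ i ∈ Finset.range k, (i:ℝ)/n)) := by
    rw [hpprod, ← Finset.sum_neg_distrib, Real.exp_sum]
    refine Finset.prod_le_prod (fun i hi => by linarith [(hiP i hi).2]) fun i hi => ?_
    have := Real.add_one_le_exp (-((i:ℝ)/n))
    linarith
  constructor
  · rw [htv]
    have : Real.exp (-((k * ((k:ℝ) - 1)) / (2 * n)))
        = Real.exp (-(∑ i ∈ Finset.range k, (i:ℝ)/n)) := by rw [hs]
    rw [this]
    linarith
  · rw [htv, hs] at *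
    rw [hs] at hupper
    have : (k * ((k:ℝ) - 1)) / n = 2 * ((k * ((k:ℝ) - 1)) / (2 * n)) := by
      field_simp
    rw [this]
    linarith
end

section
/- Let S = {1,…,n}, let Q_U(j) = 1/n for j ∈ S, and let k ≤ n. For any probability measure μ on ℳ(S), the law h(Q_U,n,k;·) of sampling k balls without replacement from an urn containing n balls of n different colours satisfies ‖h(Q_U,n,k;·) − M_{k,μ}‖_TV ≥ ‖h(Q_U,n,k;·) − b(Q_U,n,k;·)‖_TV. -/
open MeasureTheory
open scoped ENNReal
open Finset

/-- The space `ℳ(S)` of probability measures on a measurable space `S`, equipped with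
the σ-algebra `ℱ` generated by the evaluation maps `P ↦ P(A)`, `A` measurable
(obtained here as the subtype σ-algebra of the canonical σ-algebra on measures). -/
noncomputable instance probabilityMeasureMeasurableSpace
    {α : Type*} [MeasurableSpace α] : MeasurableSpace (ProbabilityMeasure α) :=
  Subtype.instMeasurableSpace

private def injF (n k : ℕ) : Finset (Fin k → Fin n) :=
  Finset.univ.filter fun f => Function.Injective f

private noncomputable def Efun (n k : ℕ) (q : Fin n → ℝ) : ℝ :=
  ∑ f ∈ injF n k, ∏ m, q (f m)

private lemma prod_filter_eq_pow {n k : ℕ} (q : Fin n → ℝ) (f : Fin k → Fin n) (x : Fin n)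
    (p : Fin k → Prop) [DecidablePred p] (hp : ∀ m, p m ↔ f m = x) :
    ∏ m ∈ Finset.univ.filter p, q (f m) = q x ^ (Finset.univ.filter p).card := by
  rw [Finset.prod_congr rfl (fun m hm => ?_), Finset.prod_const]
  rw [Finset.mem_filter] at hm
  rw [(hp m).1 hm.2]

private lemma prod_decomp {n k : ℕ} (q : Fin n → ℝ) (i j : Fin n) (hij : i ≠ j)
    (f : Fin k → Fin n) :
    ∏ m, q (f m) =
      q i ^ (Finset.univ.filter fun m => f m = i).card *
      q j ^ (Finset.univ.filter fun m => f m = j).card *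
      ∏ m ∈ Finset.univ.filter (fun m => f m ≠ i ∧ f m ≠ j), q (f m) := by
  classical
  rw [← Finset.prod_filter_mul_prod_filter_not Finset.univ (fun m => f m = i) (fun m => q (f m))]
  rw [← Finset.prod_filter_mul_prod_filter_not (Finset.univ.filter fun m => ¬ f m = i)
    (fun m => f m = j) (fun m => q (f m))]
  rw [Finset.filter_filter, Finset.filter_filter]
  have h1 : (Finset.univ.filter fun m => ¬f m = i ∧ f m = j)
      = Finset.univ.filter fun m => f m = j := by
    apply Finset.filter_congr
    intro m _
    constructor
    · exact fun h => h.2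
    · intro h
      refine ⟨fun hh => hij ?_, h⟩
      rw [← hh, h]
  have h2 : (Finset.univ.filter fun m => ¬f m = i ∧ ¬f m = j)
      = Finset.univ.filter fun m => f m ≠ i ∧ f m ≠ j := rfl
  rw [h1, h2, prod_filter_eq_pow q f i _ (fun m => Iff.rfl),
    prod_filter_eq_pow q f j _ (fun m => Iff.rfl), mul_assoc]

private lemma Efun_step {n k : ℕ} (q q' : Fin n → ℝ) (hq : ∀ m, 0 ≤ q m)
    (i j : Fin n) (hij : i ≠ j)
    (hagree : ∀ m, m ≠ i → m ≠ j → q m = q' m)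
    (hsum : q i + q j = q' i + q' j) (hprod : q i * q j ≤ q' i * q' j) :
    Efun n k q ≤ Efun n k q' := by
  classical
  set σ : (Fin k → Fin n) → (Fin k → Fin n) := fun f => (Equiv.swap i j) ∘ f with hσ
  have hσmem : ∀ f ∈ injF n k, σ f ∈ injF n k := by
    intro f hf
    simp only [injF, Finset.mem_filter, Finset.mem_univ, true_and] at hf ⊢
    exact (Equiv.swap i j).injective.comp hf
  have hσσ : ∀ f, σ (σ f) = f := by
    intro f; funext m; simp [hσ, Function.comp, Equiv.swap_apply_self]
  have key : ∀ f ∈ injF n k,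
      (∏ m, q (f m)) + (∏ m, q (σ f m)) ≤ (∏ m, q' (f m)) + (∏ m, q' (σ f m)) := by
    intro f hf
    simp only [injF, Finset.mem_filter, Finset.mem_univ, true_and] at hf
    have hfi : (Finset.univ.filter fun m => σ f m = i)
        = (Finset.univ.filter fun m => f m = j) := by
      apply Finset.filter_congr; intro m _
      rw [hσ]; simp only [Function.comp]
      rw [Equiv.apply_eq_iff_eq_symm_apply, Equiv.symm_swap, Equiv.swap_apply_left]
    have hfj : (Finset.univ.filter fun m => σ f m = j)
        = (Finset.univ.filter fun m => f m = i) := by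
      apply Finset.filter_congr; intro m _
      rw [hσ]; simp only [Function.comp]
      rw [Equiv.apply_eq_iff_eq_symm_apply, Equiv.symm_swap, Equiv.swap_apply_right]
    have hfilt : (Finset.univ.filter fun m => σ f m ≠ i ∧ σ f m ≠ j)
        = (Finset.univ.filter fun m => f m ≠ i ∧ f m ≠ j) := by
      apply Finset.filter_congr; intro m _
      rw [hσ]; simp only [Function.comp]
      constructor
      · rintro ⟨h1, h2⟩
        constructor
        · intro h; rw [h] at h2; exact h2 (Equiv.swap_apply_left i j)
        · intro h; rw [h] at h1; exact h1 (Equiv.swap_apply_right i j)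
      · rintro ⟨h1, h2⟩
        rw [Equiv.swap_apply_of_ne_of_ne h1 h2]
        exact ⟨h1, h2⟩
    have hval : ∀ m ∈ Finset.univ.filter (fun m => f m ≠ i ∧ f m ≠ j),
        σ f m = f m := by
      intro m hm
      rw [Finset.mem_filter] at hm
      exact Equiv.swap_apply_of_ne_of_ne hm.2.1 hm.2.2
    set R : ℝ := ∏ m ∈ Finset.univ.filter (fun m => f m ≠ i ∧ f m ≠ j), q (f m) with hRdef
    have hR0 : 0 ≤ R := Finset.prod_nonneg fun m _ => hq _
    have hRq' : ∏ m ∈ Finset.univ.filter (fun m => f m ≠ i ∧ f m ≠ j), q' (f m) = R := by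
      apply Finset.prod_congr rfl
      intro m hm
      rw [Finset.mem_filter] at hm
      exact (hagree _ hm.2.1 hm.2.2).symm
    have ha : (Finset.univ.filter fun m => f m = i).card ≤ 1 := by
      apply Finset.card_le_one.mpr
      intro x hx y hy
      rw [Finset.mem_filter] at hx hy
      exact hf (hx.2.trans hy.2.symm)
    have hb : (Finset.univ.filter fun m => f m = j).card ≤ 1 := by
      apply Finset.card_le_one.mpr
      intro x hx y hy
      rw [Finset.mem_filter] at hx hy
      exact hf (hx.2.trans hy.2.symm)
    have hpq : ∏ m ∈ Finset.univ.filter (fun m => f m ≠ i ∧ f m ≠ j), q (σ f m)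
        = ∏ m ∈ Finset.univ.filter (fun m => f m ≠ i ∧ f m ≠ j), q (f m) :=
      Finset.prod_congr rfl fun m hm => congrArg q (hval m hm)
    have hpq' : ∏ m ∈ Finset.univ.filter (fun m => f m ≠ i ∧ f m ≠ j), q' (σ f m)
        = ∏ m ∈ Finset.univ.filter (fun m => f m ≠ i ∧ f m ≠ j), q' (f m) :=
      Finset.prod_congr rfl fun m hm => congrArg q' (hval m hm)
    rw [prod_decomp q i j hij f, prod_decomp q i j hij (σ f),
      prod_decomp q' i j hij f, prod_decomp q' i j hij (σ f),
      hfi, hfj, hfilt, hpq, hpq', hRq', ← hRdef]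
    set a := (Finset.univ.filter fun m => f m = i).card
    set b := (Finset.univ.filter fun m => f m = j).card
    interval_cases a <;> interval_cases b <;>
      simp only [pow_zero, pow_one, one_mul, mul_one] <;>
      nlinarith [mul_le_mul_of_nonneg_right hprod hR0,
        mul_le_mul_of_nonneg_right (le_of_eq hsum) hR0,
        mul_le_mul_of_nonneg_right (le_of_eq hsum.symm) hR0]
  have hswap : ∀ (r : Fin n → ℝ),
      ∑ f ∈ injF n k, ∏ m, r (σ f m) = ∑ f ∈ injF n k, ∏ m, r (f m) := by
    intro r
    apply Finset.sum_nbij' σ σ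
    · exact hσmem
    · exact hσmem
    · intro f hf; exact hσσ f
    · intro f hf; exact hσσ f
    · intro f hf; rfl
  have h2 : Efun n k q + Efun n k q ≤ Efun n k q' + Efun n k q' := by
    have l1 := Finset.sum_le_sum key
    rw [Finset.sum_add_distrib, Finset.sum_add_distrib, hswap q, hswap q'] at l1
    exact l1
  linarith

private lemma Efun_le_uniform {n k : ℕ} (hn : 0 < n) (q : Fin n → ℝ)
    (hq : ∀ m, 0 ≤ q m) (hs : ∑ m, q m = 1) :
    Efun n k q ≤ (injF n k).card * (1 / n) ^ k := by
  classical
  have hn' : (0:ℝ) < n := by exact_mod_cast hn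
  have hEconst : Efun n k (fun _ => (1:ℝ)/n) = (injF n k).card * (1/n)^k := by
    simp [Efun, Finset.prod_const, Finset.card_univ]
  have hconst : ∑ _m : Fin n, (1:ℝ)/n = 1 := by
    rw [Finset.sum_const, Finset.card_univ, Fintype.card_fin, nsmul_eq_mul]
    field_simp
  suffices H : ∀ d (q : Fin n → ℝ), (Finset.univ.filter fun m => q m ≠ 1/n).card = d →
      (∀ m, 0 ≤ q m) → ∑ m, q m = 1 → Efun n k q ≤ (injF n k).card * (1/n)^k from
    H _ q rfl hq hs
  intro d
  induction d using Nat.strong_induction_on with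
  | _ d ih =>
    intro q hd hq hs
    by_cases hall : ∀ m, q m = 1/n
    · rw [funext hall, hEconst]
    · push_neg at hall
      have hex_lt : ∃ j, q j < 1/n := by
        by_contra hc; push_neg at hc
        obtain ⟨m0, hm0⟩ := hall
        have hlt : ∑ _m : Fin n, (1:ℝ)/n < ∑ m, q m :=
          Finset.sum_lt_sum (fun m _ => hc m)
            ⟨m0, Finset.mem_univ _, lt_of_le_of_ne (hc m0) (Ne.symm hm0)⟩
        rw [hconst, hs] at hlt
        exact lt_irrefl _ hlt
      obtain ⟨j, hj⟩ := hex_lt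
      have hex_gt : ∃ i, 1/n < q i := by
        by_contra hc; push_neg at hc
        have hlt : ∑ m, q m < ∑ _m : Fin n, (1:ℝ)/n :=
          Finset.sum_lt_sum (fun m _ => hc m) ⟨j, Finset.mem_univ _, hj⟩
        rw [hconst, hs] at hlt
        exact lt_irrefl _ hlt
      obtain ⟨i, hi⟩ := hex_gt
      have hij : i ≠ j := by
        intro h; rw [h] at hi; exact lt_asymm hi hj
      set q' : Fin n → ℝ :=
        Function.update (Function.update q i (1/n)) j (q i + q j - 1/n) with hq'def
      have hq'i : q' i = 1/n := by
        rw [hq'def, Function.update_of_ne hij, Function.update_self]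
      have hq'j : q' j = q i + q j - 1/n := by
        rw [hq'def, Function.update_self]
      have hagree : ∀ m, m ≠ i → m ≠ j → q m = q' m := by
        intro m hmi hmj
        rw [hq'def, Function.update_of_ne hmj, Function.update_of_ne hmi]
      have hq' : ∀ m, 0 ≤ q' m := by
        intro m
        rcases eq_or_ne m j with hmj | hmj
        · rw [hmj, hq'j]; linarith [hq j]
        · rcases eq_or_ne m i with hmi | hmi
          · rw [hmi, hq'i]; positivity
          · rw [← hagree m hmi hmj]; exact hq m
      have hsum : q i + q j = q' i + q' j := by rw [hq'i, hq'j]; ring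
      have hprod : q i * q j ≤ q' i * q' j := by
        rw [hq'i, hq'j]; nlinarith [mul_nonneg (le_of_lt (sub_pos.mpr hi))
          (le_of_lt (sub_pos.mpr hj))]
      have hjmem : j ∈ Finset.univ.erase i :=
        Finset.mem_erase.mpr ⟨Ne.symm hij, Finset.mem_univ _⟩
      have hsplit : ∀ r : Fin n → ℝ,
          ∑ m, r m = r i + (r j + ∑ m ∈ (Finset.univ.erase i).erase j, r m) := by
        intro r
        rw [Finset.add_sum_erase _ r hjmem, Finset.add_sum_erase _ r (Finset.mem_univ i)]
      have htail : ∑ m ∈ (Finset.univ.erase i).erase j, q' m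
          = ∑ m ∈ (Finset.univ.erase i).erase j, q m := by
        apply Finset.sum_congr rfl
        intro m hm
        rw [Finset.mem_erase, Finset.mem_erase] at hm
        exact (hagree m hm.2.1 hm.1).symm
      have hs' : ∑ m, q' m = 1 := by
        rw [hsplit q', htail, hq'i, hq'j]
        rw [hsplit q] at hs
        linarith
      have hsub : (Finset.univ.filter fun m => q' m ≠ 1/n)
          ⊆ (Finset.univ.filter fun m => q m ≠ 1/n).erase i := by
        intro m hm
        rw [Finset.mem_filter] at hm
        have hmi : m ≠ i := by
          intro h; rw [h, hq'i] at hm; exact hm.2 rfl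
        rw [Finset.mem_erase, Finset.mem_filter]
        refine ⟨hmi, Finset.mem_univ _, ?_⟩
        rcases eq_or_ne m j with hmj | hmj
        · rw [hmj]; exact ne_of_lt hj
        · rw [hagree m hmi hmj]; exact hm.2
      have himem : i ∈ Finset.univ.filter fun m => q m ≠ 1/n :=
        Finset.mem_filter.mpr ⟨Finset.mem_univ _, ne_of_gt hi⟩
      have hcard : (Finset.univ.filter fun m => q' m ≠ 1/n).card < d := by
        rw [← hd]
        exact lt_of_le_of_lt (Finset.card_le_card hsub)
          (Finset.card_erase_lt_of_mem himem)
      exact le_trans (Efun_step q q' hq i j hij hagree hsum hprod)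
        (ih _ hcard q' rfl hq' hs')

private lemma meas_coe_finset {α : Type*} [MeasurableSpace α] [MeasurableSingletonClass α]
    (μ : Measure α) (s : Finset α) : μ ↑s = ∑ x ∈ s, μ {x} := by
  have := MeasureTheory.sum_measure_preimage_singleton (μ := μ) (f := id) s
    (fun y _ => by simp)
  simpa using this.symm

private instance ufin {n c : ℕ} (col : Fin n → Fin c) :
    IsFiniteMeasure (urnColourDist n c col) := by
  constructor
  rw [urnColourDist, Measure.smul_apply, Measure.finset_sum_apply]
  simp only [Measure.dirac_apply_of_mem (Set.mem_univ _), Finset.sum_const,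
    Finset.card_univ, Fintype.card_fin, nsmul_eq_mul, mul_one, smul_eq_mul]
  rcases Nat.eq_zero_or_pos n with h | h
  · subst h; simp
  · rw [ENNReal.inv_mul_cancel (by exact_mod_cast h.ne') (ENNReal.natCast_ne_top n)]
    exact ENNReal.one_lt_top

open scoped Classical in
private lemma h_apply {n k : ℕ} (A : Set (Fin k → Fin n)) (hA : MeasurableSet A) :
    drawWithoutReplacement n n k id A
      = ((((injF n k).filter fun f => f ∈ A).card : ℝ≥0∞)) * (((injF n k).card : ℝ≥0∞))⁻¹ := by
  rw [drawWithoutReplacement]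
  rw [Measure.smul_apply, Measure.finset_sum_apply]
  simp only [Function.comp_id, Function.id_comp]
  rw [show (Finset.univ.filter (fun f : Fin k → Fin n => Function.Injective f)) = injF n k
    from rfl]
  simp_rw [Measure.dirac_apply' _ hA, Set.indicator_apply, Pi.one_apply]
  rw [Finset.sum_boole, smul_eq_mul, mul_comm]

private lemma u_single {n : ℕ} (x : Fin n) :
    urnColourDist n n id {x} = (n : ℝ≥0∞)⁻¹ := by
  rw [urnColourDist, Measure.smul_apply, Measure.finset_sum_apply]
  simp [Measure.dirac_apply, Set.indicator_apply]

private lemma b_single {n k : ℕ} (f : Fin k → Fin n) :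
    drawWithReplacement n n k id {f} = ((n : ℝ≥0∞)⁻¹) ^ k := by
  rw [drawWithReplacement, ← Set.univ_pi_singleton f, Measure.pi_pi]
  simp [u_single]

private lemma b_finset {n k : ℕ} (s : Finset (Fin k → Fin n)) :
    drawWithReplacement n n k id ↑s = (s.card : ℝ≥0∞) * ((n : ℝ≥0∞)⁻¹) ^ k := by
  rw [meas_coe_finset]
  simp [b_single]

private lemma pik_finset {n k : ℕ} (Q : Measure (Fin n)) [IsProbabilityMeasure Q]
    (s : Finset (Fin k → Fin n)) :
    Measure.pi (fun _ : Fin k => Q) ↑s = ∑ f ∈ s, ∏ m, Q {f m} := by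
  rw [meas_coe_finset]
  apply Finset.sum_congr rfl
  intro f _
  rw [← Set.univ_pi_singleton f, Measure.pi_pi]

private lemma pik_inj_le {n k : ℕ} (hn : 0 < n) (Q : Measure (Fin n)) [IsProbabilityMeasure Q] :
    Measure.pi (fun _ : Fin k => Q) ↑(injF n k)
      ≤ ((injF n k).card : ℝ≥0∞) * ((n : ℝ≥0∞)⁻¹) ^ k := by
  rw [pik_finset]
  set q : Fin n → ℝ := fun m => (Q {m}).toReal with hqdef
  have hq : ∀ m, 0 ≤ q m := fun m => ENNReal.toReal_nonneg
  have hs : ∑ m, q m = 1 := by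
    have h1 : ∑ m, Q {m} = 1 := by
      have h2 := meas_coe_finset Q Finset.univ
      rw [Finset.coe_univ, measure_univ] at h2
      exact h2.symm
    rw [hqdef, ← ENNReal.toReal_sum (fun a _ => measure_ne_top Q _), h1, ENNReal.toReal_one]
  have hterm : ∀ f : Fin k → Fin n, (∏ m, Q {f m}) ≠ ⊤ := fun f =>
    (ENNReal.prod_lt_top (fun m _ => measure_lt_top Q _)).ne
  have hLne : (∑ f ∈ injF n k, ∏ m, Q {f m}) ≠ ⊤ :=
    (ENNReal.sum_lt_top.mpr (fun f _ => (hterm f).lt_top)).ne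
  have hRne : ((injF n k).card : ℝ≥0∞) * ((n : ℝ≥0∞)⁻¹) ^ k ≠ ⊤ :=
    ENNReal.mul_ne_top (ENNReal.natCast_ne_top _)
      (ENNReal.pow_ne_top (ENNReal.inv_ne_top.mpr (by exact_mod_cast hn.ne')))
  rw [← ENNReal.toReal_le_toReal hLne hRne]
  have hL : (∑ f ∈ injF n k, ∏ m, Q {f m}).toReal = Efun n k q := by
    rw [ENNReal.toReal_sum (fun f _ => hterm f)]
    apply Finset.sum_congr rfl
    intro f _
    rw [ENNReal.toReal_prod]
  have hR : (((injF n k).card : ℝ≥0∞) * ((n : ℝ≥0∞)⁻¹) ^ k).toReal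
      = ((injF n k).card : ℝ) * (1 / (n : ℝ)) ^ k := by
    rw [ENNReal.toReal_mul, ENNReal.toReal_pow, ENNReal.toReal_inv]
    simp [one_div]
  rw [hL, hR]
  exact Efun_le_uniform hn q hq hs

private lemma coe_injF (n k : ℕ) :
    ↑(injF n k) = {f : Fin k → Fin n | Function.Injective f} := by
  ext f; simp [injF]

private lemma abs_bound {x y cR nk : ℝ} (hc : 0 < cR) (hnk : 0 < nk) (hcn : cR ≤ nk)
    (hx0 : 0 ≤ x) (hxc : x ≤ cR) (hxy : x ≤ y) (hycx : y + cR ≤ x + nk) :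
    |x / cR - y / nk| ≤ 1 - cR / nk := by
  have hrw : (1:ℝ) - cR / nk = (nk - cR) * cR / (cR * nk) := by
    field_simp
  rw [abs_sub_le_iff]
  constructor
  · rw [div_sub_div _ _ hc.ne' hnk.ne', hrw]
    apply div_le_div_of_nonneg_right ?_ (by positivity) |>.trans_eq rfl
    nlinarith [mul_le_mul_of_nonneg_right hxy hc.le,
      mul_le_mul_of_nonneg_right hxc (sub_nonneg.mpr hcn)]
  · rw [div_sub_div _ _ hnk.ne' hc.ne', show nk * cR = cR * nk from mul_comm _ _, hrw]
    apply div_le_div_of_nonneg_right ?_ (by positivity) |>.trans_eq rfl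
    nlinarith [mul_le_mul_of_nonneg_right (show y ≤ x + (nk - cR) by linarith) hc.le,
      mul_le_mul_of_nonneg_left hcn hx0]

/-- **No i.i.d. mixture is closer to sampling without replacement than sampling with
replacement** (Diaconis–Freedman, Proposition 31). For the uniform urn of `n` balls of `n`
different colours and any mixing probability measure `μ` on `ℳ(S)`, `S = {1,…,n}`,
`‖h(Q_U,n,k;·) − M_{k,μ}‖_TV ≥ ‖h(Q_U,n,k;·) − b(Q_U,n,k;·)‖_TV`, where
`M_{k,μ}(A) = ∫ Q^k(A) dμ(Q)` is the mixture of i.i.d. measures. -/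
theorem sampling_TV_mixture_ge {n k : ℕ} (hn : 0 < n) (hk : k ≤ n)
    (μ : Measure (ProbabilityMeasure (Fin n))) [IsProbabilityMeasure μ]
    (M : Measure (Fin k → Fin n))
    (hM : ∀ A : Set (Fin k → Fin n), MeasurableSet A →
        M A = ∫⁻ Q : ProbabilityMeasure (Fin n),
          Measure.pi (fun _ : Fin k => (Q : Measure (Fin n))) A ∂μ) :
    tvDist (drawWithoutReplacement n n k id) M ≥
      tvDist (drawWithoutReplacement n n k id) (drawWithReplacement n n k id) := by
  classical
  set H := drawWithoutReplacement n n k id with hH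
  set B := drawWithReplacement n n k id with hB
  set cR : ℝ := ((injF n k).card : ℝ) with hcR
  set nk : ℝ := ((n : ℝ)) ^ k with hnk
  have hc0 : 0 < (injF n k).card := Finset.card_pos.mpr
    ⟨Fin.castLE hk, by
      simp only [injF, Finset.mem_filter, Finset.mem_univ, true_and]
      exact Fin.castLE_injective hk⟩
  have hcle : (injF n k).card ≤ n ^ k := by
    calc (injF n k).card ≤ Finset.univ.card := Finset.card_filter_le _ _
    _ = n ^ k := by rw [Finset.card_univ, Fintype.card_fun, Fintype.card_fin, Fintype.card_fin]
  have hcR0 : 0 < cR := by rw [hcR]; exact_mod_cast hc0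
  have hnk0 : (0:ℝ) < nk := by rw [hnk]; positivity
  have hcleR : cR ≤ nk := by rw [hcR, hnk]; exact_mod_cast hcle
  set I : Set (Fin k → Fin n) := {f | Function.Injective f} with hI
  have hIm : MeasurableSet I := .of_discrete
  have hIco : (↑(injF n k) : Set (Fin k → Fin n)) = I := coe_injF n k
  have hHreal : ∀ A : Set (Fin k → Fin n), MeasurableSet A →
      (H A).toReal = (((injF n k).filter fun f => f ∈ A).card : ℝ) / cR := by
    intro A hA
    rw [hH, h_apply A hA, ENNReal.toReal_mul, ENNReal.toReal_inv, ENNReal.toReal_natCast,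
      ENNReal.toReal_natCast, div_eq_mul_inv, hcR]
  have hBreal : ∀ s : Finset (Fin k → Fin n),
      (B ↑s).toReal = (s.card : ℝ) / nk := by
    intro s
    rw [hB, b_finset, ENNReal.toReal_mul, ENNReal.toReal_pow, ENNReal.toReal_inv,
      ENNReal.toReal_natCast, ENNReal.toReal_natCast, inv_pow, hnk, div_eq_mul_inv]
  have cardfacts : ∀ A : Set (Fin k → Fin n),
      (((injF n k).filter fun f => f ∈ A).card ≤ (injF n k).card)
      ∧ (((injF n k).filter fun f => f ∈ A).card ≤ A.toFinset.card
      ∧ A.toFinset.card + (injF n k).card ≤ ((injF n k).filter fun f => f ∈ A).card + n ^ k) := by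
    intro A
    refine ⟨Finset.card_filter_le _ _, ?_, ?_⟩
    · apply Finset.card_le_card
      intro f hf
      rw [Finset.mem_filter] at hf
      simpa [injF] using hf.2
    · have hsplit := Finset.card_filter_add_card_filter_not
        (s := A.toFinset) (p := fun f => Function.Injective f)
      have huniv := Finset.card_filter_add_card_filter_not
        (s := (Finset.univ : Finset (Fin k → Fin n))) (p := fun f => Function.Injective f)
      have h1 : A.toFinset.filter (fun f => Function.Injective f)
          = (injF n k).filter fun f => f ∈ A := by
        ext f; simp [injF, and_comm]
      have h2 : (A.toFinset.filter fun f => ¬ Function.Injective f).card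
          ≤ (Finset.univ.filter fun f : Fin k → Fin n => ¬ Function.Injective f).card :=
        Finset.card_le_card (Finset.filter_subset_filter _ (Finset.subset_univ _))
      have h3 : (Finset.univ.filter fun f : Fin k → Fin n => Function.Injective f).card
          = (injF n k).card := rfl
      have h4 : (Finset.univ : Finset (Fin k → Fin n)).card = n ^ k := by
        rw [Finset.card_univ, Fintype.card_fun, Fintype.card_fin, Fintype.card_fin]
      rw [h1] at hsplit
      omega
  have hBA : ∀ A : Set (Fin k → Fin n), (B A).toReal = (A.toFinset.card : ℝ) / nk := by
    intro A
    have h0 : B A = B ↑A.toFinset := by rw [Set.coe_toFinset]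
    rw [h0, hBreal]
  have habs : ∀ A : Set (Fin k → Fin n), MeasurableSet A →
      |(H A).toReal - (B A).toReal| ≤ 1 - cR / nk := by
    intro A hA
    obtain ⟨f1, f2, f3⟩ := cardfacts A
    rw [hHreal A hA, hBA A]
    apply abs_bound hcR0 hnk0 hcleR (by positivity) (by rw [hcR]; exact_mod_cast f1)
      (by exact_mod_cast f2)
    rw [hcR, hnk]
    exact_mod_cast f3
  have hHI : (H I).toReal = 1 := by
    rw [hHreal I hIm]
    have hfi : @Finset.filter _ (fun f => f ∈ I) (fun f => Classical.propDecidable _)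
        (injF n k) = injF n k := by
      ext f; simp [injF, hI]
    rw [hfi, div_self hcR0.ne']
  have hBIr : (B I).toReal = cR / nk := by
    have h0 : B I = B ↑(injF n k) := by rw [hIco]
    rw [h0, hBreal]
  have hMuniv : M Set.univ = 1 := by
    rw [hM Set.univ MeasurableSet.univ]
    simp_rw [measure_univ]
    rw [lintegral_one, measure_univ]
  have hMle1 : ∀ A : Set (Fin k → Fin n), (M A).toReal ≤ 1 := by
    intro A
    have h1 : M A ≤ 1 := hMuniv ▸ measure_mono (Set.subset_univ A)
    calc (M A).toReal ≤ (1 : ℝ≥0∞).toReal := ENNReal.toReal_mono ENNReal.one_ne_top h1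
    _ = 1 := ENNReal.toReal_one
  have hRne : ((injF n k).card : ℝ≥0∞) * ((n : ℝ≥0∞)⁻¹) ^ k ≠ ⊤ :=
    ENNReal.mul_ne_top (ENNReal.natCast_ne_top _)
      (ENNReal.pow_ne_top (ENNReal.inv_ne_top.mpr (by exact_mod_cast hn.ne')))
  have hMI : (M I).toReal ≤ cR / nk := by
    have h1 : M I ≤ ((injF n k).card : ℝ≥0∞) * ((n : ℝ≥0∞)⁻¹) ^ k := by
      rw [hM I hIm]
      calc ∫⁻ Q : ProbabilityMeasure (Fin n),
            Measure.pi (fun _ : Fin k => (Q : Measure (Fin n))) I ∂μ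
          ≤ ∫⁻ _Q : ProbabilityMeasure (Fin n),
            ((injF n k).card : ℝ≥0∞) * ((n : ℝ≥0∞)⁻¹) ^ k ∂μ := by
            apply lintegral_mono
            intro Q
            rw [← hIco]
            exact pik_inj_le hn (Q : Measure (Fin n))
        _ = ((injF n k).card : ℝ≥0∞) * ((n : ℝ≥0∞)⁻¹) ^ k := by
            rw [lintegral_const, measure_univ, mul_one]
    have h2 := ENNReal.toReal_mono hRne h1
    calc (M I).toReal ≤ (((injF n k).card : ℝ≥0∞) * ((n : ℝ≥0∞)⁻¹) ^ k).toReal := h2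
    _ = cR / nk := by
        rw [ENNReal.toReal_mul, ENNReal.toReal_pow, ENNReal.toReal_inv,
          ENNReal.toReal_natCast, ENNReal.toReal_natCast, inv_pow, hcR, hnk, div_eq_mul_inv]
  have hones : (0:ℝ) ≤ 1 - cR / nk := by
    rw [sub_nonneg]
    exact (div_le_one hnk0).mpr hcleR
  have hBound1 : ∀ A : {A : Set (Fin k → Fin n) // MeasurableSet A},
      |(H A.1).toReal - (B A.1).toReal| ≤ 1 - cR / nk := fun A => habs A.1 A.2
  have hsupB : (⨆ A : {A : Set (Fin k → Fin n) // MeasurableSet A},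
      |(H A.1).toReal - (B A.1).toReal|) = 1 - cR / nk := by
    apply le_antisymm
    · exact Real.iSup_le hBound1 hones
    · have hb : BddAbove (Set.range fun A : {A : Set (Fin k → Fin n) // MeasurableSet A} =>
          |(H A.1).toReal - (B A.1).toReal|) :=
        ⟨1 - cR / nk, by rintro r ⟨A, rfl⟩; exact hBound1 A⟩
      have h1 := le_ciSup hb (⟨I, hIm⟩ : {A : Set (Fin k → Fin n) // MeasurableSet A})
      calc 1 - cR / nk = |(H I).toReal - (B I).toReal| := by
            rw [hHI, hBIr, abs_of_nonneg hones]
        _ ≤ _ := h1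
  have hbound1M : ∀ A : {A : Set (Fin k → Fin n) // MeasurableSet A},
      |(H A.1).toReal - (M A.1).toReal| ≤ 1 := by
    intro A
    have h1 : (0:ℝ) ≤ (H A.1).toReal := ENNReal.toReal_nonneg
    have h2 : (H A.1).toReal ≤ 1 := by
      rw [hHreal A.1 A.2]
      apply (div_le_one hcR0).mpr
      rw [hcR]
      exact_mod_cast (cardfacts A.1).1
    have h3 : (0:ℝ) ≤ (M A.1).toReal := ENNReal.toReal_nonneg
    have h4 := hMle1 A.1
    rw [abs_le]
    constructor <;> linarith
  have hbM : BddAbove (Set.range fun A : {A : Set (Fin k → Fin n) // MeasurableSet A} =>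
      |(H A.1).toReal - (M A.1).toReal|) :=
    ⟨1, by rintro r ⟨A, rfl⟩; exact hbound1M A⟩
  rw [ge_iff_le]
  unfold tvDist
  rw [hsupB]
  have hstep := le_ciSup hbM (⟨I, hIm⟩ : {A : Set (Fin k → Fin n) // MeasurableSet A})
  have hfin : 1 - cR / nk ≤ |(H I).toReal - (M I).toReal| := by
    rw [hHI]
    calc 1 - cR / nk ≤ 1 - (M I).toReal := by linarith
    _ ≤ |1 - (M I).toReal| := le_abs_self _
  linarith
end

section
/- Let H(ℓ,n,k;·) and B(ℓ,n,k;·) denote the multivariate hypergeometric and multinomial p.m.f.s of the colour counts when sampling k balls without and with replacement, respectively, from an urn with n balls of c colours with composition ℓ. Then, for any composition ℓ and any k ≤ n, D(H(ℓ,n,k;·) ‖ B(ℓ,n,k;·)) ≤ (c−1)k(k−1)/(2(n−1)(n−k+1)). -/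
open MeasureTheory
open scoped ENNReal

open Classical in
/-- The relative entropy `D(P‖P') = Σ_{x : P(x)>0} P(x) log (P(x)/P'(x))` between two
probability mass functions on a discrete set (natural logarithm). -/
noncomputable def relEntPMF {α : Type*} (P P' : α → ℝ) : ℝ :=
  ∑' x, if 0 < P x then P x * Real.log (P x / P' x) else 0

/-- The multivariate hypergeometric p.m.f. `H(ℓ,n,k;s) = (∏ⱼ C(ℓⱼ,sⱼ)) / C(n,k)` of the
colour counts when sampling `k` balls *without replacement* from an urn of `n` balls of
`c` colours with composition `ℓ`; it is a p.m.f. on count vectors `s` with `Σⱼ sⱼ = k`. -/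
noncomputable def hyperPMF (c n k : ℕ) (ℓ : Fin c → ℕ)
    (s : {s : Fin c → ℕ // ∑ j, s j = k}) : ℝ :=
  ((∏ j, (ℓ j).choose (s.1 j) : ℕ) : ℝ) / (n.choose k : ℝ)

/-- The multinomial p.m.f. `B(ℓ,n,k;s) = (k choose s₁,…,s_c) ∏ⱼ (ℓⱼ/n)^{sⱼ}` of the colour
counts when sampling `k` balls *with replacement* from the same urn. -/
noncomputable def multinomPMF (c n k : ℕ) (ℓ : Fin c → ℕ)
    (s : {s : Fin c → ℕ // ∑ j, s j = k}) : ℝ :=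
  (Nat.multinomial Finset.univ s.1 : ℝ) * ∏ j, ((ℓ j : ℝ) / (n : ℝ)) ^ (s.1 j)

namespace StamAux

open Finset

def Sm (c m : ℕ) : Finset (Fin c → ℕ) := Finset.piAntidiag Finset.univ m

lemma mem_Sm {c m : ℕ} {s : Fin c → ℕ} : s ∈ Sm c m ↔ ∑ j, s j = m := by simp [Sm]

def ej {c : ℕ} (j : Fin c) : Fin c → ℕ := fun i => if i = j then 1 else 0

noncomputable def Hf {c : ℕ} (ℓ : Fin c → ℕ) (n m : ℕ) (s : Fin c → ℕ) : ℝ :=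
  ((∏ j, (ℓ j).choose (s j) : ℕ) : ℝ) / (n.choose m : ℝ)

noncomputable def Bf {c : ℕ} (ℓ : Fin c → ℕ) (n : ℕ) (s : Fin c → ℕ) : ℝ :=
  (Nat.multinomial Finset.univ s : ℝ) * ∏ j, ((ℓ j : ℝ) / (n : ℝ)) ^ (s j)

open Classical in
noncomputable def phi (a b : ℝ) : ℝ := if 0 < a then a * Real.log (a/b) else 0

/-- multivariate Vandermonde -/
lemma vander {ι : Type*} [DecidableEq ι] (u : Finset ι) (ℓ : ι → ℕ) :
    ∀ m : ℕ, ∑ f ∈ u.piAntidiag m, ∏ j ∈ u, (ℓ j).choose (f j) =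
      (∑ j ∈ u, ℓ j).choose m := by
  induction u using Finset.cons_induction with
  | empty =>
    intro m
    cases m with
    | zero => simp
    | succ m => simp [Finset.piAntidiag_empty_of_ne_zero]
  | cons i u hi ih =>
    intro m
    rw [Finset.piAntidiag_cons, Finset.sum_disjiUnion]
    rw [Finset.sum_cons, Nat.add_choose_eq]
    refine Finset.sum_congr rfl ?_
    rintro ⟨a, b⟩ hab
    rw [Finset.sum_map]
    have : ∀ g ∈ u.piAntidiag b,
        ∏ j ∈ Finset.cons i u hi, (ℓ j).choose
          ((addRightEmbedding fun t => if t = i then a else 0) g j)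
        = (ℓ i).choose a * ∏ j ∈ u, (ℓ j).choose (g j) := by
      intro g hg
      rw [Finset.mem_piAntidiag] at hg
      have hgi : g i = 0 := by
        by_contra h
        exact hi (hg.2 i h)
      rw [Finset.prod_cons]
      simp only [addRightEmbedding_apply]
      congr 1
      · simp [hgi]
      · refine Finset.prod_congr rfl fun j hj => ?_
        have : j ≠ i := fun h => hi (h ▸ hj)
        simp [this]
    rw [Finset.sum_congr rfl this, ← Finset.mul_sum, ih b]

lemma vander_univ {c : ℕ} (ℓ : Fin c → ℕ) (m : ℕ) :
    ∑ s ∈ Sm c m, ∏ j, (ℓ j).choose (s j) = (∑ j, ℓ j).choose m :=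
  vander Finset.univ ℓ m


lemma sum_ej {c : ℕ} (j : Fin c) : ∑ i, ej j i = 1 := by
  simp [ej]

lemma sum_Sm_succ {c : ℕ} {M : Type*} [AddCommMonoid M] (m : ℕ) (j : Fin c)
    (f : (Fin c → ℕ) → M) (h0 : ∀ t ∈ Sm c (m+1), t j = 0 → f t = 0) :
    ∑ t ∈ Sm c (m+1), f t = ∑ s ∈ Sm c m, f (s + ej j) := by
  rw [← Finset.sum_filter_of_ne (p := fun t => t j ≠ 0)
    (fun t ht h => by by_contra h'; exact h (h0 t ht (by simpa using h')))]
  refine Finset.sum_nbij' (fun t => t - ej j) (fun s => s + ej j) ?_ ?_ ?_ ?_ ?_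
  · intro t ht
    rw [Finset.mem_filter, mem_Sm] at ht
    rw [mem_Sm]
    beta_reduce
    have h1 : 1 ≤ t j := Nat.one_le_iff_ne_zero.2 ht.2
    have : ∑ i, (t - ej j) i + ∑ i, ej j i = ∑ i, t i := by
      rw [← Finset.sum_add_distrib]
      refine Finset.sum_congr rfl fun i _ => ?_
      simp only [Pi.sub_apply, ej]
      rcases eq_or_ne i j with rfl | h
      · simp; omega
      · simp [h]
    rw [sum_ej] at this
    omega
  · intro s hs
    rw [mem_Sm] at hs
    rw [Finset.mem_filter, mem_Sm]
    beta_reduce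
    constructor
    · simp only [Pi.add_apply]
      rw [Finset.sum_add_distrib, hs, sum_ej]
    · simp [ej]
  · intro t ht
    rw [Finset.mem_filter, mem_Sm] at ht
    beta_reduce
    funext i
    simp only [Pi.add_apply, Pi.sub_apply, ej]
    rcases eq_or_ne i j with rfl | h
    · simp; omega
    · simp [h]
  · intro s _
    beta_reduce
    funext i
    simp only [Pi.add_apply, Pi.sub_apply, ej]
    rcases eq_or_ne i j with rfl | h
    · simp
    · simp [h]
  · intro t ht
    rw [Finset.mem_filter, mem_Sm] at ht
    beta_reduce
    congr 1
    funext i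
    simp only [Pi.add_apply, Pi.sub_apply, ej]
    rcases eq_or_ne i j with rfl | h
    · simp; omega
    · simp [h]

lemma C2nat {c : ℕ} (ℓ : Fin c → ℕ) (j : Fin c) (m : ℕ) :
    ∑ s ∈ Sm c (m+1), s j * ∏ i, (ℓ i).choose (s i) =
      ℓ j * ((∑ i, ℓ i) - 1).choose m := by
  by_cases hj : ℓ j = 0
  · rw [hj, Nat.zero_mul]
    refine Finset.sum_eq_zero fun s _ => ?_
    rcases Nat.eq_zero_or_pos (s j) with h | h
    · rw [h, Nat.zero_mul]
    · rw [Finset.prod_eq_zero (Finset.mem_univ j) (by rw [hj]; exact Nat.choose_eq_zero_of_lt h),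
        Nat.mul_zero]
  · have hj1 : 1 ≤ ℓ j := Nat.one_le_iff_ne_zero.2 hj
    set ℓ' : Fin c → ℕ := Function.update ℓ j (ℓ j - 1) with hℓ'
    rw [sum_Sm_succ m j _ (fun t _ ht => by rw [ht, Nat.zero_mul])]
    have key : ∀ s ∈ Sm c m,
        (s + ej j) j * ∏ i, (ℓ i).choose ((s + ej j) i)
          = ℓ j * ∏ i, (ℓ' i).choose (s i) := by
      intro s _
      have h1 : (s + ej j) j = s j + 1 := by simp [ej]
      rw [← Finset.mul_prod_erase Finset.univ _ (Finset.mem_univ j),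
        ← Finset.mul_prod_erase Finset.univ (fun i => (ℓ' i).choose (s i)) (Finset.mem_univ j)]
      have h2 : ∀ i ∈ Finset.univ.erase j,
          (ℓ i).choose ((s + ej j) i) = (ℓ' i).choose (s i) := by
        intro i hi
        have hij : i ≠ j := (Finset.mem_erase.1 hi).1
        simp [ej, hij, hℓ', Function.update_of_ne hij]
      rw [Finset.prod_congr rfl h2, h1]
      have h3 : (s j + 1) * (ℓ j).choose (s j + 1) = ℓ j * (ℓ' j).choose (s j) := by
        have h5 := Nat.add_one_mul_choose_eq (ℓ j - 1) (s j)
        have h6 : ℓ j - 1 + 1 = ℓ j := by omega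
        rw [h6] at h5
        rw [hℓ', Function.update_self, Nat.mul_comm]
        exact h5.symm
      rw [← Nat.mul_assoc, ← Nat.mul_assoc, h3]
    rw [Finset.sum_congr rfl key, ← Finset.mul_sum, vander_univ]
    congr 2
    rw [hℓ', Finset.sum_update_of_mem (Finset.mem_univ j)]
    have : ∑ i ∈ Finset.univ.erase j, ℓ i + ℓ j = ∑ i, ℓ i := by
      rw [Nat.add_comm, Finset.add_sum_erase Finset.univ ℓ (Finset.mem_univ j)]
    have h4 : ∑ i ∈ Finset.univ \ {j}, ℓ i = ∑ i ∈ Finset.univ.erase j, ℓ i := by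
      congr 1
      ext x; simp [Finset.mem_erase, and_comm]
    omega

/-- key step: `(s j + 1) * ∏ C(ℓ, s + e_j) = ℓ j * ∏ C(ℓ', s)` -/
lemma keyC {c : ℕ} (ℓ : Fin c → ℕ) (j : Fin c) (hj1 : 1 ≤ ℓ j) (s : Fin c → ℕ) :
    (s j + 1) * ∏ i, (ℓ i).choose ((s + ej j) i)
      = ℓ j * ∏ i, ((Function.update ℓ j (ℓ j - 1)) i).choose (s i) := by
  set ℓ' : Fin c → ℕ := Function.update ℓ j (ℓ j - 1) with hℓ'
  rw [← Finset.mul_prod_erase Finset.univ _ (Finset.mem_univ j),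
    ← Finset.mul_prod_erase Finset.univ (fun i => (ℓ' i).choose (s i)) (Finset.mem_univ j)]
  have h2 : ∀ i ∈ Finset.univ.erase j,
      (ℓ i).choose ((s + ej j) i) = (ℓ' i).choose (s i) := by
    intro i hi
    have hij : i ≠ j := (Finset.mem_erase.1 hi).1
    simp [ej, hij, hℓ', Function.update_of_ne hij]
  rw [Finset.prod_congr rfl h2]
  have h1 : (s + ej j) j = s j + 1 := by simp [ej]
  rw [h1]
  have h3 : (s j + 1) * (ℓ j).choose (s j + 1) = ℓ j * (ℓ' j).choose (s j) := by
    have h5 := Nat.add_one_mul_choose_eq (ℓ j - 1) (s j)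
    have h6 : ℓ j - 1 + 1 = ℓ j := by omega
    rw [h6] at h5
    rw [hℓ', Function.update_self, Nat.mul_comm]
    exact h5.symm
  rw [← Nat.mul_assoc, ← Nat.mul_assoc, h3]

lemma sum_update_sub_one {c : ℕ} (ℓ : Fin c → ℕ) (j : Fin c) (hj1 : 1 ≤ ℓ j) :
    ∑ i, (Function.update ℓ j (ℓ j - 1)) i = (∑ i, ℓ i) - 1 := by
  rw [Finset.sum_update_of_mem (Finset.mem_univ j)]
  have h1 : ∑ i ∈ Finset.univ.erase j, ℓ i + ℓ j = ∑ i, ℓ i := by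
    rw [Nat.add_comm, Finset.add_sum_erase Finset.univ ℓ (Finset.mem_univ j)]
  have h4 : ∑ i ∈ Finset.univ \ {j}, ℓ i = ∑ i ∈ Finset.univ.erase j, ℓ i := by
    congr 1
    ext x; simp [Finset.mem_erase, and_comm]
  omega

lemma C3nat {c : ℕ} (ℓ : Fin c → ℕ) (j : Fin c) (m : ℕ) :
    ∑ s ∈ Sm c (m+2), s j * (s j - 1) * ∏ i, (ℓ i).choose (s i) =
      ℓ j * (ℓ j - 1) * ((∑ i, ℓ i) - 2).choose m := by
  by_cases hj : ℓ j = 0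
  · rw [hj]
    simp only [Nat.zero_mul]
    refine Finset.sum_eq_zero fun s _ => ?_
    rcases Nat.eq_zero_or_pos (s j) with h | h
    · simp [h]
    · rw [Finset.prod_eq_zero (Finset.mem_univ j) (by rw [hj]; exact Nat.choose_eq_zero_of_lt h),
        Nat.mul_zero]
  · have hj1 : 1 ≤ ℓ j := Nat.one_le_iff_ne_zero.2 hj
    set ℓ' : Fin c → ℕ := Function.update ℓ j (ℓ j - 1) with hℓ'
    rw [sum_Sm_succ (m+1) j _ (fun t _ ht => by rw [ht]; ring)]
    have key : ∀ s ∈ Sm c (m+1),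
        (s + ej j) j * ((s + ej j) j - 1) * ∏ i, (ℓ i).choose ((s + ej j) i)
          = ℓ j * (s j * ∏ i, (ℓ' i).choose (s i)) := by
      intro s _
      have h1 : (s + ej j) j = s j + 1 := by simp [ej]
      rw [h1]
      have : s j + 1 - 1 = s j := by omega
      rw [this]
      calc (s j + 1) * s j * ∏ i, (ℓ i).choose ((s + ej j) i)
          = s j * ((s j + 1) * ∏ i, (ℓ i).choose ((s + ej j) i)) := by ring
        _ = s j * (ℓ j * ∏ i, (ℓ' i).choose (s i)) := by rw [keyC ℓ j hj1 s]
        _ = ℓ j * (s j * ∏ i, (ℓ' i).choose (s i)) := by ring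
    rw [Finset.sum_congr rfl key, ← Finset.mul_sum, C2nat ℓ' j m]
    rw [hℓ', Function.update_self, sum_update_sub_one ℓ j hj1]
    have : (∑ i, ℓ i) - 1 - 1 = (∑ i, ℓ i) - 2 := by omega
    rw [this, Nat.mul_assoc]

lemma le_of_mem_Sm {c m : ℕ} {s : Fin c → ℕ} (hs : s ∈ Sm c m) (j : Fin c) : s j ≤ m := by
  rw [mem_Sm] at hs
  exact hs ▸ Finset.single_le_sum (f := s) (fun i _ => Nat.zero_le _) (Finset.mem_univ j)

lemma M0 {c n m : ℕ} (ℓ : Fin c → ℕ) (hn : ∑ j, ℓ j = n) (hmn : m ≤ n) :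
    ∑ s ∈ Sm c m, Hf ℓ n m s = 1 := by
  unfold Hf
  rw [← Finset.sum_div, ← Nat.cast_sum, vander_univ, hn]
  exact div_self (by exact_mod_cast (Nat.choose_pos hmn).ne')

lemma M1 {c n m : ℕ} (ℓ : Fin c → ℕ) (hn : ∑ j, ℓ j = n) (hmn : m ≤ n) (hn1 : 1 ≤ n)
    (j : Fin c) :
    ∑ s ∈ Sm c m, Hf ℓ n m s * (s j : ℝ) = m * (ℓ j : ℝ) / n := by
  cases m with
  | zero =>
    have : Sm c 0 = {0} := by simp [Sm]
    simp [this]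
  | succ m' =>
    unfold Hf
    have step : ∀ s ∈ Sm c (m'+1),
        ((∏ i, (ℓ i).choose (s i) : ℕ) : ℝ) / (n.choose (m'+1) : ℝ) * (s j : ℝ)
        = ((s j * ∏ i, (ℓ i).choose (s i) : ℕ) : ℝ) / (n.choose (m'+1) : ℝ) := by
      intro s _
      push_cast
      ring
    rw [Finset.sum_congr rfl step, ← Finset.sum_div, ← Nat.cast_sum, C2nat ℓ j m', hn]
    have hC : (0:ℝ) < (n.choose (m'+1) : ℝ) := by exact_mod_cast Nat.choose_pos hmn
    have hnR : (0:ℝ) < (n:ℝ) := by exact_mod_cast hn1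
    rw [div_eq_div_iff hC.ne' hnR.ne']
    have hnat : n * ((n-1).choose m') = (n.choose (m'+1)) * (m'+1) := by
      have h := Nat.add_one_mul_choose_eq (n-1) m'
      have h6 : n - 1 + 1 = n := by omega
      rw [h6] at h
      exact h
    have : ((n * ((n-1).choose m') : ℕ) : ℝ) = (((n.choose (m'+1)) * (m'+1) : ℕ) : ℝ) := by
      exact_mod_cast congrArg (Nat.cast (R := ℝ)) hnat
    push_cast at this
    push_cast
    nlinarith [this]

lemma cast_mul_sub_one (a : ℕ) : (a:ℝ) * ((a:ℝ) - 1) = ((a * (a-1) : ℕ) : ℝ) := by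
  cases a with
  | zero => simp
  | succ b => push_cast [Nat.succ_sub_one]; ring

lemma M2 {c n m : ℕ} (ℓ : Fin c → ℕ) (hn : ∑ j, ℓ j = n) (hmn : m ≤ n) (j : Fin c) :
    ∑ s ∈ Sm c m, Hf ℓ n m s * ((s j : ℝ) * ((s j : ℝ) - 1)) =
      (m:ℝ) * ((m:ℝ) - 1) * (ℓ j : ℝ) * ((ℓ j : ℝ) - 1) / ((n:ℝ) * ((n:ℝ) - 1)) := by
  match m, hmn with
  | 0, _ => 
    have : Sm c 0 = {0} := by simp [Sm]
    simp [this]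
  | 1, _ =>
    rw [Finset.sum_eq_zero, Nat.cast_one]
    · ring
    · intro s hs
      have := le_of_mem_Sm hs j
      interval_cases h : s j <;> simp [h]
  | (m''+2), hmn =>
    have hn2 : 2 ≤ n := le_trans (by omega) hmn
    unfold Hf
    have step : ∀ s ∈ Sm c (m''+2),
        ((∏ i, (ℓ i).choose (s i) : ℕ) : ℝ) / (n.choose (m''+2) : ℝ) *
          ((s j : ℝ) * ((s j : ℝ) - 1))
        = ((s j * (s j - 1) * ∏ i, (ℓ i).choose (s i) : ℕ) : ℝ) / (n.choose (m''+2) : ℝ) := by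
      intro s _
      rw [cast_mul_sub_one]
      push_cast
      ring
    rw [Finset.sum_congr rfl step, ← Finset.sum_div, ← Nat.cast_sum, C3nat ℓ j m'', hn]
    have hC : (0:ℝ) < (n.choose (m''+2) : ℝ) := by exact_mod_cast Nat.choose_pos hmn
    have hnR : (0:ℝ) < (n:ℝ) := by exact_mod_cast (by omega : 0 < n)
    have hn1R : (0:ℝ) < (n:ℝ) - 1 := by
      have : ((1:ℕ):ℝ) < (n:ℝ) := by exact_mod_cast (by omega : 1 < n)
      simpa using this
    rw [div_eq_div_iff hC.ne' (by positivity : ((n:ℝ) * ((n:ℝ)-1)) ≠ 0)]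
    have hnat : n * (n - 1) * ((n-2).choose m'') = (m''+2) * (m''+1) * (n.choose (m''+2)) := by
      have h1 := Nat.add_one_mul_choose_eq (n-1) (m''+1)
      have h2 := Nat.add_one_mul_choose_eq (n-2) m''
      have e1 : n - 1 + 1 = n := by omega
      have e2 : n - 2 + 1 = n - 1 := by omega
      rw [e1] at h1
      rw [e2] at h2
      calc n * (n - 1) * ((n-2).choose m'')
          = n * ((n-1) * ((n-2).choose m'')) := by ring
        _ = n * ((n-1).choose (m''+1) * (m''+1)) := by rw [h2]
        _ = (n * ((n-1).choose (m''+1))) * (m''+1) := by ring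
        _ = (n.choose (m''+2) * (m''+2)) * (m''+1) := by rw [h1]
        _ = (m''+2) * (m''+1) * (n.choose (m''+2)) := by ring
    have hcast : ((n:ℕ):ℝ) * (((n-1:ℕ)):ℝ) * (((n-2).choose m'' : ℕ):ℝ)
        = ((m''+2 : ℕ):ℝ) * ((m''+1 : ℕ):ℝ) * ((n.choose (m''+2) : ℕ):ℝ) := by
      exact_mod_cast congrArg (Nat.cast (R := ℝ)) hnat
    have c1 : ((n-1:ℕ):ℝ) = (n:ℝ) - 1 := by
      push_cast [Nat.cast_sub (by omega : 1 ≤ n)]; ring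
    rw [c1] at hcast
    push_cast at hcast
    have cℓ : (ℓ j : ℝ) * ((ℓ j : ℝ) - 1) = (ℓ j : ℝ) * ((ℓ j - 1 : ℕ) : ℝ) := by
      cases' Nat.eq_zero_or_pos (ℓ j) with h h
      · simp [h]
      · rw [Nat.cast_sub h]; ring
    push_cast
    linear_combination ((ℓ j : ℝ) * ((ℓ j - 1 : ℕ) : ℝ)) * hcast
      - (((m'':ℝ)+2)*((m'':ℝ)+1)*((n.choose (m''+2) : ℕ):ℝ)) * cℓ

lemma M3 {c n m : ℕ} (ℓ : Fin c → ℕ) (hn : ∑ j, ℓ j = n) (hmn : m < n) (hn2 : 2 ≤ n)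
    (j : Fin c) (hj : 1 ≤ ℓ j) :
    ∑ s ∈ Sm c m, Hf ℓ n m s *
        ((((ℓ j:ℝ) - s j)/((n:ℝ) - m) - (ℓ j:ℝ)/n)^2 / ((ℓ j:ℝ)/n))
      = m * (1 - (ℓ j:ℝ)/n) / (((n:ℝ)-1) * ((n:ℝ)-m)) := by
  have hN : (0:ℝ) < n := by exact_mod_cast (by omega : 0 < n)
  have hL : (0:ℝ) < (ℓ j : ℝ) := by exact_mod_cast hj
  have hA : (0:ℝ) < (n:ℝ) - m := by
    have : (m:ℝ) < n := by exact_mod_cast hmn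
    linarith
  have hN1 : (0:ℝ) < (n:ℝ) - 1 := by
    have : (1:ℝ) < n := by exact_mod_cast (by omega : 1 < n)
    linarith
  set L := (ℓ j : ℝ)
  set N := (n : ℝ)
  set Mr := (m : ℝ)
  set A := N - Mr with hAdef
  set μ := L * Mr / N with hμ
  have hpt : ∀ s ∈ Sm c m,
      Hf ℓ n m s * (((L - s j)/A - L/N)^2 / (L/N))
        = (1/(A^2*(L/N))) * (Hf ℓ n m s * ((s j : ℝ) * ((s j : ℝ) - 1)))
          + ((1-2*μ)/(A^2*(L/N))) * (Hf ℓ n m s * (s j : ℝ))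
          + (μ^2/(A^2*(L/N))) * Hf ℓ n m s := by
    intro s _
    have : ((L - s j)/A - L/N)^2 / (L/N)
        = (1/(A^2*(L/N))) * ((s j : ℝ) * ((s j : ℝ) - 1))
          + ((1-2*μ)/(A^2*(L/N))) * (s j : ℝ) + (μ^2/(A^2*(L/N))) := by
      rw [hμ, hAdef]
      have hA' : N - Mr ≠ 0 := hA.ne'
      field_simp
      ring
    rw [this]
    ring
  rw [Finset.sum_congr rfl hpt]
  rw [Finset.sum_add_distrib, Finset.sum_add_distrib, ← Finset.mul_sum, ← Finset.mul_sum,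
    ← Finset.mul_sum, M0 ℓ hn hmn.le, M1 ℓ hn hmn.le (by omega) j, M2 ℓ hn hmn.le j]
  rw [hμ, hAdef]
  have hA' : N - Mr ≠ 0 := hA.ne'
  have hA'' : (n:ℝ) - (m:ℝ) ≠ 0 := hA.ne'
  have hN1' : (n:ℝ) - 1 ≠ 0 := hN1.ne'
  have hN1'' : -1 + (n:ℝ) ≠ 0 := by linarith
  field_simp
  ring

lemma phi_of_pos {a b : ℝ} (h : 0 < a) : phi a b = a * Real.log (a/b) := if_pos h

lemma phi_of_nonpos {a b : ℝ} (h : ¬ 0 < a) : phi a b = 0 := if_neg h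

lemma phi_zero (b : ℝ) : phi 0 b = 0 := if_neg (lt_irrefl 0)

/-- `a - b ≤ φ(a,b)` -/
lemma sub_le_phi {a b : ℝ} (ha : 0 ≤ a) (hb : 0 < b) : a - b ≤ phi a b := by
  rcases eq_or_lt_of_le ha with h | h
  · rw [← h, phi_zero]; linarith
  · rw [phi_of_pos h]
    have h1 : Real.log (b/a) ≤ b/a - 1 := Real.log_le_sub_one_of_pos (by positivity)
    have h2 : Real.log (a/b) = - Real.log (b/a) := by
      rw [← Real.log_inv]
      congr 1
      field_simp
    have h3 : 1 - b/a ≤ Real.log (a/b) := by rw [h2]; linarith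
    calc a - b = a * (1 - b/a) := by field_simp
      _ ≤ a * Real.log (a/b) := mul_le_mul_of_nonneg_left h3 h.le

/-- log-sum inequality -/
lemma phi_sum_le {ι : Type*} (s : Finset ι) (a b : ι → ℝ)
    (ha : ∀ i ∈ s, 0 ≤ a i) (hb : ∀ i ∈ s, 0 ≤ b i)
    (hab : ∀ i ∈ s, 0 < a i → 0 < b i) :
    phi (∑ i ∈ s, a i) (∑ i ∈ s, b i) ≤ ∑ i ∈ s, phi (a i) (b i) := by
  by_cases hA : 0 < ∑ i ∈ s, a i
  · obtain ⟨i0, hi0, hai0⟩ : ∃ i ∈ s, 0 < a i := by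
      by_contra h
      push_neg at h
      have : ∑ i ∈ s, a i ≤ 0 := Finset.sum_nonpos fun i hi => h i hi
      linarith
    have hB : 0 < ∑ i ∈ s, b i :=
      Finset.sum_pos' hb ⟨i0, hi0, hab i0 hi0 hai0⟩
    set A := ∑ i ∈ s, a i
    set B := ∑ i ∈ s, b i
    have key : ∀ i ∈ s, a i - b i * (A/B) ≤ phi (a i) (b i) - a i * Real.log (A/B) := by
      intro i hi
      rcases eq_or_lt_of_le (ha i hi) with h | h
      · rw [← h, phi_zero]
        simp only [zero_sub, zero_mul, sub_zero, neg_nonpos]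
        exact mul_nonneg (hb i hi) (le_of_lt (div_pos hA hB))
      · have hbi := hab i hi h
        have h1 : a i - b i * (A/B) ≤ phi (a i) (b i * (A/B)) :=
          sub_le_phi (ha i hi) (by positivity)
        rw [phi_of_pos h] at h1 ⊢
        have h2 : Real.log (a i / (b i * (A/B))) = Real.log (a i / b i) - Real.log (A/B) := by
          rw [Real.log_div h.ne' (by positivity), Real.log_mul hbi.ne' (by positivity),
            Real.log_div h.ne' hbi.ne', Real.log_div hA.ne' hB.ne']
          ring
        rw [h2, mul_sub] at h1
        linarith
    have hsum := Finset.sum_le_sum key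
    rw [Finset.sum_sub_distrib, Finset.sum_sub_distrib, ← Finset.sum_mul,
      ← Finset.sum_mul] at hsum
    have hAB : B * (A/B) = A := by field_simp
    rw [phi_of_pos hA]
    linarith
  · rw [phi_of_nonpos hA]
    have : ∀ i ∈ s, a i = 0 := by
      intro i hi
      by_contra h
      have h1 : 0 < a i := lt_of_le_of_ne (ha i hi) (Ne.symm h)
      exact hA (Finset.sum_pos' ha ⟨i, hi, h1⟩)
    refine Finset.sum_nonneg fun i hi => ?_
    rw [this i hi, phi_zero]

/-- KL between prob. vectors is at most chi-squared -/
lemma kl_le_chi {ι : Type*} (J : Finset ι) (q p : ι → ℝ)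
    (hq : ∀ j ∈ J, 0 ≤ q j) (hp : ∀ j ∈ J, 0 < p j)
    (hq1 : ∑ j ∈ J, q j = 1) (hp1 : ∑ j ∈ J, p j = 1) :
    ∑ j ∈ J, (if 0 < q j then q j * Real.log (q j / p j) else 0)
      ≤ ∑ j ∈ J, (q j - p j)^2 / p j := by
  have key : ∀ j ∈ J, (if 0 < q j then q j * Real.log (q j / p j) else 0)
      ≤ (q j - p j)^2 / p j + (q j - p j) := by
    intro j hj
    have hpj := hp j hj
    by_cases h : 0 < q j
    · rw [if_pos h]
      have h1 : Real.log (q j / p j) ≤ q j / p j - 1 :=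
        Real.log_le_sub_one_of_pos (by positivity)
      have h2 : q j * Real.log (q j / p j) ≤ q j * (q j / p j - 1) :=
        mul_le_mul_of_nonneg_left h1 h.le
      have h3 : q j * (q j / p j - 1) = (q j - p j)^2 / p j + (q j - p j) := by
        field_simp
        ring
      linarith
    · rw [if_neg h]
      have hqj : q j = 0 := le_antisymm (not_lt.1 h) (hq j hj)
      rw [hqj]
      have : (0 - p j)^2 / p j + (0 - p j) = 0 := by field_simp; ring
      linarith
  have := Finset.sum_le_sum key
  rw [Finset.sum_add_distrib, Finset.sum_sub_distrib, hq1, hp1] at this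
  linarith


lemma Hf_nonneg {c : ℕ} (ℓ : Fin c → ℕ) (n m : ℕ) (s : Fin c → ℕ) : 0 ≤ Hf ℓ n m s := by
  unfold Hf; positivity

lemma Bf_nonneg {c n : ℕ} (ℓ : Fin c → ℕ) (s : Fin c → ℕ) : 0 ≤ Bf ℓ n s := by
  unfold Bf; positivity

lemma Hf_pos_iff {c n m : ℕ} (ℓ : Fin c → ℕ) (hmn : m ≤ n) (s : Fin c → ℕ) :
    0 < Hf ℓ n m s ↔ ∀ i, s i ≤ ℓ i := by
  unfold Hf
  have hC : (0:ℝ) < (n.choose m : ℝ) := by exact_mod_cast Nat.choose_pos hmn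
  rw [div_pos_iff_of_pos_right hC]
  constructor
  · intro h i
    by_contra hi
    push_neg at hi
    rw [Finset.prod_eq_zero (Finset.mem_univ i) (Nat.choose_eq_zero_of_lt hi)] at h
    simp at h
  · intro h
    have : 0 < ∏ j, (ℓ j).choose (s j) :=
      Finset.prod_pos fun i _ => Nat.choose_pos (h i)
    exact_mod_cast this

lemma Bf_pos {c n : ℕ} (ℓ : Fin c → ℕ) (hn1 : 1 ≤ n) (s : Fin c → ℕ)
    (hs : ∀ i, s i ≤ ℓ i) : 0 < Bf ℓ n s := by
  unfold Bf
  have h1 : (0:ℝ) < (Nat.multinomial Finset.univ s : ℝ) := by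
    exact_mod_cast Nat.multinomial_pos _ _
  refine mul_pos h1 (Finset.prod_pos fun i _ => ?_)
  rcases Nat.eq_zero_or_pos (s i) with h | h
  · rw [h, pow_zero]; norm_num
  · have : 0 < ℓ i := lt_of_lt_of_le h (hs i)
    have hb : (0:ℝ) < (ℓ i : ℝ) / n := by
      have h1 : (0:ℝ) < (ℓ i : ℝ) := by exact_mod_cast this
      have h2 : (0:ℝ) < (n : ℝ) := by exact_mod_cast hn1
      positivity
    positivity

lemma Bf_cast {c m : ℕ} {s : Fin c → ℕ} (hs : s ∈ Sm c m) :
    (Nat.multinomial Finset.univ s : ℝ) =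
      (m.factorial : ℝ) / (∏ j, ((s j).factorial : ℝ)) := by
  have hspec := Nat.multinomial_spec Finset.univ s
  rw [mem_Sm.1 hs] at hspec
  have hprod : (0:ℝ) < ∏ j, ((s j).factorial : ℝ) :=
    Finset.prod_pos fun i _ => by exact_mod_cast (s i).factorial_pos
  rw [eq_div_iff hprod.ne', mul_comm]
  exact_mod_cast congrArg (Nat.cast (R := ℝ)) hspec

lemma add_ej_self {c : ℕ} (j : Fin c) (s : Fin c → ℕ) : (s + ej j) j = s j + 1 := by
  simp [ej]

lemma add_ej_ne {c : ℕ} {j i : Fin c} (h : i ≠ j) (s : Fin c → ℕ) : (s + ej j) i = s i := by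
  simp [ej, h]

/-- transition identity for the hypergeometric weights -/
lemma Astep {c n m : ℕ} (ℓ : Fin c → ℕ) (hmn : m < n) (j : Fin c) (s : Fin c → ℕ) :
    (((s + ej j) j : ℕ) : ℝ)/((m:ℝ)+1) * Hf ℓ n (m+1) (s + ej j)
      = Hf ℓ n m s * ((((ℓ j):ℝ) - (s j : ℝ))/((n:ℝ) - (m:ℝ))) := by
  by_cases hsl : s j ≤ ℓ j
  · unfold Hf
    rw [add_ej_self]
    have e1 : (m+1) * (n.choose (m+1)) = (n - m) * (n.choose m) := by
      have h := Nat.choose_succ_right_eq n m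
      calc (m+1) * (n.choose (m+1)) = n.choose (m+1) * (m+1) := Nat.mul_comm _ _
        _ = n.choose m * (n - m) := h
        _ = (n - m) * (n.choose m) := Nat.mul_comm _ _
    have e2 : (s j + 1) * ∏ i, (ℓ i).choose ((s + ej j) i)
        = (ℓ j - s j) * ∏ i, (ℓ i).choose (s i) := by
      rw [← Finset.mul_prod_erase Finset.univ _ (Finset.mem_univ j),
        ← Finset.mul_prod_erase Finset.univ (fun i => (ℓ i).choose (s i)) (Finset.mem_univ j)]
      have h2 : ∀ i ∈ Finset.univ.erase j,
          (ℓ i).choose ((s + ej j) i) = (ℓ i).choose (s i) := fun i hi => by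
        rw [add_ej_ne (Finset.mem_erase.1 hi).1]
      rw [Finset.prod_congr rfl h2, add_ej_self, ← Nat.mul_assoc, ← Nat.mul_assoc]
      congr 1
      rw [Nat.mul_comm (s j + 1), Nat.choose_succ_right_eq]
      exact Nat.mul_comm _ _
    have hCm : ((n.choose m : ℕ) : ℝ) ≠ 0 := by
      exact_mod_cast (Nat.choose_pos hmn.le).ne'
    have hCm1 : ((n.choose (m+1) : ℕ) : ℝ) ≠ 0 := by
      exact_mod_cast (Nat.choose_pos hmn).ne'
    have hm1 : ((m:ℝ)+1) ≠ 0 := by positivity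
    have hnm : ((n:ℝ) - (m:ℝ)) ≠ 0 := by
      have : (m:ℝ) < n := by exact_mod_cast hmn
      linarith
    have cast1 : ((ℓ j):ℝ) - (s j : ℝ) = ((ℓ j - s j : ℕ) : ℝ) := by
      rw [Nat.cast_sub hsl]
    have cast2 : (n:ℝ) - (m:ℝ) = ((n - m : ℕ) : ℝ) := by
      rw [Nat.cast_sub hmn.le]
    rw [cast1, cast2]
    rw [div_mul_div_comm, div_mul_div_comm]
    rw [div_eq_div_iff (by
        have h1 : (0:ℝ) < (m:ℝ)+1 := by positivity
        have h2 : (0:ℝ) < ((n.choose (m+1) : ℕ) : ℝ) := by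
          exact_mod_cast Nat.choose_pos hmn
        positivity)
      (by
        have h2 : (0:ℝ) < ((n.choose m : ℕ) : ℝ) := by exact_mod_cast Nat.choose_pos hmn.le
        have h3 : (0:ℝ) < ((n - m : ℕ) : ℝ) := by
          exact_mod_cast Nat.sub_pos_of_lt hmn
        positivity)]
    have goalnat : ((s j + 1) * (∏ i, (ℓ i).choose ((s + ej j) i))) * ((n.choose m) * (n - m))
        = ((∏ i, (ℓ i).choose (s i)) * (ℓ j - s j)) * (((m+1)) * (n.choose (m+1))) := by
      rw [e2, e1]
      ring
    have goalR := congrArg (Nat.cast (R := ℝ)) goalnat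
    push_cast at goalR
    push_cast
    linear_combination goalR
  · push_neg at hsl
    have z1 : (ℓ j).choose ((s + ej j) j) = 0 := by
      rw [add_ej_self]
      exact Nat.choose_eq_zero_of_lt (by omega)
    have z2 : (ℓ j).choose (s j) = 0 := Nat.choose_eq_zero_of_lt hsl
    unfold Hf
    rw [Finset.prod_eq_zero (Finset.mem_univ j) z1, Finset.prod_eq_zero (Finset.mem_univ j) z2]
    simp

/-- transition identity for the multinomial weights -/
lemma Bstep {c n m : ℕ} (ℓ : Fin c → ℕ) (hn1 : 1 ≤ n) (j : Fin c) {s : Fin c → ℕ}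
    (hs : s ∈ Sm c m) :
    (((s + ej j) j : ℕ) : ℝ)/((m:ℝ)+1) * Bf ℓ n (s + ej j)
      = Bf ℓ n s * ((ℓ j : ℝ)/(n:ℝ)) := by
  have hs' : s + ej j ∈ Sm c (m+1) := by
    rw [mem_Sm]
    simp only [Pi.add_apply]
    rw [Finset.sum_add_distrib, mem_Sm.1 hs]
    simp [ej]
  unfold Bf
  rw [Bf_cast hs, Bf_cast hs']
  have efact : ∏ i, (((s + ej j) i).factorial : ℝ)
      = ((s j + 1) : ℝ) * ∏ i, ((s i).factorial : ℝ) := by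
    rw [← Finset.mul_prod_erase Finset.univ _ (Finset.mem_univ j),
      ← Finset.mul_prod_erase Finset.univ (fun i => ((s i).factorial : ℝ)) (Finset.mem_univ j)]
    have h2 : ∀ i ∈ Finset.univ.erase j,
        (((s + ej j) i).factorial : ℝ) = ((s i).factorial : ℝ) := fun i hi => by
      rw [add_ej_ne (Finset.mem_erase.1 hi).1]
    rw [Finset.prod_congr rfl h2, add_ej_self]
    push_cast [Nat.factorial_succ]
    ring
  have epow : ∏ i, ((ℓ i : ℝ)/(n:ℝ)) ^ ((s + ej j) i)
      = ((ℓ j : ℝ)/(n:ℝ)) * ∏ i, ((ℓ i : ℝ)/(n:ℝ)) ^ (s i) := by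
    rw [← Finset.mul_prod_erase Finset.univ _ (Finset.mem_univ j),
      ← Finset.mul_prod_erase Finset.univ (fun i => ((ℓ i : ℝ)/(n:ℝ)) ^ (s i)) (Finset.mem_univ j)]
    have h2 : ∀ i ∈ Finset.univ.erase j,
        ((ℓ i : ℝ)/(n:ℝ)) ^ ((s + ej j) i) = ((ℓ i : ℝ)/(n:ℝ)) ^ (s i) := fun i hi => by
      rw [add_ej_ne (Finset.mem_erase.1 hi).1]
    rw [Finset.prod_congr rfl h2, add_ej_self, pow_succ]
    ring
  rw [efact, epow, add_ej_self]
  have hfacts : (0:ℝ) < ∏ i, ((s i).factorial : ℝ) :=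
    Finset.prod_pos fun i _ => by exact_mod_cast (s i).factorial_pos
  have hm1 : (0:ℝ) < (m:ℝ)+1 := by positivity
  have hsj1 : (0:ℝ) < (s j : ℝ)+1 := by positivity
  rw [Nat.factorial_succ]
  push_cast
  field_simp

lemma phi_mul {a b K p : ℝ} (ha : 0 < a) (hb : 0 < b) (hp : 0 < p) (hK : 0 ≤ K) :
    phi (a*K) (b*p) = K * phi a b + a * (if 0 < K then K * Real.log (K/p) else 0) := by
  rcases hK.eq_or_lt with h | h
  · rw [← h]
    simp [phi_zero, mul_zero, zero_mul, if_neg (lt_irrefl (0:ℝ))]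
  · rw [if_pos h, phi_of_pos (mul_pos ha h), phi_of_pos ha]
    have : Real.log (a*K/(b*p)) = Real.log (a/b) + Real.log (K/p) := by
      rw [show a*K/(b*p) = (a/b) * (K/p) from (div_mul_div_comm a b K p).symm,
        Real.log_mul (by positivity) (by positivity)]
    rw [this]
    ring

/-- The inner one-step bound at a fixed `s`. -/
lemma inner_step {c n m : ℕ} (ℓ : Fin c → ℕ) (hn : ∑ j, ℓ j = n) (hmn : m < n)
    {s : Fin c → ℕ} (hs : s ∈ Sm c m) :
    ∑ j, phi (Hf ℓ n m s * ((((ℓ j):ℝ) - (s j : ℝ))/((n:ℝ) - (m:ℝ))))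
        (Bf ℓ n s * ((ℓ j : ℝ)/(n:ℝ)))
      ≤ phi (Hf ℓ n m s) (Bf ℓ n s)
        + Hf ℓ n m s * ∑ j ∈ Finset.univ.filter (fun j => 0 < ℓ j),
            ((((ℓ j):ℝ) - (s j : ℝ))/((n:ℝ) - (m:ℝ)) - (ℓ j : ℝ)/(n:ℝ))^2 / ((ℓ j : ℝ)/(n:ℝ)) := by
  have hn1 : 1 ≤ n := by omega
  have hnR : (0:ℝ) < (n:ℝ) := by exact_mod_cast hn1
  have hA : (0:ℝ) < (n:ℝ) - (m:ℝ) := by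
    have : (m:ℝ) < (n:ℝ) := by exact_mod_cast hmn
    linarith
  set J : Finset (Fin c) := Finset.univ.filter (fun j => 0 < ℓ j) with hJ
  set K : Fin c → ℝ := fun j => (((ℓ j):ℝ) - (s j : ℝ))/((n:ℝ) - (m:ℝ)) with hK
  set p : Fin c → ℝ := fun j => (ℓ j : ℝ)/(n:ℝ) with hp
  have hp1 : ∑ j ∈ J, p j = 1 := by
    have h1 : ∑ j, p j = 1 := by
      rw [hp, ← Finset.sum_div]
      rw [show ∑ j, ((ℓ j : ℝ)) = ((∑ j, ℓ j : ℕ) : ℝ) by push_cast; rfl, hn]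
      exact div_self hnR.ne'
    rw [← h1]
    apply Finset.sum_subset (Finset.subset_univ J)
    intro x _ hx
    rw [hJ] at hx
    simp only [Finset.mem_filter, Finset.mem_univ, true_and, not_lt] at hx
    have : ℓ x = 0 := by omega
    simp [hp, this]
  by_cases hH : 0 < Hf ℓ n m s
  · have hsl : ∀ i, s i ≤ ℓ i := (Hf_pos_iff ℓ hmn.le s).1 hH
    have hB : 0 < Bf ℓ n s := Bf_pos ℓ hn1 s hsl
    have hKnn : ∀ j, 0 ≤ K j := fun j => by
      have : (s j : ℝ) ≤ (ℓ j : ℝ) := by exact_mod_cast hsl j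
      rw [hK]
      exact div_nonneg (by linarith) hA.le
    have hKoff : ∀ j, j ∉ J → K j = 0 := by
      intro j hj
      rw [hJ] at hj
      simp only [Finset.mem_filter, Finset.mem_univ, true_and, not_lt] at hj
      have h0 : ℓ j = 0 := by omega
      have h1 : s j = 0 := by have := hsl j; omega
      simp [hK, h0, h1]
    have hK1 : ∑ j ∈ J, K j = 1 := by
      have h1 : ∑ j, K j = 1 := by
        rw [hK, ← Finset.sum_div, Finset.sum_sub_distrib]
        rw [show ∑ j, ((ℓ j : ℝ)) = ((∑ j, ℓ j : ℕ) : ℝ) by push_cast; rfl, hn]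
        rw [show ∑ j, ((s j : ℝ)) = ((∑ j, s j : ℕ) : ℝ) by push_cast; rfl, mem_Sm.1 hs]
        exact div_self hA.ne'
      rw [← h1]
      exact Finset.sum_subset (Finset.subset_univ J) fun x _ hx => by
        rw [hKoff x hx]
    -- restrict the sum to J
    have hrestrict : ∑ j, phi (Hf ℓ n m s * K j) (Bf ℓ n s * p j)
        = ∑ j ∈ J, phi (Hf ℓ n m s * K j) (Bf ℓ n s * p j) := by
      symm
      apply Finset.sum_subset (Finset.subset_univ J)
      intro x _ hx
      rw [hKoff x hx, mul_zero, phi_zero]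
    rw [hrestrict]
    have hsplit : ∀ j ∈ J, phi (Hf ℓ n m s * K j) (Bf ℓ n s * p j)
        = K j * phi (Hf ℓ n m s) (Bf ℓ n s)
          + Hf ℓ n m s * (if 0 < K j then K j * Real.log (K j / p j) else 0) := by
      intro j hj
      rw [hJ] at hj
      simp only [Finset.mem_filter, Finset.mem_univ, true_and] at hj
      have hpj : 0 < p j := by
        rw [hp]
        have : (0:ℝ) < (ℓ j : ℝ) := by exact_mod_cast hj
        positivity
      exact phi_mul hH hB hpj (hKnn j)
    rw [Finset.sum_congr rfl hsplit, Finset.sum_add_distrib, ← Finset.sum_mul,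
      ← Finset.mul_sum, hK1, one_mul]
    have hchi := kl_le_chi J K p (fun j _ => hKnn j)
      (fun j hj => by
        rw [hJ] at hj
        simp only [Finset.mem_filter, Finset.mem_univ, true_and] at hj
        rw [hp]
        have : (0:ℝ) < (ℓ j : ℝ) := by exact_mod_cast hj
        positivity) hK1 hp1
    have hre : ∑ j ∈ J, ((((ℓ j):ℝ) - (s j : ℝ))/((n:ℝ) - (m:ℝ)) - (ℓ j : ℝ)/(n:ℝ))^2
          / ((ℓ j : ℝ)/(n:ℝ)) = ∑ j ∈ J, (K j - p j)^2 / p j := rfl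
    rw [hre]
    have := mul_le_mul_of_nonneg_left hchi (Hf_nonneg ℓ n m s)
    linarith
  · have hH0 : Hf ℓ n m s = 0 := le_antisymm (not_lt.1 hH) (Hf_nonneg ℓ n m s)
    rw [hH0]
    simp [phi_zero]

lemma chain {c n m : ℕ} (ℓ : Fin c → ℕ) (hn : ∑ j, ℓ j = n) (hmn : m < n) :
    ∑ t ∈ Sm c (m+1), phi (Hf ℓ n (m+1) t) (Bf ℓ n t)
      ≤ (∑ s ∈ Sm c m, phi (Hf ℓ n m s) (Bf ℓ n s))
        + ∑ s ∈ Sm c m, Hf ℓ n m s *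
            ∑ j ∈ Finset.univ.filter (fun j => 0 < ℓ j),
              ((((ℓ j):ℝ) - (s j : ℝ))/((n:ℝ)-(m:ℝ)) - (ℓ j : ℝ)/(n:ℝ))^2
                / ((ℓ j : ℝ)/(n:ℝ)) := by
  have hn1 : 1 ≤ n := by omega
  have hm1 : (0:ℝ) < (m:ℝ)+1 := by positivity
  have step1 : ∀ t ∈ Sm c (m+1),
      phi (Hf ℓ n (m+1) t) (Bf ℓ n t)
        ≤ ∑ j, phi ((t j : ℝ)/((m:ℝ)+1) * Hf ℓ n (m+1) t)
            ((t j : ℝ)/((m:ℝ)+1) * Bf ℓ n t) := by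
    intro t ht
    have hsum : ∑ j, (t j : ℝ) = (m:ℝ)+1 := by
      rw [show ∑ j, ((t j : ℝ)) = ((∑ j, t j : ℕ) : ℝ) by push_cast; rfl, mem_Sm.1 ht]
      push_cast; ring
    have hH : Hf ℓ n (m+1) t = ∑ j, (t j : ℝ)/((m:ℝ)+1) * Hf ℓ n (m+1) t := by
      rw [← Finset.sum_mul, ← Finset.sum_div, hsum]
      field_simp
    have hB : Bf ℓ n t = ∑ j, (t j : ℝ)/((m:ℝ)+1) * Bf ℓ n t := by
      rw [← Finset.sum_mul, ← Finset.sum_div, hsum]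
      field_simp
    calc phi (Hf ℓ n (m+1) t) (Bf ℓ n t)
        = phi (∑ j, (t j : ℝ)/((m:ℝ)+1) * Hf ℓ n (m+1) t)
            (∑ j, (t j : ℝ)/((m:ℝ)+1) * Bf ℓ n t) := by rw [← hH, ← hB]
      _ ≤ _ := by
          refine phi_sum_le Finset.univ _ _ (fun j _ => ?_) (fun j _ => ?_) (fun j _ hj => ?_)
          · exact mul_nonneg (by positivity) (Hf_nonneg ℓ n (m+1) t)
          · exact mul_nonneg (by positivity) (Bf_nonneg ℓ t)
          · have htj : 0 < t j := by
              by_contra h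
              push_neg at h
              interval_cases h' : t j
              · simp at hj
            have hx : (0:ℝ) < (t j : ℝ)/((m:ℝ)+1) := by
              have : (0:ℝ) < (t j : ℝ) := by exact_mod_cast htj
              positivity
            have hHt : 0 < Hf ℓ n (m+1) t := by
              rcases (Hf_nonneg ℓ n (m+1) t).eq_or_lt with h | h
              · rw [← h, mul_zero] at hj
                exact absurd hj (lt_irrefl 0)
              · exact h
            have hsl := (Hf_pos_iff ℓ hmn t).1 hHt
            exact mul_pos hx (Bf_pos ℓ hn1 t hsl)
  calc ∑ t ∈ Sm c (m+1), phi (Hf ℓ n (m+1) t) (Bf ℓ n t)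
      ≤ ∑ t ∈ Sm c (m+1), ∑ j, phi ((t j : ℝ)/((m:ℝ)+1) * Hf ℓ n (m+1) t)
          ((t j : ℝ)/((m:ℝ)+1) * Bf ℓ n t) := Finset.sum_le_sum step1
    _ = ∑ j, ∑ t ∈ Sm c (m+1), phi ((t j : ℝ)/((m:ℝ)+1) * Hf ℓ n (m+1) t)
          ((t j : ℝ)/((m:ℝ)+1) * Bf ℓ n t) := Finset.sum_comm
    _ = ∑ j, ∑ s ∈ Sm c m, phi (Hf ℓ n m s * ((((ℓ j):ℝ) - (s j : ℝ))/((n:ℝ)-(m:ℝ))))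
          (Bf ℓ n s * ((ℓ j : ℝ)/(n:ℝ))) := by
        refine Finset.sum_congr rfl fun j _ => ?_
        rw [sum_Sm_succ m j _ (fun t _ ht => by rw [ht]; norm_num [phi_zero])]
        refine Finset.sum_congr rfl fun s hs => ?_
        rw [Astep ℓ hmn j s, Bstep ℓ hn1 j hs]
    _ = ∑ s ∈ Sm c m, ∑ j, phi (Hf ℓ n m s * ((((ℓ j):ℝ) - (s j : ℝ))/((n:ℝ)-(m:ℝ))))
          (Bf ℓ n s * ((ℓ j : ℝ)/(n:ℝ))) := Finset.sum_comm
    _ ≤ ∑ s ∈ Sm c m, (phi (Hf ℓ n m s) (Bf ℓ n s)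
          + Hf ℓ n m s * ∑ j ∈ Finset.univ.filter (fun j => 0 < ℓ j),
              ((((ℓ j):ℝ) - (s j : ℝ))/((n:ℝ)-(m:ℝ)) - (ℓ j : ℝ)/(n:ℝ))^2
                / ((ℓ j : ℝ)/(n:ℝ))) :=
        Finset.sum_le_sum fun s hs => inner_step ℓ hn hmn hs
    _ = _ := Finset.sum_add_distrib


/-- evaluation/bounding of the chi-square term -/
lemma chi_le {c n m k : ℕ} (ℓ : Fin c → ℕ) (hn : ∑ j, ℓ j = n) (hc : 2 ≤ c)
    (hmk : m < k) (hk : k ≤ n) :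
    ∑ s ∈ Sm c m, Hf ℓ n m s *
        ∑ j ∈ Finset.univ.filter (fun j => 0 < ℓ j),
          ((((ℓ j):ℝ) - (s j : ℝ))/((n:ℝ)-(m:ℝ)) - (ℓ j : ℝ)/(n:ℝ))^2
            / ((ℓ j : ℝ)/(n:ℝ))
      ≤ ((c:ℝ)-1) * m / (((n:ℝ)-1)*((n:ℝ)-(k:ℝ)+1)) := by
  have hn1 : 1 ≤ n := by omega
  set J : Finset (Fin c) := Finset.univ.filter (fun j => 0 < ℓ j) with hJ
  have hcard : (J.card : ℝ) ≤ (c : ℝ) := by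
    have : J.card ≤ c := by
      have := Finset.card_le_card (Finset.subset_univ J)
      simpa using this
    exact_mod_cast this
  have hJne : 1 ≤ J.card := by
    rcases Finset.eq_empty_or_nonempty J with h | h
    · exfalso
      have : ∀ j, ℓ j = 0 := by
        intro j
        by_contra hj
        have : j ∈ J := by
          rw [hJ]
          simp only [Finset.mem_filter, Finset.mem_univ, true_and]
          omega
        rw [h] at this
        simp at this
      rw [Finset.sum_congr rfl (fun j _ => this j)] at hn
      simp at hn
      omega
    · exact Finset.card_pos.2 h
  rcases Nat.eq_zero_or_pos m with hm0 | hm1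
  · subst hm0
    have hSm0 : Sm c 0 = {0} := by simp [Sm]
    rw [hSm0, Finset.sum_singleton]
    have hz : ∀ j ∈ J, (((ℓ j):ℝ) - ((0:Fin c → ℕ) j : ℝ))/((n:ℝ)-((0:ℕ):ℝ))
        - (ℓ j : ℝ)/(n:ℝ) = 0 := by
      intro j _
      simp
    have : ∑ j ∈ J, ((((ℓ j):ℝ) - ((0:Fin c → ℕ) j : ℝ))/((n:ℝ)-((0:ℕ):ℝ))
        - (ℓ j : ℝ)/(n:ℝ))^2 / ((ℓ j : ℝ)/(n:ℝ)) = 0 := by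
      refine Finset.sum_eq_zero fun j hj => ?_
      rw [hz j hj]
      simp
    rw [this, mul_zero]
    simp
  · have hn2 : 2 ≤ n := by omega
    have hmn : m < n := by omega
    -- swap sums and apply M3
    simp only [Finset.mul_sum]
    rw [Finset.sum_comm]
    have hM3 : ∀ j ∈ J, ∑ s ∈ Sm c m, Hf ℓ n m s *
        (((((ℓ j):ℝ) - (s j : ℝ))/((n:ℝ)-(m:ℝ)) - (ℓ j : ℝ)/(n:ℝ))^2 / ((ℓ j : ℝ)/(n:ℝ)))
        = m * (1 - (ℓ j:ℝ)/n) / (((n:ℝ)-1) * ((n:ℝ)-m)) := by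
      intro j hj
      rw [hJ] at hj
      simp only [Finset.mem_filter, Finset.mem_univ, true_and] at hj
      exact M3 ℓ hn hmn hn2 j hj
    rw [Finset.sum_congr rfl hM3]
    have hsum1 : ∑ j ∈ J, (ℓ j : ℝ)/(n:ℝ) = 1 := by
      have h1 : ∑ j, (ℓ j : ℝ)/(n:ℝ) = 1 := by
        rw [← Finset.sum_div]
        rw [show ∑ j, ((ℓ j : ℝ)) = ((∑ j, ℓ j : ℕ) : ℝ) by push_cast; rfl, hn]
        exact div_self (by exact_mod_cast hn1 : ((0:ℝ) < (n:ℝ))).ne'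
      rw [← h1]
      apply Finset.sum_subset (Finset.subset_univ J)
      intro x _ hx
      rw [hJ] at hx
      simp only [Finset.mem_filter, Finset.mem_univ, true_and, not_lt] at hx
      have : ℓ x = 0 := by omega
      simp [this]
    have heval : ∑ j ∈ J, (m:ℝ) * (1 - (ℓ j:ℝ)/n) / (((n:ℝ)-1) * ((n:ℝ)-m))
        = (m:ℝ) * ((J.card : ℝ) - 1) / (((n:ℝ)-1) * ((n:ℝ)-m)) := by
      have hpt : ∀ j ∈ J, (m:ℝ) * (1 - (ℓ j:ℝ)/n) / (((n:ℝ)-1) * ((n:ℝ)-m))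
          = ((m:ℝ) / (((n:ℝ)-1) * ((n:ℝ)-m))) * (1 - (ℓ j:ℝ)/n) := by
        intro j _
        ring
      rw [Finset.sum_congr rfl hpt, ← Finset.mul_sum, Finset.sum_sub_distrib,
        Finset.sum_const, hsum1]
      simp only [nsmul_eq_mul, mul_one]
      ring
    rw [heval]
    have hk2 : 2 ≤ k := by omega
    have hnk1 : (0:ℝ) < (n:ℝ)-(k:ℝ)+1 := by
      have : (k:ℝ) ≤ (n:ℝ) := by exact_mod_cast hk
      linarith
    have hn1R : (0:ℝ) < (n:ℝ)-1 := by
      have : (1:ℝ) < (n:ℝ) := by exact_mod_cast (by omega : 1 < n)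
      linarith
    have hnmR : (0:ℝ) < (n:ℝ)-(m:ℝ) := by
      have : (m:ℝ) < (n:ℝ) := by exact_mod_cast hmn
      linarith
    have hDD' : ((n:ℝ)-1)*((n:ℝ)-(k:ℝ)+1) ≤ ((n:ℝ)-1)*((n:ℝ)-(m:ℝ)) := by
      have h1 : (m:ℝ) + 1 ≤ (k:ℝ) := by exact_mod_cast hmk
      nlinarith
    have hnum : (m:ℝ) * ((J.card : ℝ) - 1) ≤ ((c:ℝ)-1) * (m:ℝ) := by
      have h1 : ((J.card : ℝ)) - 1 ≤ (c:ℝ) - 1 := by linarith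
      have h2 : (0:ℝ) ≤ (m:ℝ) := by positivity
      nlinarith
    exact div_le_div₀ (by
        have : (1:ℝ) ≤ (c:ℝ) := by exact_mod_cast (by omega : 1 ≤ c)
        have h2 : (0:ℝ) ≤ (m:ℝ) := by positivity
        nlinarith)
      hnum (by positivity) hDD'

lemma multinomial_zero' {c : ℕ} : Nat.multinomial Finset.univ (0 : Fin c → ℕ) = 1 := by
  have := Nat.multinomial_spec Finset.univ (0 : Fin c → ℕ)
  simpa using this

lemma D0 {c n : ℕ} (ℓ : Fin c → ℕ) :
    ∑ s ∈ Sm c 0, phi (Hf ℓ n 0 s) (Bf ℓ n s) = 0 := by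
  have hSm0 : Sm c 0 = {0} := by simp [Sm]
  rw [hSm0, Finset.sum_singleton]
  have h1 : Hf ℓ n 0 (0 : Fin c → ℕ) = 1 := by
    unfold Hf
    simp
  have h2 : Bf ℓ n (0 : Fin c → ℕ) = 1 := by
    unfold Bf
    rw [multinomial_zero']
    simp
  rw [h1, h2]
  simp [phi]

lemma Dm_le_sum {c n k : ℕ} (ℓ : Fin c → ℕ) (hn : ∑ j, ℓ j = n) (hc : 2 ≤ c)
    (hk : k ≤ n) :
    ∀ m, m ≤ k → ∑ s ∈ Sm c m, phi (Hf ℓ n m s) (Bf ℓ n s)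
      ≤ ∑ i ∈ Finset.range m, ((c:ℝ)-1) * i / (((n:ℝ)-1)*((n:ℝ)-(k:ℝ)+1)) := by
  intro m
  induction m with
  | zero =>
    intro _
    rw [D0 ℓ]
    simp
  | succ m ih =>
    intro hmk
    have hmn : m < n := by omega
    have h1 := chain ℓ hn hmn
    have h2 := chi_le ℓ hn hc (by omega : m < k) hk
    have h3 := ih (by omega)
    rw [Finset.sum_range_succ]
    linarith


noncomputable instance stamFintype (c k : ℕ) :
    Fintype {s : Fin c → ℕ // ∑ j, s j = k} :=
  Fintype.ofInjective
    (fun s (j : Fin c) => (⟨s.1 j, by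
      have h1 := Finset.single_le_sum (f := s.1) (fun i _ => Nat.zero_le _) (Finset.mem_univ j)
      have h2 := s.2
      omega⟩ : Fin (k+1)))
    (fun a b h => Subtype.ext (funext fun j => congrArg Fin.val (congrFun h j)))

lemma relEnt_eq {c n k : ℕ} (ℓ : Fin c → ℕ) :
    relEntPMF (hyperPMF c n k ℓ) (multinomPMF c n k ℓ)
      = ∑ s ∈ Sm c k, phi (Hf ℓ n k s) (Bf ℓ n s) := by
  unfold relEntPMF
  rw [tsum_fintype]
  rw [Finset.sum_subtype (Sm c k) (fun s => mem_Sm) (fun s => phi (Hf ℓ n k s) (Bf ℓ n s))]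
  refine Finset.sum_congr rfl fun x _ => ?_
  simp only [phi, hyperPMF, multinomPMF, Hf, Bf]
  split_ifs <;> rfl

lemma gauss_sum (k : ℕ) : ∑ i ∈ Finset.range k, (i:ℝ) = (k:ℝ)*((k:ℝ)-1)/2 := by
  cases k with
  | zero => simp
  | succ k' =>
    have h := Finset.sum_range_id_mul_two (k'+1)
    have : ((∑ i ∈ Finset.range (k'+1), i) * 2 : ℕ) = ((k'+1) * k' : ℕ) := by
      rw [h]; simp
    have hR := congrArg (Nat.cast (R := ℝ)) this
    push_cast at hR
    have : (∑ i ∈ Finset.range (k'+1), (i:ℝ)) * 2 = ((k':ℝ)+1) * k' := by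
      rw [← hR]
    push_cast
    linarith


end StamAux

open StamAux

/-- **Stam's relative entropy bound between sampling without and with replacement.**
For an urn of `n` balls of `c ≥ 2` colours with composition `ℓ` and any `k ≤ n`,
`D(H(ℓ,n,k;·) ‖ B(ℓ,n,k;·)) ≤ (c−1)k(k−1)/(2(n−1)(n−k+1))`. -/
theorem stam_sampling_relEntropy {c n k : ℕ} (hc : 2 ≤ c) (hk : k ≤ n)
    (ℓ : Fin c → ℕ) (hℓ : ∑ j, ℓ j = n) :
    relEntPMF (hyperPMF c n k ℓ) (multinomPMF c n k ℓ) ≤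
      (((c : ℝ) - 1) * k * (k - 1)) / (2 * ((n : ℝ) - 1) * ((n : ℝ) - k + 1)) := by
  rw [relEnt_eq ℓ]
  have h1 := Dm_le_sum ℓ hℓ hc hk k le_rfl
  have h2 : ∑ i ∈ Finset.range k, ((c:ℝ)-1) * i / (((n:ℝ)-1)*((n:ℝ)-(k:ℝ)+1))
      = (((c : ℝ) - 1) * k * ((k:ℝ) - 1)) / (2 * ((n : ℝ) - 1) * ((n : ℝ) - k + 1)) := by
    have hpt : ∀ i ∈ Finset.range k, ((c:ℝ)-1) * i / (((n:ℝ)-1)*((n:ℝ)-(k:ℝ)+1))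
        = (((c:ℝ)-1) / (((n:ℝ)-1)*((n:ℝ)-(k:ℝ)+1))) * (i:ℝ) := by
      intro i _
      ring
    rw [Finset.sum_congr rfl hpt, ← Finset.mul_sum, gauss_sum k]
    rw [div_mul_div_comm]
    rw [show (((n:ℝ)-1)*((n:ℝ)-(k:ℝ)+1))*2 = 2*((n:ℝ)-1)*((n:ℝ)-(k:ℝ)+1) by ring]
    rw [show ((c:ℝ)-1)*((k:ℝ)*((k:ℝ)-1)) = ((c:ℝ)-1)*(k:ℝ)*((k:ℝ)-1) by ring]
  rw [← h2]
  exact h1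
end

section
/- Let X_1^n be an exchangeable random vector with values in S = {0,1}. Then there exists a probability measure μ_n on ℳ(S) (the law of the empirical measure of X_1^n) such that, for every k < n, the distribution P_k of X_1^k satisfies D(P_k ‖ M_{k,μ_n}) ≤ 5 k^2 (log n) / (n − k). -/
open MeasureTheory
open scoped ENNReal

open Classical in
/-- The Kullback–Leibler divergence (relative entropy) `D(μ‖ν)` between two measures,
defined as `∫ log (dμ/dν) dμ` when `μ ≪ ν` and this integral makes sense, and `+∞` otherwise. -/
noncomputable def klDiv {α : Type*} [MeasurableSpace α] (μ ν : Measure α) : ℝ≥0∞ :=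
  if μ ≪ ν ∧ Integrable (llr μ ν) μ then ENNReal.ofReal (∫ x, llr μ ν x ∂μ) else ⊤

/-! ### Auxiliary combinatorial lemmas -/

open Finset

/-- number of `true`s in a boolean vector -/
def GKcnt {m : ℕ} (y : Fin m → Bool) : ℕ := (univ.filter fun i => y i = true).card

lemma GKcnt_le {m : ℕ} (y : Fin m → Bool) : GKcnt y ≤ m := by
  classical
  calc GKcnt y ≤ (univ : Finset (Fin m)).card := Finset.card_filter_le _ _
  _ = m := by simp

/-- functions with `j` trues ↔ `j`-subsets -/
def GKequiv {m j : ℕ} : {y : Fin m → Bool // GKcnt y = j} ≃ {s : Finset (Fin m) // s.card = j} where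
  toFun y := ⟨univ.filter fun i => y.1 i = true, y.2⟩
  invFun s := ⟨fun i => decide (i ∈ s.1), by
    have : (univ.filter fun i => decide (i ∈ s.1) = true) = s.1 := by
      ext i; simp
    simp [GKcnt, this, s.2]⟩
  left_inv y := by
    ext i
    by_cases h : y.1 i = true <;> simp [h]
  right_inv s := by
    ext i; simp

lemma GKcard_cnt (m j : ℕ) :
    ((univ : Finset (Fin m → Bool)).filter fun y => GKcnt y = j).card = m.choose j := by
  classical
  rw [← Fintype.card_subtype]
  rw [Fintype.card_congr (GKequiv (m := m) (j := j))]
  simp [Fintype.card_finset_len]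

lemma GKidentity {n k j s : ℕ} (hsk : s ≤ k) (hkn : k ≤ n) (hsj : s ≤ j) (hjn : j - s ≤ n - k) :
    (n-k).choose (j-s) * n.descFactorial k
      = n.choose j * (j.descFactorial s * (n-j).descFactorial (k-s)) := by
  have hjn' : j ≤ n := by omega
  have hks : k - s ≤ n - j := by omega
  have hcancel : n - k - (j - s) = n - j - (k - s) := by omega
  have hpos : 0 < (j-s).factorial * (n - k - (j-s)).factorial :=
    Nat.mul_pos (Nat.factorial_pos _) (Nat.factorial_pos _)
  apply Nat.eq_of_mul_eq_mul_right hpos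
  have e1 : (n-k).choose (j-s) * ((j-s).factorial * (n - k - (j - s)).factorial) = (n-k).factorial :=
    by rw [← mul_assoc]; exact Nat.choose_mul_factorial_mul_factorial hjn
  have e2 : (n-k).factorial * n.descFactorial k = n.factorial :=
    Nat.factorial_mul_descFactorial hkn
  have e3 : (j-s).factorial * j.descFactorial s = j.factorial :=
    Nat.factorial_mul_descFactorial hsj
  have e4 : (n - j - (k - s)).factorial * (n-j).descFactorial (k-s) = (n-j).factorial :=
    Nat.factorial_mul_descFactorial hks
  have e5 : n.choose j * j.factorial * (n-j).factorial = n.factorial :=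
    Nat.choose_mul_factorial_mul_factorial hjn'
  calc (n-k).choose (j-s) * n.descFactorial k * ((j-s).factorial * (n - k - (j-s)).factorial)
      = ((n-k).choose (j-s) * ((j-s).factorial * (n - k - (j-s)).factorial)) * n.descFactorial k := by ring
    _ = n.factorial := by rw [e1, e2]
    _ = n.choose j * ((j-s).factorial * j.descFactorial s) * ((n - j - (k - s)).factorial * (n-j).descFactorial (k-s)) := by
        rw [e3, e4]; exact e5.symm
    _ = n.choose j * (j.descFactorial s * (n-j).descFactorial (k-s)) * ((j-s).factorial * (n - k - (j-s)).factorial) := by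
        rw [hcancel]; ring

lemma GKineq {n k j s : ℕ} (hsk : s ≤ k) (hkn : k ≤ n) :
    (if s ≤ j then (n-k).choose (j-s) else 0) * n.descFactorial k
      ≤ n.choose j * (j ^ s * (n-j) ^ (k-s)) := by
  by_cases hsj : s ≤ j
  · rw [if_pos hsj]
    by_cases hjn : j - s ≤ n - k
    · rw [GKidentity hsk hkn hsj hjn]
      exact Nat.mul_le_mul_left _ (Nat.mul_le_mul (Nat.descFactorial_le_pow _ _) (Nat.descFactorial_le_pow _ _))
    · rw [Nat.choose_eq_zero_of_lt (by omega), zero_mul]; exact Nat.zero_le _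
  · rw [if_neg hsj, zero_mul]; exact Nat.zero_le _

section Iota
variable {n k : ℕ} (hkn : k ≤ n) (x : Fin k → Bool)

/-- extension of a length-`k` vector by a length-`(n-k)` tail -/
def GKiota (z : Fin (n - k) → Bool) : Fin n → Bool :=
  fun i => if h : (i : ℕ) < k then x ⟨i, h⟩ else z ⟨(i : ℕ) - k, by omega⟩

lemma GKiota_restr (z : Fin (n - k) → Bool) (i : Fin k) :
    GKiota hkn x z (Fin.castLE hkn i) = x i := by
  have h : ((Fin.castLE hkn i : Fin n) : ℕ) < k := i.isLt
  simp only [GKiota, dif_pos h]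
  exact congrArg x (Fin.ext rfl)

lemma GKiota_inj : Function.Injective (GKiota hkn x) := by
  intro z₁ z₂ h
  funext t
  have ht : k + (t : ℕ) < n := by omega
  have := congrFun h ⟨k + t, ht⟩
  simp only [GKiota, dif_neg (by omega : ¬ (k + (t:ℕ) < k))] at this
  simpa [Nat.add_sub_cancel_left] using this

lemma GKiota_surj (y : Fin n → Bool) (hy : ∀ i : Fin k, y (Fin.castLE hkn i) = x i) :
    GKiota hkn x (fun t => y ⟨k + t, by omega⟩) = y := by
  funext i
  by_cases h : (i : ℕ) < k
  · simp only [GKiota, dif_pos h]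
    have := hy ⟨i, h⟩
    simpa using this.symm ▸ congrArg y (Fin.ext rfl : (Fin.castLE hkn ⟨(i:ℕ), h⟩ : Fin n) = i)
  · simp only [GKiota, dif_neg h]
    congr 1
    exact Fin.ext (by simp; omega)

lemma GKcnt_iota (z : Fin (n - k) → Bool) :
    GKcnt (GKiota hkn x z) = GKcnt x + GKcnt z := by
  classical
  have cardeq : ∀ {m : ℕ} (w : Fin m → Bool), GKcnt w = ∑ i : Fin m, (if w i = true then 1 else 0) := by
    intro m w; rw [GKcnt, Finset.card_filter]
  set F : ℕ → ℕ := fun v => if h : v < k then (if x ⟨v, h⟩ then 1 else 0)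
    else if h2 : v - k < n - k then (if z ⟨v - k, h2⟩ then 1 else 0) else 0 with hF
  have hFval : ∀ i : Fin n, (if GKiota hkn x z i = true then 1 else 0) = F (i : ℕ) := by
    intro i
    by_cases h : (i : ℕ) < k
    · simp only [GKiota, hF, dif_pos h]
    · have h2 : (i : ℕ) - k < n - k := by omega
      simp only [GKiota, hF, dif_neg h, dif_pos h2]
  rw [cardeq, Finset.sum_congr rfl (fun i _ => hFval i), Fin.sum_univ_eq_sum_range F n]
  rw [Finset.range_eq_Ico, ← Finset.sum_Ico_consecutive _ (Nat.zero_le k) hkn]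
  set G : ℕ → ℕ := fun v => if h : v < k then (if x ⟨v, h⟩ then 1 else 0) else 0 with hG
  have h1 : ∑ v ∈ Finset.Ico 0 k, F v = GKcnt x := by
    calc ∑ v ∈ Finset.Ico 0 k, F v = ∑ v ∈ Finset.range k, G v := by
          rw [← Finset.range_eq_Ico]
          refine Finset.sum_congr rfl fun v hv => ?_
          rw [Finset.mem_range] at hv
          simp only [hF, hG, dif_pos hv]
      _ = ∑ i : Fin k, G (i : ℕ) := (Fin.sum_univ_eq_sum_range G k).symm
      _ = GKcnt x := by
          rw [cardeq]
          refine Finset.sum_congr rfl fun i _ => ?_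
          simp only [hG, dif_pos i.isLt, Fin.eta]
  set H : ℕ → ℕ := fun v => if h : v < n - k then (if z ⟨v, h⟩ then 1 else 0) else 0 with hH
  have h2 : ∑ v ∈ Finset.Ico k n, F v = GKcnt z := by
    rw [Finset.sum_Ico_eq_sum_range]
    calc ∑ v ∈ Finset.range (n - k), F (k + v) = ∑ v ∈ Finset.range (n - k), H v := by
          refine Finset.sum_congr rfl fun v hv => ?_
          rw [Finset.mem_range] at hv
          have hk : ¬ (k + v < k) := by omega
          have h2' : k + v - k < n - k := by omega
          simp only [hF, hH, dif_neg hk, dif_pos h2', dif_pos hv]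
          exact congrArg (fun b : Bool => if b then 1 else 0) (congrArg z (Fin.ext (by simp)))
      _ = ∑ i : Fin (n - k), H (i : ℕ) := (Fin.sum_univ_eq_sum_range H (n - k)).symm
      _ = GKcnt z := by
          rw [cardeq]
          refine Finset.sum_congr rfl fun i _ => ?_
          simp only [hH, dif_pos i.isLt, Fin.eta]
  rw [h1, h2]

lemma GKcard_ext (j : ℕ) :
    ((univ : Finset (Fin n → Bool)).filter
        fun y => (∀ i : Fin k, y (Fin.castLE hkn i) = x i) ∧ GKcnt y = j).card
      = if GKcnt x ≤ j then (n-k).choose (j - GKcnt x) else 0 := by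
  classical
  have himg : ((univ : Finset (Fin n → Bool)).filter
        fun y => (∀ i : Fin k, y (Fin.castLE hkn i) = x i) ∧ GKcnt y = j)
      = Finset.image (GKiota hkn x)
          ((univ : Finset (Fin (n-k) → Bool)).filter fun z => GKcnt x + GKcnt z = j) := by
    ext y
    simp only [Finset.mem_filter, Finset.mem_univ, true_and, Finset.mem_image]
    constructor
    · rintro ⟨hext, hcnt⟩
      refine ⟨fun t => y ⟨k + t, by omega⟩, ?_, GKiota_surj hkn x y hext⟩
      rw [← hcnt]
      conv_rhs => rw [← GKiota_surj hkn x y hext]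
      rw [GKcnt_iota]
    · rintro ⟨z, hz, rfl⟩
      exact ⟨fun i => GKiota_restr hkn x z i, by rw [GKcnt_iota]; exact hz⟩
  rw [himg, Finset.card_image_of_injective _ (GKiota_inj hkn x)]
  by_cases hsj : GKcnt x ≤ j
  · rw [if_pos hsj]
    have : ((univ : Finset (Fin (n-k) → Bool)).filter fun z => GKcnt x + GKcnt z = j)
        = ((univ : Finset (Fin (n-k) → Bool)).filter fun z => GKcnt z = j - GKcnt x) := by
      apply Finset.filter_congr; intro z _; constructor <;> (intro h; omega)
    rw [this]
    exact GKcard_cnt (n-k) (j - GKcnt x)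
  · rw [if_neg hsj]
    rw [Finset.card_eq_zero, Finset.filter_eq_empty_iff]
    intro z _
    omega
end Iota

/-! ### Exchangeability and measure helpers -/

lemma GKsubtypeCongr_pos {α} {p q : α → Prop} [DecidablePred p] [DecidablePred q]
    (e : { x // p x } ≃ { x // q x }) (f : { x // ¬p x } ≃ { x // ¬q x }) (a : α) (h : p a) :
    q (Equiv.subtypeCongr e f a) := by
  have : Equiv.subtypeCongr e f a = ↑(e ⟨a, h⟩) := by
    simp [Equiv.subtypeCongr, h]
  rw [this]; exact (e ⟨a, h⟩).2

lemma GKsubtypeCongr_neg {α} {p q : α → Prop} [DecidablePred p] [DecidablePred q]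
    (e : { x // p x } ≃ { x // q x }) (f : { x // ¬p x } ≃ { x // ¬q x }) (a : α) (h : ¬ p a) :
    ¬ q (Equiv.subtypeCongr e f a) := by
  have : Equiv.subtypeCongr e f a = ↑(f ⟨a, h⟩) := by
    simp [Equiv.subtypeCongr, h]
  rw [this]; exact (f ⟨a, h⟩).2

lemma GKexists_perm {n : ℕ} (y y' : Fin n → Bool) (h : GKcnt y = GKcnt y') :
    ∃ σ : Equiv.Perm (Fin n), y ∘ σ = y' := by
  classical
  have hc : Fintype.card {i : Fin n // y' i = true} = Fintype.card {i : Fin n // y i = true} := by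
    rw [Fintype.card_subtype, Fintype.card_subtype]
    exact h.symm
  have hc' : Fintype.card {i : Fin n // ¬ y' i = true} = Fintype.card {i : Fin n // ¬ y i = true} := by
    rw [Fintype.card_subtype_compl, Fintype.card_subtype_compl, hc]
  refine ⟨Equiv.subtypeCongr (Fintype.equivOfCardEq hc) (Fintype.equivOfCardEq hc'), ?_⟩
  funext i
  by_cases hp : y' i = true
  · have := GKsubtypeCongr_pos (Fintype.equivOfCardEq hc) (Fintype.equivOfCardEq hc') i hp
    simp only [Function.comp_apply, this, hp]
  · have := GKsubtypeCongr_neg (Fintype.equivOfCardEq hc) (Fintype.equivOfCardEq hc') i hp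
    simp only [Function.comp_apply, Bool.not_eq_true] at this hp ⊢
    rw [this, hp]

lemma GKmeasurable_of_countable {α β : Type*} [Countable α] [MeasurableSpace α]
    [MeasurableSingletonClass α] [MeasurableSpace β] (f : α → β) : Measurable f :=
  fun _ _ => (Set.to_countable _).measurableSet

lemma GKconst {n : ℕ} (P : Measure (Fin n → Bool))
    (hexch : ∀ σ : Equiv.Perm (Fin n), P.map (fun x => x ∘ σ) = P)
    (y y' : Fin n → Bool) (h : GKcnt y = GKcnt y') : P {y} = P {y'} := by
  obtain ⟨σ, hσ⟩ := GKexists_perm y y' h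
  have hmeas : Measurable (fun x : Fin n → Bool => x ∘ σ) := GKmeasurable_of_countable _
  have hpre : (fun x : Fin n → Bool => x ∘ σ) ⁻¹' {y'} = {y} := by
    ext w
    simp only [Set.mem_preimage, Set.mem_singleton_iff]
    constructor
    · intro hw
      funext i
      have := congrFun (hw.trans hσ.symm) (σ.symm i)
      simpa using this
    · rintro rfl; exact hσ
  refine Eq.symm ?_
  calc P {y'} = (P.map (fun x => x ∘ σ)) {y'} := by rw [hexch]
    _ = P ((fun x : Fin n → Bool => x ∘ σ) ⁻¹' {y'}) := Measure.map_apply hmeas (measurableSet_singleton _)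
    _ = P {y} := by rw [hpre]

lemma GKmeasure_eq_sum {α : Type*} [Fintype α] [MeasurableSpace α] [MeasurableSingletonClass α]
    (μ : Measure α) (A : Set α) [DecidablePred (· ∈ A)] : μ A = ∑ y ∈ A.toFinset, μ {y} := by
  have := sum_measure_preimage_singleton (μ := μ) A.toFinset
    (f := id) (fun y _ => measurableSet_singleton y)
  simpa using this.symm

lemma GKmeasure_ext {α : Type*} [Fintype α] [MeasurableSpace α] [MeasurableSingletonClass α]
    {μ ν : Measure α} (h : ∀ x, μ {x} = ν {x}) : μ = ν := by
  classical
  refine Measure.ext fun A _ => ?_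
  rw [GKmeasure_eq_sum μ A, GKmeasure_eq_sum ν A]
  exact Finset.sum_congr rfl fun x _ => h x

/-- the Bernoulli-type measure with success probability `j/n` -/
noncomputable def GKQ {n : ℕ} (hn : 0 < n) (j : ℕ) : ProbabilityMeasure Bool :=
  ⟨(((min j n : ℕ) : ℝ≥0∞)/(n:ℝ≥0∞)) • Measure.dirac true
    + ((((n - min j n : ℕ)) : ℝ≥0∞)/(n:ℝ≥0∞)) • Measure.dirac false, by
    constructor
    have hn0 : (n:ℝ≥0∞) ≠ 0 := by exact_mod_cast hn.ne'
    rw [Measure.add_apply, Measure.smul_apply, Measure.smul_apply]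
    simp only [measure_univ, smul_eq_mul, mul_one]
    rw [ENNReal.div_add_div_same, ← Nat.cast_add,
      show min j n + (n - min j n) = n by omega]
    exact ENNReal.div_self hn0 (ENNReal.natCast_ne_top n)⟩

lemma GKQ_apply_true {n : ℕ} (hn : 0 < n) {j : ℕ} (hj : j ≤ n) :
    (GKQ hn j : Measure Bool) {true} = (j : ℝ≥0∞)/(n:ℝ≥0∞) := by
  show ((((min j n : ℕ) : ℝ≥0∞)/(n:ℝ≥0∞)) • Measure.dirac true
    + ((((n - min j n : ℕ)) : ℝ≥0∞)/(n:ℝ≥0∞)) • Measure.dirac false) {true} = _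
  rw [Measure.add_apply, Measure.smul_apply, Measure.smul_apply]
  simp [Measure.dirac_apply, min_eq_left hj]

lemma GKQ_apply_false {n : ℕ} (hn : 0 < n) {j : ℕ} (hj : j ≤ n) :
    (GKQ hn j : Measure Bool) {false} = (((n - j : ℕ)) : ℝ≥0∞)/(n:ℝ≥0∞) := by
  show ((((min j n : ℕ) : ℝ≥0∞)/(n:ℝ≥0∞)) • Measure.dirac true
    + ((((n - min j n : ℕ)) : ℝ≥0∞)/(n:ℝ≥0∞)) • Measure.dirac false) {false} = _
  rw [Measure.add_apply, Measure.smul_apply, Measure.smul_apply]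
  simp [Measure.dirac_apply, min_eq_left hj]

/-- **Finite de Finetti theorem in relative entropy for a binary alphabet**
(Gavalakis–Kontoyiannis). If `P` is the (exchangeable) joint law of `X₁,…,Xₙ` with values
in `S = {0,1}`, then there is a probability measure `μₙ` on `ℳ(S)` such that, for every
`k < n`, the law `P_k` of `X₁,…,X_k` satisfies
`D(P_k ‖ M_{k,μₙ}) ≤ 5 k² log n / (n − k)`. -/
theorem finite_deFinetti_relEntropy_binary
    {n : ℕ} (P : Measure (Fin n → Bool)) [IsProbabilityMeasure P]
    (hexch : ∀ σ : Equiv.Perm (Fin n), P.map (fun x => x ∘ σ) = P) :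
    ∃ μn : Measure (ProbabilityMeasure Bool), IsProbabilityMeasure μn ∧
      ∀ (k : ℕ) (hkn : k < n) (M : Measure (Fin k → Bool)),
        (∀ A : Set (Fin k → Bool), MeasurableSet A →
            M A = ∫⁻ Q : ProbabilityMeasure Bool,
              Measure.pi (fun _ : Fin k => (Q : Measure Bool)) A ∂μn) →
        klDiv (P.map (fun x (i : Fin k) => x (Fin.castLE hkn.le i))) M ≤
          ENNReal.ofReal ((5 * k ^ 2 * Real.log n) / ((n : ℝ) - k)) := by
  classical
  rcases Nat.eq_zero_or_pos n with hn0 | hn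
  · subst hn0
    refine ⟨Measure.dirac ⟨Measure.dirac true, inferInstance⟩, Measure.dirac.isProbabilityMeasure, ?_⟩
    intro k hkn
    exact absurd hkn (Nat.not_lt_zero k)
  have hnR0 : (n:ℝ≥0∞) ≠ 0 := by exact_mod_cast hn.ne'
  have hnRt : (n:ℝ≥0∞) ≠ ⊤ := ENNReal.natCast_ne_top n
  set F : (Fin n → Bool) → ProbabilityMeasure Bool := fun y => GKQ hn (GKcnt y) with hF
  have hFmeas : Measurable F := GKmeasurable_of_countable F
  refine ⟨P.map F, Measure.isProbabilityMeasure_map hFmeas.aemeasurable, ?_⟩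
  intro k hkn M hM
  haveI hμnprob : IsProbabilityMeasure (P.map F) := Measure.isProbabilityMeasure_map hFmeas.aemeasurable
  set restr : (Fin n → Bool) → (Fin k → Bool) := fun x (i : Fin k) => x (Fin.castLE hkn.le i)
    with hrestr
  have hrmeas : Measurable restr := GKmeasurable_of_countable _
  set Pk : Measure (Fin k → Bool) := P.map restr with hPkdef
  haveI hPkprob : IsProbabilityMeasure Pk := Measure.isProbabilityMeasure_map hrmeas.aemeasurable
  -- M is a probability measure
  have hMuniv : M Set.univ = 1 := by
    rw [hM _ MeasurableSet.univ]
    have hpiu : ∀ Q : ProbabilityMeasure Bool,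
        Measure.pi (fun _ : Fin k => (Q : Measure Bool)) Set.univ = 1 := fun Q => measure_univ
    simp only [hpiu, lintegral_one]
    exact measure_univ
  haveI hMfin : IsFiniteMeasure M := ⟨by rw [hMuniv]; exact ENNReal.one_lt_top⟩
  have hMxt : ∀ x : Fin k → Bool, M {x} ≠ ⊤ := fun x => measure_ne_top M _
  -- key pointwise inequality
  have key : ∀ x : Fin k → Bool,
      Pk {x} * ((n.descFactorial k : ℕ) : ℝ≥0∞) ≤ (n:ℝ≥0∞)^k * M {x} := by
    intro x
    set s := GKcnt x with hs
    have hsk : s ≤ k := GKcnt_le x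
    -- the product weight
    have hw : ∀ y : Fin n → Bool,
        (∏ i : Fin k, (GKQ hn (GKcnt y) : Measure Bool) {x i})
          = (((GKcnt y : ℕ):ℝ≥0∞)/(n:ℝ≥0∞))^s * ((((n - GKcnt y : ℕ)):ℝ≥0∞)/(n:ℝ≥0∞))^(k-s) := by
      intro y
      rw [← Finset.prod_filter_mul_prod_filter_not Finset.univ (fun i => x i = true)]
      have h1 : (∏ i ∈ univ.filter (fun i => x i = true), (GKQ hn (GKcnt y) : Measure Bool) {x i})
          = (((GKcnt y : ℕ):ℝ≥0∞)/(n:ℝ≥0∞))^s := by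
        calc (∏ i ∈ univ.filter (fun i => x i = true), (GKQ hn (GKcnt y) : Measure Bool) {x i})
            = ∏ _i ∈ univ.filter (fun i => x i = true), (((GKcnt y : ℕ):ℝ≥0∞)/(n:ℝ≥0∞)) :=
              Finset.prod_congr rfl fun i hi => by
                rw [(Finset.mem_filter.mp hi).2]
                exact GKQ_apply_true hn (GKcnt_le y)
          _ = _ := by rw [Finset.prod_const]; try congr 1; try rw [hs, GKcnt]
      have h2 : (∏ i ∈ univ.filter (fun i => ¬ x i = true), (GKQ hn (GKcnt y) : Measure Bool) {x i})
          = ((((n - GKcnt y : ℕ)):ℝ≥0∞)/(n:ℝ≥0∞))^(k-s) := by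
        have hcard : (univ.filter (fun i => ¬ x i = true)).card = k - s := by
          have := Finset.card_filter_add_card_filter_not
            (s := (univ : Finset (Fin k))) (fun i => x i = true)
          simp only [Finset.card_univ, Fintype.card_fin] at this
          have hs' : (univ.filter (fun i => x i = true)).card = s := by rw [hs, GKcnt]
          omega
        calc (∏ i ∈ univ.filter (fun i => ¬ x i = true), (GKQ hn (GKcnt y) : Measure Bool) {x i})
            = ∏ _i ∈ univ.filter (fun i => ¬ x i = true), ((((n - GKcnt y : ℕ)):ℝ≥0∞)/(n:ℝ≥0∞)) :=
              Finset.prod_congr rfl fun i hi => by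
                have : x i = false := by
                  have := (Finset.mem_filter.mp hi).2
                  simp only [Bool.not_eq_true] at this
                  exact this
                rw [this]
                exact GKQ_apply_false hn (GKcnt_le y)
          _ = _ := by rw [Finset.prod_const, hcard]
      rw [h1, h2]
    -- singleton formula for Pk
    have hPkx : Pk {x} = ∑ y ∈ (univ.filter fun y : Fin n → Bool => restr y = x), P {y} := by
      rw [hPkdef, Measure.map_apply hrmeas (measurableSet_singleton x), GKmeasure_eq_sum]
      exact Finset.sum_congr (by ext y; simp) (fun _ _ => rfl)
    -- singleton formula for M
    have hMx : M {x} = ∑ y : Fin n → Bool,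
        ((((GKcnt y : ℕ):ℝ≥0∞)/(n:ℝ≥0∞))^s * ((((n - GKcnt y : ℕ)):ℝ≥0∞)/(n:ℝ≥0∞))^(k-s)) * P {y} := by
      rw [hM _ (measurableSet_singleton x)]
      have hpi : ∀ Q : ProbabilityMeasure Bool,
          Measure.pi (fun _ : Fin k => (Q : Measure Bool)) {x}
            = ∏ i : Fin k, (Q : Measure Bool) {x i} := by
        intro Q
        rw [← Set.univ_pi_singleton x, Measure.pi_pi]
      rw [lintegral_congr hpi]
      have hgmeas : Measurable fun Q : ProbabilityMeasure Bool =>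
          ∏ i : Fin k, (Q : Measure Bool) {x i} :=
        Finset.measurable_prod _ (fun i _ =>
          (Measure.measurable_coe (measurableSet_singleton _)).comp measurable_subtype_coe)
      rw [lintegral_map hgmeas hFmeas, lintegral_fintype]
      exact Finset.sum_congr rfl fun y _ => by rw [hF]; rw [hw y]
    rw [hPkx, hMx, Finset.sum_mul, Finset.mul_sum]
    have hsum2 : ∀ y : Fin n → Bool,
        (n:ℝ≥0∞)^k * (((((GKcnt y : ℕ):ℝ≥0∞)/(n:ℝ≥0∞))^s * ((((n - GKcnt y : ℕ)):ℝ≥0∞)/(n:ℝ≥0∞))^(k-s)) * P {y})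
          = (((GKcnt y)^s * (n - GKcnt y)^(k-s) : ℕ) : ℝ≥0∞) * P {y} := by
      intro y
      rw [← mul_assoc]
      congr 1
      have hk' : (n:ℝ≥0∞)^k = (n:ℝ≥0∞)^s * (n:ℝ≥0∞)^(k-s) := by
        rw [← pow_add]; congr 1; omega
      rw [hk', mul_mul_mul_comm, ← mul_pow, ← mul_pow,
        ENNReal.mul_div_cancel hnR0 hnRt, ENNReal.mul_div_cancel hnR0 hnRt,
        Nat.cast_mul, Nat.cast_pow, Nat.cast_pow]
    simp only [hsum2]
    have hmapsE : ∀ y ∈ (univ.filter fun y : Fin n → Bool => restr y = x),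
        GKcnt y ∈ Finset.range (n+1) := fun y _ =>
      Finset.mem_range.mpr (by have := GKcnt_le y; omega)
    have hmapsU : ∀ y ∈ (univ : Finset (Fin n → Bool)), GKcnt y ∈ Finset.range (n+1) := fun y _ =>
      Finset.mem_range.mpr (by have := GKcnt_le y; omega)
    rw [← Finset.sum_fiberwise_of_maps_to hmapsE
      (fun y => P {y} * ((n.descFactorial k : ℕ) : ℝ≥0∞)),
      ← Finset.sum_fiberwise_of_maps_to hmapsU
      (fun y => (((GKcnt y)^s * (n - GKcnt y)^(k-s) : ℕ) : ℝ≥0∞) * P {y})]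
    apply Finset.sum_le_sum
    intro j hj
    by_cases hne : ((univ : Finset (Fin n → Bool)).filter fun y => GKcnt y = j).Nonempty
    · obtain ⟨y₀, hy₀⟩ := hne
      have hy₀c : GKcnt y₀ = j := (Finset.mem_filter.mp hy₀).2
      have hsubE : ((univ.filter fun y : Fin n → Bool => restr y = x).filter fun y => GKcnt y = j)
          ⊆ ((univ : Finset (Fin n → Bool)).filter fun y => GKcnt y = j) :=
        Finset.filter_subset_filter _ (Finset.filter_subset _ _)
      have hconstF : ∀ y ∈ ((univ : Finset (Fin n → Bool)).filter fun y => GKcnt y = j),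
          P {y} = P {y₀} := fun y hy =>
        GKconst P hexch y y₀ (by rw [(Finset.mem_filter.mp hy).2, hy₀c])
      have hLHS : ∑ y ∈ ((univ.filter fun y : Fin n → Bool => restr y = x).filter fun y => GKcnt y = j),
          P {y} * ((n.descFactorial k : ℕ) : ℝ≥0∞)
          = (((univ.filter fun y : Fin n → Bool => restr y = x).filter fun y => GKcnt y = j).card : ℝ≥0∞)
              * (P {y₀} * ((n.descFactorial k : ℕ) : ℝ≥0∞)) := by
        rw [Finset.sum_congr rfl (fun y hy => by rw [hconstF y (hsubE hy)]), Finset.sum_const,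
          nsmul_eq_mul]
      have hRHS : ∑ y ∈ ((univ : Finset (Fin n → Bool)).filter fun y => GKcnt y = j),
          (((GKcnt y)^s * (n - GKcnt y)^(k-s) : ℕ) : ℝ≥0∞) * P {y}
          = ((n.choose j : ℕ) : ℝ≥0∞) * (((j^s * (n - j)^(k-s) : ℕ) : ℝ≥0∞) * P {y₀}) := by
        rw [Finset.sum_congr rfl (fun y hy => by
            rw [(Finset.mem_filter.mp hy).2, hconstF y hy]),
          Finset.sum_const, nsmul_eq_mul, GKcard_cnt]
      rw [hLHS, hRHS]
      have hcardE : ((univ.filter fun y : Fin n → Bool => restr y = x).filter fun y => GKcnt y = j).card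
          = if s ≤ j then (n-k).choose (j - s) else 0 := by
        rw [Finset.filter_filter]
        rw [show ((univ : Finset (Fin n → Bool)).filter fun y => restr y = x ∧ GKcnt y = j)
            = ((univ : Finset (Fin n → Bool)).filter
                fun y => (∀ i : Fin k, y (Fin.castLE hkn.le i) = x i) ∧ GKcnt y = j) from
          Finset.filter_congr fun y _ => by
            simp only [hrestr, funext_iff]]
        exact GKcard_ext hkn.le x j
      rw [hcardE]
      have hnat : (if s ≤ j then (n-k).choose (j-s) else 0) * n.descFactorial k
          ≤ n.choose j * (j ^ s * (n-j) ^ (k-s)) := GKineq hsk hkn.le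
      calc ((if s ≤ j then (n-k).choose (j-s) else 0 : ℕ) : ℝ≥0∞)
            * (P {y₀} * ((n.descFactorial k : ℕ) : ℝ≥0∞))
          = P {y₀} * (((if s ≤ j then (n-k).choose (j-s) else 0) * n.descFactorial k : ℕ) : ℝ≥0∞) := by
            rw [Nat.cast_mul]; ring
        _ ≤ P {y₀} * ((n.choose j * (j ^ s * (n-j) ^ (k-s)) : ℕ) : ℝ≥0∞) :=
            mul_le_mul_right (Nat.cast_le.mpr hnat) _
        _ = ((n.choose j : ℕ) : ℝ≥0∞) * (((j^s * (n - j)^(k-s) : ℕ) : ℝ≥0∞) * P {y₀}) := by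
            rw [Nat.cast_mul]; ring
    · rw [Finset.not_nonempty_iff_eq_empty] at hne
      have hE : ((univ.filter fun y : Fin n → Bool => restr y = x).filter fun y => GKcnt y = j) = ∅ := by
        apply Finset.subset_empty.mp
        rw [← hne]
        exact Finset.filter_subset_filter _ (Finset.filter_subset _ _)
      rw [hE, hne, Finset.sum_empty, Finset.sum_empty]
  -- derive klDiv bound
  have hDnat : n.descFactorial k ≠ 0 := by
    rw [Ne, Nat.descFactorial_eq_zero_iff_lt]
    omega
  have hD0 : ((n.descFactorial k : ℕ) : ℝ≥0∞) ≠ 0 := by exact_mod_cast hDnat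
  have hPk0 : ∀ x : Fin k → Bool, M {x} = 0 → Pk {x} = 0 := by
    intro x h
    have hkx := key x
    rw [h, mul_zero] at hkx
    rcases mul_eq_zero.mp (le_antisymm hkx zero_le) with h' | h'
    · exact h'
    · exact absurd h' hD0
  have hac : Pk ≪ M := by
    intro A hA
    rw [GKmeasure_eq_sum Pk A]
    apply Finset.sum_eq_zero
    intro y hy
    apply hPk0
    exact le_antisymm ((measure_mono (Set.singleton_subset_iff.mpr (Set.mem_toFinset.mp hy))).trans
      hA.le) zero_le
  set f : (Fin k → Bool) → ℝ≥0∞ := fun z => Pk {z} / M {z} with hfdef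
  have hfmeas : Measurable f := GKmeasurable_of_countable f
  have hwd : Pk = M.withDensity f := by
    apply GKmeasure_ext
    intro z
    rw [withDensity_apply _ (measurableSet_singleton z), lintegral_singleton]
    by_cases hz : M {z} = 0
    · rw [hz, mul_zero, hPk0 z hz]
    · exact (ENNReal.div_mul_cancel hz (hMxt z)).symm ▸ rfl
  have hfrn : f =ᵐ[M] Pk.rnDeriv M :=
    Measure.eq_rnDeriv hfmeas Measure.MutuallySingular.zero_left (by rw [zero_add]; exact hwd)
  have hfrn' : f =ᵐ[Pk] Pk.rnDeriv M := hac.ae_le hfrn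
  set Lc : ℝ := Real.log ((n:ℝ)^k / ((n.descFactorial k : ℕ) : ℝ)) with hLc
  have hnRpos : (0:ℝ) < n := by exact_mod_cast hn
  have hDpos : (0:ℝ) < ((n.descFactorial k : ℕ) : ℝ) := by
    exact_mod_cast Nat.pos_of_ne_zero hDnat
  have hbd : ∀ᵐ z ∂Pk, llr Pk M z ≤ Lc := by
    have hz0 : ∀ᵐ z ∂Pk, Pk {z} ≠ 0 := by
      have hnull : Pk {z | Pk {z} = 0} = 0 := by
        rw [GKmeasure_eq_sum]
        apply Finset.sum_eq_zero
        intro z hz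
        have := Set.mem_toFinset.mp hz
        exact this
      filter_upwards [measure_eq_zero_iff_ae_notMem.mp hnull] with z hz
      exact hz
    filter_upwards [hfrn', hz0] with z hz hz0
    have hMz : M {z} ≠ 0 := fun h => hz0 (hPk0 z h)
    rw [llr_def]
    simp only
    rw [← hz]
    have hfin : (Pk {z}).toReal * ((n.descFactorial k : ℕ) : ℝ) ≤ (n:ℝ)^k * (M {z}).toReal := by
      have h1 := ENNReal.toReal_mono
        (ENNReal.mul_ne_top (by simpa using (pow_ne_top hnRt)) (hMxt z)) (key z)
      rw [ENNReal.toReal_mul, ENNReal.toReal_mul, ENNReal.toReal_natCast,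
        ENNReal.toReal_pow, ENNReal.toReal_natCast] at h1
      exact h1
    have hPkpos : 0 < (Pk {z}).toReal := ENNReal.toReal_pos hz0 (measure_ne_top Pk _)
    have hMpos : 0 < (M {z}).toReal := ENNReal.toReal_pos hMz (hMxt z)
    have hfz : (f z).toReal = (Pk {z}).toReal / (M {z}).toReal := by
      rw [hfdef]; exact ENNReal.toReal_div _ _
    rw [hfz, hLc]
    apply Real.log_le_log (div_pos hPkpos hMpos)
    rw [div_le_div_iff₀ hMpos hDpos]
    linarith [hfin]
  have hint : Integrable (llr Pk M) Pk := Integrable.of_finite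
  have hintLc : ∫ z, llr Pk M z ∂Pk ≤ Lc := by
    calc ∫ z, llr Pk M z ∂Pk ≤ ∫ _z, Lc ∂Pk := integral_mono_ae hint (integrable_const Lc) hbd
      _ = Lc := by simp
  have hkR : (k:ℝ) < n := by exact_mod_cast hkn
  have hLcle : Lc ≤ (5 * k ^ 2 * Real.log n) / ((n : ℝ) - k) := by
    have step1 : Lc ≤ (k:ℝ)^2 / ((n:ℝ) - k) := by
      have hprod : ((n.descFactorial k : ℕ):ℝ) = ∏ i ∈ Finset.range k, ((n - i : ℕ):ℝ) := by
        rw [Nat.descFactorial_eq_prod_range]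
        exact Nat.cast_prod _ _
      have hpow : (n:ℝ)^k = ∏ _i ∈ Finset.range k, (n:ℝ) := by
        rw [Finset.prod_const, Finset.card_range]
      have hLc2 : Lc = ∑ i ∈ Finset.range k, Real.log ((n:ℝ) / ((n - i : ℕ):ℝ)) := by
        rw [hLc, hpow, hprod, ← Finset.prod_div_distrib]
        apply Real.log_prod
        intro i hi
        rw [Finset.mem_range] at hi
        have : (0:ℝ) < ((n - i : ℕ):ℝ) := by
          have : 0 < n - i := by omega
          exact_mod_cast this
        positivity
      rw [hLc2]
      have hbound : ∀ i ∈ Finset.range k,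
          Real.log ((n:ℝ) / ((n - i : ℕ):ℝ)) ≤ (k:ℝ) / ((n:ℝ) - k) := by
        intro i hi
        rw [Finset.mem_range] at hi
        have hiR : (i:ℝ) < k := by exact_mod_cast hi
        have hti : ((n - i : ℕ):ℝ) = (n:ℝ) - i := by
          rw [Nat.cast_sub (by omega)]
        have htpos : (0:ℝ) < (n:ℝ) - i := by linarith
        calc Real.log ((n:ℝ) / ((n - i : ℕ):ℝ)) ≤ (n:ℝ)/((n:ℝ)-i) - 1 := by
              rw [hti]
              exact Real.log_le_sub_one_of_pos (div_pos hnRpos htpos)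
          _ = (i:ℝ)/((n:ℝ)-i) := by field_simp; ring
          _ ≤ (k:ℝ)/((n:ℝ)-k) := by
              apply div_le_div₀ (by positivity) (le_of_lt hiR) (by linarith) (by linarith)
      calc ∑ i ∈ Finset.range k, Real.log ((n:ℝ) / ((n - i : ℕ):ℝ))
          ≤ (Finset.range k).card • ((k:ℝ) / ((n:ℝ) - k)) :=
            Finset.sum_le_card_nsmul _ _ _ hbound
        _ = (k:ℝ) * ((k:ℝ) / ((n:ℝ) - k)) := by
            rw [Finset.card_range, nsmul_eq_mul]
        _ = (k:ℝ)^2 / ((n:ℝ) - k) := by ring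
    have step2 : (k:ℝ)^2 / ((n:ℝ) - k) ≤ (5 * k ^ 2 * Real.log n) / ((n : ℝ) - k) := by
      have h5 : (5 * (k:ℝ)^2 * Real.log n) / ((n:ℝ) - k)
          = ((k:ℝ)^2/((n:ℝ)-k)) * (5 * Real.log n) := by ring
      rw [h5]
      rcases Nat.eq_zero_or_pos k with rfl | hk
      · simp
      · have hn2 : 2 ≤ n := by omega
        have hlog : (1:ℝ) ≤ 5 * Real.log n := by
          have h2 : Real.log 2 ≤ Real.log n :=
            Real.log_le_log (by norm_num) (by exact_mod_cast hn2)
          nlinarith [Real.log_two_gt_d9]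
        exact le_mul_of_one_le_right (div_nonneg (by positivity) (by linarith)) hlog
    exact step1.trans step2
  show klDiv Pk M ≤ _
  unfold klDiv
  rw [if_pos ⟨hac, hint⟩]
  exact ENNReal.ofReal_le_ofReal (hintLc.trans hLcle)
end
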